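/- arXiv:0807.2166 — 6 statements merged into one kernel-verified Lean document; each statement's English description precedes it below -/
import Mathlib

section
/- Let I ⊆ S be a monomial ideal, let v = gcd(u : u ∈ G(I)) be the greatest common divisor of the minimal monomial generators of I, and let I' = (I : v). Then I^c = (v)^c ⊕ v·(I')^c as K-vector spaces, where v·(I')^c denotes the K-span of the monomials v·w with w a monomial not in I'. -/
open MvPolynomial

noncomputable section

/-- The Stanley space `u·K[Z]` where `u` is the monomial with exponent vector `d`:
the `K`-vector subspace of `K[x_1,…,x_n]` spanned by all monomials `u·w` with
`supp(w) ⊆ Z`. -/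
def stanleySpace (K : Type*) [Field K] {n : ℕ} (d : Fin n →₀ ℕ) (Z : Finset (Fin n)) :
    Submodule K (MvPolynomial (Fin n) K) :=
  Submodule.span K
    {p | ∃ e : Fin n →₀ ℕ, (e.support : Set (Fin n)) ⊆ (Z : Set (Fin n)) ∧
      p = monomial (d + e) (1 : K)}

/-- `(d, Z)` indexed by `Fin r` is a Stanley decomposition of the `K`-subspace `V` of
`K[x_1,…,x_n]`: the Stanley spaces `u_i K[Z_i]` are independent (so their sum is direct)
and their sum is `V`. -/
def IsStanleyDecomp {K : Type*} [Field K] {n : ℕ}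
    (V : Submodule K (MvPolynomial (Fin n) K)) (r : ℕ)
    (d : Fin r → (Fin n →₀ ℕ)) (Z : Fin r → Finset (Fin n)) : Prop :=
  iSupIndep (fun i => stanleySpace K (d i) (Z i)) ∧
    (⨆ i, stanleySpace K (d i) (Z i)) = V

/-- The Stanley depth of a `K`-subspace `V` of `K[x_1,…,x_n]`:
the largest `k` such that `V` has a Stanley decomposition all of whose Stanley spaces
have dimension (number of variables) at least `k`. -/
def sdepth {K : Type*} [Field K] {n : ℕ} (V : Submodule K (MvPolynomial (Fin n) K)) : ℕ :=
  sSup {k | ∃ r d Z, IsStanleyDecomp V r d Z ∧ ∀ i, k ≤ (Z i).card}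

/-- `J^c`: the `K`-subspace of `K[x_1,…,x_n]` spanned by all monomials not contained in
the ideal `J`. -/
def monomialCompl {K : Type*} [Field K] {n : ℕ} (J : Ideal (MvPolynomial (Fin n) K)) :
    Submodule K (MvPolynomial (Fin n) K) :=
  Submodule.span K
    {p | ∃ d : Fin n →₀ ℕ, monomial d (1 : K) ∉ J ∧ p = monomial d (1 : K)}

/-- `sdepth(S/I)`, realized as the Stanley depth of `I^c`. -/
def sdepthQuot {K : Type*} [Field K] {n : ℕ} (I : Ideal (MvPolynomial (Fin n) K)) : ℕ :=
  sdepth (monomialCompl I)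

/-- `sdepth(I)` for an ideal `I`, viewed as a `K`-subspace. -/
def sdepthIdeal {K : Type*} [Field K] {n : ℕ} (I : Ideal (MvPolynomial (Fin n) K)) : ℕ :=
  sdepth (Submodule.restrictScalars K I)

/-- A monomial ideal: an ideal generated by the monomials it contains. -/
def IsMonomialIdeal {K : Type*} [Field K] {n : ℕ} (I : Ideal (MvPolynomial (Fin n) K)) :
    Prop :=
  I = Ideal.span {p | ∃ d : Fin n →₀ ℕ, monomial d (1 : K) ∈ I ∧ p = monomial d (1 : K)}

/-- `G(I)`: the exponent vectors of the minimal monomial generators of `I`, i.e. the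
monomials of `I` that are minimal with respect to divisibility. -/
def minGens {K : Type*} [Field K] {n : ℕ} (I : Ideal (MvPolynomial (Fin n) K)) :
    Set (Fin n →₀ ℕ) :=
  {d | monomial d (1 : K) ∈ I ∧ ∀ e : Fin n →₀ ℕ, e ≤ d → monomial e (1 : K) ∈ I → e = d}

/-- `g(I) = |G(I)|`, the number of minimal monomial generators of `I`. -/
def numGens {K : Type*} [Field K] {n : ℕ} (I : Ideal (MvPolynomial (Fin n) K)) : ℕ :=
  (minGens I).ncard

/-- The exponent vector of `v = gcd(u : u ∈ G(I))`. -/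
def gcdExp {K : Type*} [Field K] {n : ℕ} (I : Ideal (MvPolynomial (Fin n) K)) :
    Fin n →₀ ℕ :=
  Finsupp.ofSupportFinite (fun i => sInf {k | ∃ d ∈ minGens I, d i = k}) (Set.toFinite _)

/-- `I' = (I : v)`, where `v = gcd(u : u ∈ G(I))`. -/
def colonGcd {K : Type*} [Field K] {n : ℕ} (I : Ideal (MvPolynomial (Fin n) K)) :
    Ideal (MvPolynomial (Fin n) K) :=
  Submodule.colon I (Ideal.span {monomial (gcdExp I) (1 : K)})

/-- `c(I) = |supp(I')|`, the number of variables dividing at least one minimal monomial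
generator of `I' = (I : gcd(u : u ∈ G(I)))`. -/
def numSupp {K : Type*} [Field K] {n : ℕ} (I : Ideal (MvPolynomial (Fin n) K)) : ℕ :=
  {i : Fin n | ∃ d ∈ minGens (colonGcd I), d i ≠ 0}.ncard

/-- The irrelevant maximal ideal `(x_1,…,x_n)` of a polynomial ring. -/
def irrelevantIdeal (K : Type*) [Field K] (σ : Type*) : Ideal (MvPolynomial σ K) :=
  Ideal.span (Set.range MvPolynomial.X)

/-- The saturation `I^sat = ∪_{k ≥ 1} (I : (x_1,…,x_n)^k)` of an ideal of a polynomial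
ring with respect to the irrelevant maximal ideal. -/
def satIdeal {K : Type*} [Field K] {σ : Type*} (I : Ideal (MvPolynomial σ K)) :
    Ideal (MvPolynomial σ K) :=
  ⨆ k : ℕ, Submodule.colon I ((irrelevantIdeal K σ ^ k : Ideal (MvPolynomial σ K)) : Set (MvPolynomial σ K))

end

section Stmt1Aux
open MvPolynomial
variable {K : Type*} [Field K] {n : ℕ}

/-- Elements of the span of a set of monomials with exponents in `A` have support in `A`. -/
lemma aux_support_span_subset {A : Set (Fin n →₀ ℕ)} {S : Set (MvPolynomial (Fin n) K)}
    (hS : ∀ q ∈ S, (q.support : Set (Fin n →₀ ℕ)) ⊆ A)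
    {p : MvPolynomial (Fin n) K} (hp : p ∈ Submodule.span K S) :
    (p.support : Set (Fin n →₀ ℕ)) ⊆ A := by
  induction hp using Submodule.span_induction with
  | mem q hq => exact hS q hq
  | zero => simp
  | add x y hx hy ihx ihy =>
      intro d hd
      rcases Finset.mem_union.1 (MvPolynomial.support_add hd) with h | h
      · exact ihx h
      · exact ihy h
  | smul a x hx ih =>
      intro d hd
      exact ih (MvPolynomial.support_smul hd)

lemma aux_ideal_span_support {A : Set (Fin n →₀ ℕ)}
    {p : MvPolynomial (Fin n) K}
    (hp : p ∈ Ideal.span {q | ∃ e : Fin n →₀ ℕ, e ∈ A ∧ q = monomial e (1 : K)}) :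
    ∀ d ∈ p.support, ∃ e ∈ A, e ≤ d := by
  induction hp using Submodule.span_induction with
  | mem q hq =>
      obtain ⟨e, he, rfl⟩ := hq
      intro d hd
      classical
      rw [MvPolynomial.support_monomial, if_neg one_ne_zero, Finset.mem_singleton] at hd
      exact ⟨e, he, hd ▸ le_rfl⟩
  | zero => simp
  | add x y hx hy ihx ihy =>
      intro d hd
      rcases Finset.mem_union.1 (MvPolynomial.support_add hd) with h | h
      · exact ihx d h
      · exact ihy d h
  | smul a x hx ih =>
      intro d hd
      rw [smul_eq_mul] at hd
      obtain ⟨d1, hd1, d2, hd2, rfl⟩ := Finset.mem_add.1 (MvPolynomial.support_mul a x hd)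
      obtain ⟨e, he, hle⟩ := ih d2 hd2
      exact ⟨e, he, hle.trans le_add_self⟩

lemma aux_deg_lt {e d : Fin n →₀ ℕ} (hle : e ≤ d) (hne : e ≠ d) :
    (e.sum fun _ k => k) < d.sum fun _ k => k := by
  have hle' := Finsupp.le_def.1 hle
  have hsub : e.support ⊆ d.support := by
    intro i hi
    rw [Finsupp.mem_support_iff] at hi ⊢
    exact fun h => hi (Nat.le_antisymm (h ▸ hle' i) (Nat.zero_le _))
  rw [Finsupp.sum_of_support_subset e hsub _ (fun i _ => rfl), Finsupp.sum]
  apply Finset.sum_lt_sum (fun i _ => hle' i)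
  obtain ⟨i, hi⟩ : ∃ i, e i ≠ d i := by
    by_contra h
    push_neg at h
    exact hne (Finsupp.ext h)
  have hlt : e i < d i := lt_of_le_of_ne (hle' i) hi
  exact ⟨i, Finsupp.mem_support_iff.2 (fun h => by omega), hlt⟩

lemma aux_mem_span_v {g d : Fin n →₀ ℕ} :
    monomial d (1 : K) ∈ Ideal.span {monomial g (1 : K)} ↔ g ≤ d := by
  rw [Ideal.mem_span_singleton]
  constructor
  · rintro ⟨q, hq⟩
    by_contra hgd
    have h := congrArg (coeff d) hq
    rw [coeff_monomial, if_pos rfl, mul_comm, coeff_mul_monomial', if_neg hgd] at h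
    exact one_ne_zero h
  · intro h
    exact ⟨monomial (d - g) 1, by rw [monomial_mul, one_mul, add_tsub_cancel_of_le h]⟩

lemma aux_mono_mem {I : Ideal (MvPolynomial (Fin n) K)} (hI : IsMonomialIdeal I)
    {d : Fin n →₀ ℕ} (h : monomial d (1 : K) ∈ I) :
    ∃ e : Fin n →₀ ℕ, monomial e (1 : K) ∈ I ∧ e ≤ d := by
  classical
  rw [hI] at h
  have hd : d ∈ (monomial d (1 : K)).support := by
    rw [MvPolynomial.support_monomial, if_neg one_ne_zero]
    exact Finset.mem_singleton_self d
  obtain ⟨e, he, hle⟩ := aux_ideal_span_support (A := {e | monomial e (1 : K) ∈ I}) h d hd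
  exact ⟨e, he, hle⟩

lemma aux_exists_minGen {I : Ideal (MvPolynomial (Fin n) K)} (hI : IsMonomialIdeal I)
    {d : Fin n →₀ ℕ} (h : monomial d (1 : K) ∈ I) :
    ∃ m ∈ minGens I, m ≤ d := by
  classical
  suffices H : ∀ N : ℕ, ∀ d : Fin n →₀ ℕ, (d.sum fun _ k => k) ≤ N →
      monomial d (1 : K) ∈ I → ∃ m ∈ minGens I, m ≤ d from
    H _ d le_rfl h
  intro N
  induction N with
  | zero =>
      intro d hdeg hd
      by_cases hmin : ∀ e : Fin n →₀ ℕ, e ≤ d → monomial e (1 : K) ∈ I → e = d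
      · exact ⟨d, ⟨hd, hmin⟩, le_rfl⟩
      · push_neg at hmin
        obtain ⟨e, hle, he, hne⟩ := hmin
        exact absurd (lt_of_lt_of_le (aux_deg_lt hle hne) hdeg) (Nat.not_lt_zero _)
  | succ N ih =>
      intro d hdeg hd
      by_cases hmin : ∀ e : Fin n →₀ ℕ, e ≤ d → monomial e (1 : K) ∈ I → e = d
      · exact ⟨d, ⟨hd, hmin⟩, le_rfl⟩
      · push_neg at hmin
        obtain ⟨e, hle, he, hne⟩ := hmin
        have : (e.sum fun _ k => k) ≤ N :=
          Nat.lt_succ_iff.mp (lt_of_lt_of_le (aux_deg_lt hle hne) hdeg)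
        obtain ⟨m, hm, hmle⟩ := ih e this he
        exact ⟨m, hm, hmle.trans hle⟩

lemma aux_gcd_le {I : Ideal (MvPolynomial (Fin n) K)} {m : Fin n →₀ ℕ}
    (hm : m ∈ minGens I) : gcdExp I ≤ m := by
  intro i
  show (Finsupp.ofSupportFinite _ _) i ≤ m i
  rw [Finsupp.ofSupportFinite_coe]
  exact Nat.sInf_le ⟨m, hm, rfl⟩

lemma aux_gcd_le_of_mem {I : Ideal (MvPolynomial (Fin n) K)} (hI : IsMonomialIdeal I)
    {d : Fin n →₀ ℕ} (h : monomial d (1 : K) ∈ I) : gcdExp I ≤ d := by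
  obtain ⟨m, hm, hle⟩ := aux_exists_minGen hI h
  exact (aux_gcd_le hm).trans hle

lemma aux_mem_colon {I : Ideal (MvPolynomial (Fin n) K)} {e : Fin n →₀ ℕ} :
    monomial e (1 : K) ∈ colonGcd I ↔ monomial (gcdExp I + e) (1 : K) ∈ I := by
  rw [colonGcd, Submodule.mem_colon]
  constructor
  · intro h
    have := h (monomial (gcdExp I) 1) (Ideal.subset_span rfl)
    rwa [smul_eq_mul, monomial_mul, one_mul, add_comm] at this
  · intro h p hp
    rw [SetLike.mem_coe, Ideal.mem_span_singleton] at hp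
    obtain ⟨q, rfl⟩ := hp
    have heq : monomial e (1 : K) • (monomial (gcdExp I) (1 : K) * q) =
        q * monomial (gcdExp I + e) (1 : K) := by
      rw [smul_eq_mul, ← mul_assoc, mul_comm (monomial e (1:K)), monomial_mul, one_mul,
        mul_comm]
    rw [heq]
    exact Ideal.mul_mem_left I q h

end Stmt1Aux

/-- For a monomial ideal `I` with `v = gcd(u : u ∈ G(I))` and `I' = (I : v)`,
`I^c = (v)^c ⊕ v·(I')^c` as `K`-vector spaces. -/
theorem stmt1 {K : Type*} [Field K] {n : ℕ} (I : Ideal (MvPolynomial (Fin n) K))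
    (hI : IsMonomialIdeal I) :
    Disjoint
      (monomialCompl (Ideal.span {monomial (gcdExp I) (1 : K)}))
      (Submodule.span K {p | ∃ e : Fin n →₀ ℕ,
        monomial e (1 : K) ∉ colonGcd I ∧ p = monomial (gcdExp I + e) (1 : K)}) ∧
    monomialCompl (Ideal.span {monomial (gcdExp I) (1 : K)}) ⊔
      (Submodule.span K {p | ∃ e : Fin n →₀ ℕ,
        monomial e (1 : K) ∉ colonGcd I ∧ p = monomial (gcdExp I + e) (1 : K)}) =
      monomialCompl I := by
  classical
  set g := gcdExp I with hg
  have left_sub : ∀ q ∈ {p | ∃ d : Fin n →₀ ℕ,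
      monomial d (1 : K) ∉ Ideal.span {monomial g (1 : K)} ∧ p = monomial d (1 : K)},
      (q.support : Set (Fin n →₀ ℕ)) ⊆ {d | ¬ g ≤ d} := by
    rintro q ⟨d, hd, rfl⟩
    rw [MvPolynomial.support_monomial, if_neg one_ne_zero]
    intro x hx
    rw [Finset.coe_singleton, Set.mem_singleton_iff] at hx
    subst hx
    exact fun hgd => hd (aux_mem_span_v.2 hgd)
  have right_sub : ∀ q ∈ {p | ∃ e : Fin n →₀ ℕ,
      monomial e (1 : K) ∉ colonGcd I ∧ p = monomial (g + e) (1 : K)},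
      (q.support : Set (Fin n →₀ ℕ)) ⊆ {d | g ≤ d} := by
    rintro q ⟨e, he, rfl⟩
    rw [MvPolynomial.support_monomial, if_neg one_ne_zero]
    intro x hx
    rw [Finset.coe_singleton, Set.mem_singleton_iff] at hx
    subst hx
    exact Finsupp.le_def.2 fun i => by simp
  constructor
  · rw [Submodule.disjoint_def]
    intro p hpL hpR
    have h1 := aux_support_span_subset left_sub hpL
    have h2 := aux_support_span_subset right_sub hpR
    rw [← MvPolynomial.support_eq_empty]
    by_contra hne
    obtain ⟨d, hd⟩ := Finset.nonempty_of_ne_empty hne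
    exact h1 hd (h2 hd)
  · apply le_antisymm
    · apply sup_le
      · rw [monomialCompl, Submodule.span_le]
        rintro q ⟨d, hd, rfl⟩
        apply Submodule.subset_span
        refine ⟨d, fun hmem => hd (aux_mem_span_v.2 (aux_gcd_le_of_mem hI hmem)), rfl⟩
      · rw [Submodule.span_le]
        rintro q ⟨e, he, rfl⟩
        apply Submodule.subset_span
        exact ⟨g + e, fun hmem => he (aux_mem_colon.2 hmem), rfl⟩
    · rw [monomialCompl, Submodule.span_le]
      rintro q ⟨d, hd, rfl⟩
      by_cases hgd : g ≤ d
      · apply Submodule.mem_sup_right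
        apply Submodule.subset_span
        refine ⟨d - g, ?_, by rw [add_tsub_cancel_of_le hgd]⟩
        intro hmem
        rw [aux_mem_colon, add_tsub_cancel_of_le hgd] at hmem
        exact hd hmem
      · apply Submodule.mem_sup_left
        apply Submodule.subset_span
        exact ⟨d, fun hmem => hgd (aux_mem_span_v.1 hmem), rfl⟩
end

section
/- Let I ⊆ S be a monomial ideal which is not principal, let v = gcd(u : u ∈ G(I)) and I' = (I : v). Then sdepth(I) = sdepth(I'). -/
open MvPolynomial

section Stmt3Aux

variable {K : Type*} [Field K] {n : ℕ}

lemma exists_minGen_le (I : Ideal (MvPolynomial (Fin n) K)) :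
    ∀ (N : ℕ) (d : Fin n →₀ ℕ), (∑ i, d i) ≤ N → monomial d (1:K) ∈ I →
    ∃ e ∈ minGens I, e ≤ d := by
  intro N
  induction N with
  | zero =>
    intro d hN hd
    refine ⟨d, ⟨hd, fun e he _ => ?_⟩, le_refl d⟩
    ext i
    have h1 : d i = 0 := by
      have h2 : ∑ i, d i = 0 := Nat.le_zero.mp hN
      have := Finset.sum_eq_zero_iff.mp h2 i (Finset.mem_univ i)
      exact this
    have := Finsupp.le_def.mp he i
    omega
  | succ N ih =>
    intro d hN hd
    by_cases h : ∀ e : Fin n →₀ ℕ, e ≤ d → monomial e (1:K) ∈ I → e = d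
    · exact ⟨d, ⟨hd, h⟩, le_refl d⟩
    · push_neg at h
      obtain ⟨e, hle, hme, hne⟩ := h
      have hlt : (∑ i, e i) < ∑ i, d i := by
        have hex : ∃ i, e i ≠ d i := by
          by_contra hc; push_neg at hc; exact hne (Finsupp.ext hc)
        obtain ⟨i0, hi0⟩ := hex
        exact Finset.sum_lt_sum (fun i _ => Finsupp.le_def.mp hle i)
          ⟨i0, Finset.mem_univ i0, lt_of_le_of_ne (Finsupp.le_def.mp hle i0) hi0⟩
      obtain ⟨e', he', hle'⟩ := ih e (by omega) hme
      exact ⟨e', he', hle'.trans hle⟩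

lemma gcdExp_le {I : Ideal (MvPolynomial (Fin n) K)} {d : Fin n →₀ ℕ}
    (hd : monomial d (1:K) ∈ I) : gcdExp I ≤ d := by
  obtain ⟨e, he, hle⟩ := exists_minGen_le I (∑ i, d i) d le_rfl hd
  rw [Finsupp.le_def]
  intro i
  have h1 : gcdExp I i = sInf {k | ∃ d' ∈ minGens I, d' i = k} := by
    simp [gcdExp, Finsupp.ofSupportFinite_coe]
  have h2 : gcdExp I i ≤ e i := by
    rw [h1]; exact Nat.sInf_le ⟨e, he, rfl⟩
  exact h2.trans (Finsupp.le_def.mp hle i)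

lemma span_gcd_mul_colonGcd (I : Ideal (MvPolynomial (Fin n) K)) (hI : IsMonomialIdeal I) :
    Ideal.span {monomial (gcdExp I) (1:K)} * colonGcd I = I := by
  apply le_antisymm
  · rw [Ideal.mul_le]
    intro r hr s hs
    rw [Ideal.mem_span_singleton] at hr
    obtain ⟨c, rfl⟩ := hr
    have h1 : s * monomial (gcdExp I) (1:K) ∈ I := Ideal.mem_colon_span_singleton.mp hs
    have : monomial (gcdExp I) (1:K) * c * s = c * (s * monomial (gcdExp I) (1:K)) := by ring
    rw [this]
    exact Ideal.mul_mem_left I c h1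
  · conv_lhs => rw [hI]
    rw [Ideal.span_le]
    rintro p ⟨d, hd, rfl⟩
    rw [SetLike.mem_coe, Ideal.mem_span_singleton_mul]
    refine ⟨monomial (d - gcdExp I) 1, ?_, ?_⟩
    · rw [colonGcd, Ideal.mem_colon_span_singleton, monomial_mul, mul_one,
        tsub_add_cancel_of_le (gcdExp_le hd)]
      exact hd
    · rw [monomial_mul, one_mul, add_comm, tsub_add_cancel_of_le (gcdExp_le hd)]

lemma mulLeft_injective (g : Fin n →₀ ℕ) :
    Function.Injective ⇑(LinearMap.mulLeft K (monomial g (1:K))) := by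
  intro p q h
  simp only [LinearMap.mulLeft_apply] at h
  exact mul_left_cancel₀ (by simp : (monomial g (1:K)) ≠ 0) h

lemma map_mulLeft_colonGcd (I : Ideal (MvPolynomial (Fin n) K)) (hI : IsMonomialIdeal I) :
    Submodule.map (LinearMap.mulLeft K (monomial (gcdExp I) (1:K)))
      (Submodule.restrictScalars K (colonGcd I)) = Submodule.restrictScalars K I := by
  ext p
  simp only [Submodule.mem_map, Submodule.restrictScalars_mem, LinearMap.mulLeft_apply]
  constructor
  · rintro ⟨q, hq, rfl⟩
    have h1 : q * monomial (gcdExp I) (1:K) ∈ I := Ideal.mem_colon_span_singleton.mp hq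
    rwa [mul_comm] at h1
  · intro hp
    rw [← span_gcd_mul_colonGcd I hI, Ideal.mem_span_singleton_mul] at hp
    obtain ⟨q, hq, hqe⟩ := hp
    exact ⟨q, hq, hqe⟩

lemma map_mulLeft_stanleySpace (g d : Fin n →₀ ℕ) (Z : Finset (Fin n)) :
    Submodule.map (LinearMap.mulLeft K (monomial g (1:K))) (stanleySpace K d Z)
      = stanleySpace K (g + d) Z := by
  rw [stanleySpace, Submodule.map_span, stanleySpace]
  congr 1
  ext p
  simp only [Set.mem_image, Set.mem_setOf_eq, LinearMap.mulLeft_apply]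
  constructor
  · rintro ⟨q, ⟨e, hZ, rfl⟩, rfl⟩
    exact ⟨e, hZ, by rw [monomial_mul, one_mul, ← add_assoc]⟩
  · rintro ⟨e, hZ, rfl⟩
    exact ⟨monomial (d + e) 1, ⟨e, hZ, rfl⟩, by rw [monomial_mul, one_mul, add_assoc]⟩

lemma iSupIndep_map_iff {ι : Type*}
    (φ : MvPolynomial (Fin n) K →ₗ[K] MvPolynomial (Fin n) K)
    (hinj : Function.Injective ⇑φ) (f : ι → Submodule K (MvPolynomial (Fin n) K)) :
    iSupIndep (fun i => Submodule.map φ (f i)) ↔ iSupIndep f := by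
  have key : ∀ i : ι, (⨆ j, ⨆ (_ : j ≠ i), Submodule.map φ (f j))
      = Submodule.map φ (⨆ j, ⨆ (_ : j ≠ i), f j) := by
    intro i
    rw [Submodule.map_iSup]
    exact iSup_congr fun j => (Submodule.map_iSup _ _).symm
  constructor <;> intro h i <;> have hi := h i <;> rw [disjoint_iff] at hi ⊢
  · rw [key, ← Submodule.map_inf _ hinj] at hi
    have hb : Submodule.map φ (f i ⊓ ⨆ j, ⨆ (_ : j ≠ i), f j) = Submodule.map φ ⊥ := by
      rw [Submodule.map_bot]; exact hi
    exact Submodule.map_injective_of_injective hinj hb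
  · rw [key, ← Submodule.map_inf _ hinj, hi, Submodule.map_bot]

lemma isStanleyDecomp_map_iff (g : Fin n →₀ ℕ) (V : Submodule K (MvPolynomial (Fin n) K))
    (r : ℕ) (d : Fin r → (Fin n →₀ ℕ)) (Z : Fin r → Finset (Fin n)) :
    IsStanleyDecomp (Submodule.map (LinearMap.mulLeft K (monomial g (1:K))) V) r
      (fun i => g + d i) Z ↔ IsStanleyDecomp V r d Z := by
  have hinj := mulLeft_injective (K := K) g
  have hmi := Submodule.map_injective_of_injective
    (f := LinearMap.mulLeft K (monomial g (1:K))) hinj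
  unfold IsStanleyDecomp
  have hs : ∀ i, stanleySpace K (g + d i) (Z i)
      = Submodule.map (LinearMap.mulLeft K (monomial g (1:K))) (stanleySpace K (d i) (Z i)) :=
    fun i => (map_mulLeft_stanleySpace g (d i) (Z i)).symm
  simp only [hs]
  rw [iSupIndep_map_iff _ hinj, ← Submodule.map_iSup]
  exact and_congr Iff.rfl ⟨fun h => hmi h, fun h => by rw [h]⟩

end Stmt3Aux

/-- For a non-principal monomial ideal `I`, with `I' = (I : gcd(u : u ∈ G(I)))`,
`sdepth(I) = sdepth(I')`. -/
theorem stmt3 {K : Type*} [Field K] {n : ℕ} (I : Ideal (MvPolynomial (Fin n) K))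
    (hI : IsMonomialIdeal I) (hnp : ¬ I.IsPrincipal) :
    sdepthIdeal I = sdepthIdeal (colonGcd I) := by
  have hmap := map_mulLeft_colonGcd I hI
  have hset : {k | ∃ r d Z, IsStanleyDecomp (Submodule.restrictScalars K I) r d Z ∧
        ∀ i, k ≤ (Z i).card}
      = {k | ∃ r d Z, IsStanleyDecomp (Submodule.restrictScalars K (colonGcd I)) r d Z ∧
        ∀ i, k ≤ (Z i).card} := by
    ext k
    simp only [Set.mem_setOf_eq]
    constructor
    · rintro ⟨r, d, Z, hSD, hZ⟩
      have hle : ∀ i, gcdExp I ≤ d i := by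
        intro i
        apply gcdExp_le
        have h1 : monomial (d i) (1:K) ∈ stanleySpace K (d i) (Z i) :=
          Submodule.subset_span ⟨0, by simp, by rw [add_zero]⟩
        have h2 : stanleySpace K (d i) (Z i) ≤ Submodule.restrictScalars K I := by
          rw [← hSD.2]; exact le_iSup (fun i => stanleySpace K (d i) (Z i)) i
        exact h2 h1
      refine ⟨r, fun i => d i - gcdExp I, Z, ?_, hZ⟩
      refine (isStanleyDecomp_map_iff (gcdExp I) _ r (fun i => d i - gcdExp I) Z).mp ?_
      rw [hmap]
      show IsStanleyDecomp _ r (fun i => gcdExp I + (d i - gcdExp I)) Z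
      have hfun : (fun i => gcdExp I + (d i - gcdExp I)) = d := funext fun i => by
        rw [add_comm]; exact tsub_add_cancel_of_le (hle i)
      rw [hfun]
      exact hSD
    · rintro ⟨r, d, Z, hSD, hZ⟩
      refine ⟨r, fun i => gcdExp I + d i, Z, ?_, hZ⟩
      rw [← hmap]
      exact (isStanleyDecomp_map_iff (gcdExp I) _ r d Z).mpr hSD
  unfold sdepthIdeal sdepth
  rw [hset]
end

section
/- Let I ⊆ S = K[x_1,…,x_n] be a monomial ideal which is not principal. Then sdepth(S/I) ≥ n − c(I), where c(I) is the number of variables that divide at least one minimal monomial generator of I' = (I : gcd(u : u ∈ G(I))). -/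
open MvPolynomial

namespace Stmt4Aux


variable {K : Type*} [Field K] {n : ℕ}

/-- exponent set of a Stanley space -/
def SS {n : ℕ} (d : Fin n →₀ ℕ) (Z : Finset (Fin n)) : Set (Fin n →₀ ℕ) :=
  {f | ∃ e : Fin n →₀ ℕ, (e.support : Set (Fin n)) ⊆ (Z : Set (Fin n)) ∧ f = d + e}

lemma mem_SS {d f : Fin n →₀ ℕ} {Z : Finset (Fin n)} :
    f ∈ SS d Z ↔ d ≤ f ∧ ∀ i ∉ Z, f i = d i := by
  constructor
  · rintro ⟨e, he, rfl⟩
    refine ⟨le_add_right le_rfl, fun i hi => ?_⟩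
    have : e i = 0 := by
      by_contra h
      exact hi (he (by simpa [Finsupp.mem_support_iff] using h))
    show (d + e) i = d i
    rw [Finsupp.add_apply, this, add_zero]
  · rintro ⟨hle, hout⟩
    refine ⟨f - d, ?_, ?_⟩
    · intro i hi
      simp only [Finset.mem_coe, Finsupp.mem_support_iff] at hi
      by_contra h
      apply hi
      have h1 := hout i h
      rw [Finsupp.tsub_apply]
      omega
    · ext i
      have := hle i
      simp only [Finsupp.coe_add, Finsupp.coe_tsub, Pi.add_apply, Pi.sub_apply]
      omega

lemma mono_mem_span (S : Set (Fin n →₀ ℕ)) (f : Fin n →₀ ℕ) :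
    monomial f (1 : K) ∈ Ideal.span ((fun d => monomial d (1 : K)) '' S) ↔ ∃ d ∈ S, d ≤ f := by
  rw [mem_ideal_span_monomial_image]
  simp [support_monomial]

lemma stanleySpace_eq (d : Fin n →₀ ℕ) (Z : Finset (Fin n)) :
    stanleySpace K d Z = Submodule.span K ((fun f => monomial f (1 : K)) '' SS d Z) := by
  unfold stanleySpace
  congr 1
  ext p
  constructor
  · rintro ⟨e, he, rfl⟩
    exact ⟨d + e, ⟨e, he, rfl⟩, rfl⟩
  · rintro ⟨f, ⟨e, he, rfl⟩, rfl⟩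
    exact ⟨e, he, rfl⟩

lemma monomialCompl_eq (J : Ideal (MvPolynomial (Fin n) K)) :
    monomialCompl J =
      Submodule.span K ((fun f => monomial f (1 : K)) '' {f | monomial f (1 : K) ∉ J}) := by
  unfold monomialCompl
  congr 1
  ext p
  constructor
  · rintro ⟨e, he, rfl⟩
    exact ⟨e, he, rfl⟩
  · rintro ⟨f, hf, rfl⟩
    exact ⟨f, hf, rfl⟩

lemma isStanleyDecomp_of_partition {r : ℕ} (d : Fin r → (Fin n →₀ ℕ))
    (Z : Fin r → Finset (Fin n)) (C : Set (Fin n →₀ ℕ))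
    (hdisj : ∀ a b, a ≠ b → Disjoint (SS (d a) (Z a)) (SS (d b) (Z b)))
    (hcov : (⋃ a, SS (d a) (Z a)) = C) :
    IsStanleyDecomp (Submodule.span K ((fun f => monomial f (1 : K)) '' C)) r d Z := by
  have hli : LinearIndependent K (fun f : Fin n →₀ ℕ => monomial f (1 : K)) := by
    have := (basisMonomials (Fin n) K).linearIndependent
    rwa [coe_basisMonomials] at this
  constructor
  · intro a
    show Disjoint (stanleySpace K (d a) (Z a)) (⨆ b, ⨆ (_ : b ≠ a), stanleySpace K (d b) (Z b))
    rw [stanleySpace_eq]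
    have h1 : (⨆ b, ⨆ (_ : b ≠ a), stanleySpace K (d b) (Z b)) =
        Submodule.span K ((fun f => monomial f (1 : K)) '' ⋃ b, ⋃ (_ : b ≠ a), SS (d b) (Z b)) := by
      rw [Set.image_iUnion₂, Submodule.span_iUnion₂]
      exact iSup_congr fun b => iSup_congr fun _ => stanleySpace_eq _ _
    rw [h1]
    refine hli.disjoint_span_image ?_
    rw [Set.disjoint_iUnion₂_right]
    intro b hb
    exact hdisj a b (Ne.symm hb)
  · calc (⨆ a, stanleySpace K (d a) (Z a))
        = ⨆ a, Submodule.span K ((fun f => monomial f (1 : K)) '' SS (d a) (Z a)) :=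
          iSup_congr fun a => stanleySpace_eq _ _
      _ = Submodule.span K ((fun f => monomial f (1 : K)) '' ⋃ a, SS (d a) (Z a)) := by
          rw [Set.image_iUnion, Submodule.span_iUnion]
      _ = _ := by rw [hcov]


variable {I : Ideal (MvPolynomial (Fin n) K)}

lemma hIspan (hI : IsMonomialIdeal I) :
    I = Ideal.span ((fun d => monomial d (1 : K)) '' {f | monomial f (1 : K) ∈ I}) := by
  have hset : {p | ∃ d, monomial d (1 : K) ∈ I ∧ p = monomial d (1 : K)} =
      (fun d => monomial d (1 : K)) '' {f | monomial f (1 : K) ∈ I} := by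
    ext p
    constructor
    · rintro ⟨e, he, rfl⟩; exact ⟨e, he, rfl⟩
    · rintro ⟨f, hf, rfl⟩; exact ⟨f, hf, rfl⟩
  rw [← hset]
  exact hI

lemma mem_of_le_mem {d f : Fin n →₀ ℕ} (hd : monomial d (1 : K) ∈ I) (hle : d ≤ f) :
    monomial f (1 : K) ∈ I := by
  have hfd : f - d + d = f := by
    ext i
    have := hle i
    simp only [Finsupp.add_apply, Finsupp.tsub_apply]
    omega
  have : monomial (f - d) (1 : K) * monomial d (1 : K) = monomial f (1 : K) := by
    rw [monomial_mul, one_mul, hfd]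
  rw [← this]
  exact I.mul_mem_left _ hd

lemma mem_iff_exists_le (hI : IsMonomialIdeal I) {f : Fin n →₀ ℕ} :
    monomial f (1 : K) ∈ I ↔ ∃ d, monomial d (1 : K) ∈ I ∧ d ≤ f := by
  constructor
  · intro hf
    rw [hIspan hI] at hf
    obtain ⟨d, hd, hle⟩ := (mono_mem_span _ _).1 hf
    exact ⟨d, hd.out, hle⟩
  · rintro ⟨d, hd, hle⟩
    exact mem_of_le_mem hd hle

lemma sum_lt_sum_of_lt {e f : Fin n →₀ ℕ} (hle : e ≤ f) (hne : e ≠ f) :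
    (∑ i, e i) < ∑ i, f i := by
  obtain ⟨i, hi⟩ : ∃ i, e i ≠ f i := by
    by_contra h
    push_neg at h
    exact hne (Finsupp.ext h)
  refine Finset.sum_lt_sum (fun j _ => hle j) ⟨i, Finset.mem_univ i, ?_⟩
  exact lt_of_le_of_ne (hle i) hi

lemma exists_minGen {f : Fin n →₀ ℕ} (hf : monomial f (1 : K) ∈ I) :
    ∃ d ∈ minGens I, d ≤ f := by
  suffices H : ∀ N (f : Fin n →₀ ℕ), (∑ i, f i) ≤ N → monomial f (1 : K) ∈ I →
      ∃ d ∈ minGens I, d ≤ f from H _ f le_rfl hf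
  intro N
  induction N with
  | zero =>
    intro f hsum hf
    refine ⟨f, ⟨hf, fun e hle _ => le_antisymm hle ?_⟩, le_rfl⟩
    intro i
    have h1 : f i = 0 := by
      have := Finset.sum_eq_zero_iff.1 (Nat.le_zero.1 hsum) i (Finset.mem_univ i)
      exact this
    omega
  | succ N ih =>
    intro f hsum hf
    by_cases hmin : ∀ e, e ≤ f → monomial e (1 : K) ∈ I → e = f
    · exact ⟨f, ⟨hf, hmin⟩, le_rfl⟩
    · push_neg at hmin
      obtain ⟨e, hle, he, hne⟩ := hmin
      have : (∑ i, e i) ≤ N := by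
        have := sum_lt_sum_of_lt hle hne
        omega
      obtain ⟨d, hd, hdle⟩ := ih e this he
      exact ⟨d, hd, hdle.trans hle⟩

lemma exists_Texp (hI : IsMonomialIdeal I) :
    ∃ T : Set (Fin n →₀ ℕ), T.Finite ∧ (∀ d ∈ T, monomial d (1 : K) ∈ I) ∧
      I = Ideal.span ((fun d => monomial d (1 : K)) '' T) := by
  classical
  obtain ⟨s, hs⟩ := IsNoetherian.noetherian I
  have hmem : ∀ x ∈ (s : Set (MvPolynomial (Fin n) K)),
      x ∈ Submodule.span (MvPolynomial (Fin n) K)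
        ((fun d => monomial d (1 : K)) '' {f | monomial f (1 : K) ∈ I}) := by
    intro x hx
    have : x ∈ I := by rw [← hs]; exact Submodule.subset_span hx
    rwa [hIspan hI] at this
  choose T hT1 hT2 using fun x (hx : x ∈ (s : Set (MvPolynomial (Fin n) K))) => 
    Submodule.mem_span_finite_of_mem_span (hmem x hx)
  set U : Set (MvPolynomial (Fin n) K) := ⋃ (x) (hx : x ∈ (s : Set (MvPolynomial (Fin n) K))), ↑(T x hx) with hU
  have hUfin : U.Finite := Set.Finite.biUnion' s.finite_toSet fun {x} hx => (T x hx).finite_toSet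
  have hUsub : U ⊆ (fun d => monomial d (1 : K)) '' {f | monomial f (1 : K) ∈ I} := by
    simp only [hU, Set.iUnion_subset_iff]
    exact fun x hx => hT1 x hx
  have hUspan : Ideal.span U = I := by
    apply le_antisymm
    · rw [hIspan hI]
      exact Ideal.span_mono hUsub
    · rw [← hs]
      apply Submodule.span_le.2
      intro x hx
      have hsub : ((T x hx : Finset (MvPolynomial (Fin n) K)) : Set (MvPolynomial (Fin n) K)) ⊆ U := by
        rw [hU]
        exact Set.subset_iUnion₂ (s := fun x hx => (↑(T x hx) : Set (MvPolynomial (Fin n) K))) x hx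
      exact Submodule.span_mono hsub (hT2 x hx)
  refine ⟨(fun f => monomial f (1 : K)) ⁻¹' U, ?_, ?_, ?_⟩
  · exact Set.Finite.preimage (Set.injOn_of_injective (monomial_left_injective one_ne_zero)) hUfin
  · intro d hd
    obtain ⟨f, hf, hfd⟩ := hUsub hd
    have : f = d := monomial_left_injective (one_ne_zero (α := K)) hfd
    rwa [← this]
  · rw [Set.image_preimage_eq_of_subset, hUspan]
    intro x hx
    obtain ⟨f, _, hfd⟩ := hUsub hx
    exact ⟨f, hfd⟩

lemma minGens_subset_T (hI : IsMonomialIdeal I) {T : Set (Fin n →₀ ℕ)}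
    (hT : ∀ d ∈ T, monomial d (1 : K) ∈ I)
    (hTspan : I = Ideal.span ((fun d => monomial d (1 : K)) '' T)) :
    minGens I ⊆ T := by
  intro d hd
  have : monomial d (1 : K) ∈ I := hd.1
  rw [hTspan] at this
  obtain ⟨b, hb, hble⟩ := (mono_mem_span _ _).1 this
  have := hd.2 b hble (hT b hb)
  rwa [← this]

lemma gcdExp_apply (i : Fin n) : gcdExp I i = sInf {k | ∃ d ∈ minGens I, d i = k} := by
  unfold gcdExp
  rw [Finsupp.ofSupportFinite_coe]

lemma gcdExp_le {d : Fin n →₀ ℕ} (hd : d ∈ minGens I) (i : Fin n) : gcdExp I i ≤ d i := by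
  rw [gcdExp_apply]
  exact Nat.sInf_le ⟨d, hd, rfl⟩

lemma mem_colonGcd_iff {f : Fin n →₀ ℕ} :
    monomial f (1 : K) ∈ colonGcd I ↔ monomial (f + gcdExp I) (1 : K) ∈ I := by
  unfold colonGcd
  rw [Submodule.mem_colon]
  constructor
  · intro h
    have := h (monomial (gcdExp I) (1 : K)) (Ideal.subset_span rfl)
    rwa [smul_eq_mul, monomial_mul, one_mul] at this
  · intro h p hp
    rw [SetLike.mem_coe, Ideal.mem_span_singleton'] at hp
    obtain ⟨a, rfl⟩ := hp
    rw [smul_eq_mul]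
    have : monomial f (1 : K) * (a * monomial (gcdExp I) (1 : K)) =
        a * monomial (f + gcdExp I) (1 : K) := by
      rw [mul_comm (monomial f (1:K)), mul_assoc, monomial_mul, one_mul, add_comm]
    rw [this]
    exact I.mul_mem_left a h

lemma sub_gcd_mem_minGens_colon (hI : IsMonomialIdeal I) {d : Fin n →₀ ℕ}
    (hd : d ∈ minGens I) : d - gcdExp I ∈ minGens (colonGcd I) := by
  have hvle : gcdExp I ≤ d := fun i => gcdExp_le hd i
  have hsub : d - gcdExp I + gcdExp I = d := by
    ext i
    have := hvle i
    simp only [Finsupp.add_apply, Finsupp.tsub_apply]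
    omega
  constructor
  · rw [mem_colonGcd_iff, hsub]
    exact hd.1
  · intro e hle he
    rw [mem_colonGcd_iff] at he
    obtain ⟨d', hd', hd'le⟩ := exists_minGen he
    have hled : e + gcdExp I ≤ d := by
      intro i
      have h1 := hle i
      have h2 := hvle i
      simp only [Finsupp.add_apply, Finsupp.tsub_apply] at h1 ⊢
      omega
    have heq : d' = d := hd.2 d' (hd'le.trans hled) hd'.1
    rw [heq] at hd'le
    have : d ≤ e + gcdExp I := hd'le
    apply le_antisymm hle
    intro i
    have h1 := this i
    simp only [Finsupp.add_apply, Finsupp.tsub_apply] at h1 ⊢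
    omega

/-- key fact: off the support of I', all minimal generators agree with the gcd -/
lemma key_star (hI : IsMonomialIdeal I) {i : Fin n}
    (hi : i ∉ {i : Fin n | ∃ d ∈ minGens (colonGcd I), d i ≠ 0})
    {d : Fin n →₀ ℕ} (hd : d ∈ minGens I) : d i = gcdExp I i := by
  have h1 := sub_gcd_mem_minGens_colon hI hd
  simp only [Set.mem_setOf_eq, not_exists, not_and, not_not] at hi
  have h2 := hi _ h1
  rw [Finsupp.tsub_apply] at h2
  have := gcdExp_le hd i
  omega

/-- first exponent of a type-1 piece -/
noncomputable def w1 {n : ℕ} (B : Finset (Fin n)) (v : Fin n →₀ ℕ) (i : Fin n) (t : ℕ) : Fin n →₀ ℕ :=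
  Finsupp.ofSupportFinite (fun i' => if i' ∉ B ∧ i' < i then v i' else 0) (Set.toFinite _)
    + Finsupp.single i t

lemma w1_apply {n : ℕ} (B : Finset (Fin n)) (v : Fin n →₀ ℕ) (i : Fin n) (t : ℕ) (i' : Fin n) :
    w1 B v i t i' = (if i' ∉ B ∧ i' < i then v i' else 0) + (if i = i' then t else 0) := by
  rw [w1, Finsupp.add_apply, Finsupp.single_apply]
  rfl

lemma mem_SS_w1 {n : ℕ} {B : Finset (Fin n)} {v : Fin n →₀ ℕ} {i : Fin n} {t : ℕ}
    {f : Fin n →₀ ℕ} :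
    f ∈ SS (w1 B v i t) (Finset.univ.erase i) ↔
      f i = t ∧ ∀ i' ∉ B, i' < i → v i' ≤ f i' := by
  rw [mem_SS]
  constructor
  · rintro ⟨hle, hout⟩
    have hfi : f i = t := by
      have h0 := hout i (by simp)
      rw [h0, w1_apply]
      simp
    refine ⟨hfi, fun i' hi' hlt => ?_⟩
    have h1 := hle i'
    rw [w1_apply] at h1
    have hne : i ≠ i' := (ne_of_lt hlt).symm
    simp only [hi', not_false_iff, true_and, hlt, if_pos, hne, if_neg, if_false] at h1
    simpa using h1
  · rintro ⟨hfi, hmono⟩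
    constructor
    · rw [Finsupp.le_def]
      intro i'
      rw [w1_apply]
      by_cases h1 : i' = i
      · subst h1
        simp [hfi]
      · simp only [Ne.symm h1, if_false, add_zero]
        by_cases h2 : i' ∉ B ∧ i' < i
        · rw [if_pos h2]; exact hmono i' h2.1 h2.2
        · rw [if_neg h2]; exact Nat.zero_le _
    · intro i' hi'
      have : i' = i := by
        by_contra h
        exact hi' (Finset.mem_erase.2 ⟨h, Finset.mem_univ _⟩)
      subst this
      rw [w1_apply]
      simp [hfi]

lemma mem_SS_type2 {n : ℕ} {B : Finset (Fin n)} {v vA M0 e f : Fin n →₀ ℕ}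
    (hvA : ∀ i, vA i = if i ∈ B then 0 else v i)
    (hM0 : ∀ i ∉ B, M0 i = 0) (he : e ≤ M0) :
    f ∈ SS (e + vA) (Finset.univ.filter (fun i => i ∉ B ∨ e i = M0 i)) ↔
      (∀ i ∉ B, v i ≤ f i) ∧ ∀ i ∈ B, e i = min (f i) (M0 i) := by
  rw [mem_SS]
  constructor
  · rintro ⟨hle, hout⟩
    constructor
    · intro i hi
      have h1 := hle i
      rw [Finsupp.add_apply, hvA] at h1
      rw [if_neg hi] at h1
      omega
    · intro i hiB
      have heM : e i ≤ M0 i := he i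
      by_cases hm : e i = M0 i
      · have h1 := hle i
        rw [Finsupp.add_apply, hvA, if_pos hiB] at h1
        omega
      · have h2 := hout i (by simp [hiB, hm])
        rw [Finsupp.add_apply, hvA, if_pos hiB] at h2
        omega
  · rintro ⟨hA, hB⟩
    constructor
    · rw [Finsupp.le_def]
      intro i
      rw [Finsupp.add_apply, hvA]
      by_cases hiB : i ∈ B
      · rw [if_pos hiB]
        have := hB i hiB
        omega
      · rw [if_neg hiB]
        have h1 := he i
        have h2 := hM0 i hiB
        have h3 := hA i hiB
        omega
    · intro i hi
      simp only [Finset.mem_filter, Finset.mem_univ, true_and, not_or, not_not] at hi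
      obtain ⟨hiB, hne⟩ := hi
      have h1 := hB i hiB
      rw [Finsupp.add_apply, hvA, if_pos hiB]
      omega

lemma one_notin (hnp : ¬ I.IsPrincipal) : (1 : MvPolynomial (Fin n) K) ∉ I := by
  intro h
  refine hnp ⟨⟨1, ?_⟩⟩
  have h2 : I = ⊤ := (Ideal.eq_top_iff_one I).2 h
  rw [h2]
  exact (Ideal.span_singleton_one).symm

lemma minGens_nonempty (hI : IsMonomialIdeal I) (hnp : ¬ I.IsPrincipal) :
    (minGens I).Nonempty := by
  have hbot : I ≠ ⊥ := by
    intro h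
    exact hnp ⟨⟨0, by rw [h]; exact (Ideal.span_zero).symm⟩⟩
  have : {f : Fin n →₀ ℕ | monomial f (1 : K) ∈ I}.Nonempty := by
    by_contra h
    rw [Set.not_nonempty_iff_eq_empty] at h
    apply hbot
    rw [hIspan hI, h, Set.image_empty]
    exact Ideal.span_empty
  obtain ⟨f, hf⟩ := this
  obtain ⟨d, hd, _⟩ := exists_minGen hf
  exact ⟨d, hd⟩

lemma B_nonempty (hI : IsMonomialIdeal I) (hnp : ¬ I.IsPrincipal) :
    {i : Fin n | ∃ d ∈ minGens (colonGcd I), d i ≠ 0}.Nonempty := by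
  by_contra hB
  rw [Set.not_nonempty_iff_eq_empty] at hB
  have hall : ∀ d ∈ minGens I, d = gcdExp I := by
    intro d hd
    ext i
    exact key_star hI (by rw [hB]; exact Set.notMem_empty i) hd
  obtain ⟨d0, hd0⟩ := minGens_nonempty hI hnp
  have hvmem : gcdExp I ∈ minGens I := by rw [← hall d0 hd0]; exact hd0
  apply hnp
  have hIeq : I = Ideal.span {monomial (gcdExp I) (1 : K)} := by
    apply le_antisymm
    · intro p hp
      rw [hIspan hI] at hp
      refine Submodule.span_le.2 ?_ hp
      rintro x ⟨f, hf, rfl⟩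
      obtain ⟨d, hd, hle⟩ := exists_minGen hf
      rw [hall d hd] at hle
      rw [SetLike.mem_coe, Ideal.mem_span_singleton]
      refine ⟨monomial (f - gcdExp I) (1 : K), ?_⟩
      rw [monomial_mul, one_mul]
      have hfv : gcdExp I + (f - gcdExp I) = f := by
        ext i
        have := hle i
        simp only [Finsupp.add_apply, Finsupp.tsub_apply]
        omega
      rw [hfv]
    · rw [Ideal.span_le]
      intro x hx
      rw [Set.mem_singleton_iff] at hx
      subst hx
      exact hvmem.1
  exact ⟨⟨monomial (gcdExp I) (1 : K), hIeq⟩⟩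

end Stmt4Aux

open Stmt4Aux in
/-- For a non-principal monomial ideal `I ⊆ K[x_1,…,x_n]`,
`sdepth(S/I) ≥ n - c(I)`. -/
theorem stmt4 {K : Type*} [Field K] {n : ℕ} (I : Ideal (MvPolynomial (Fin n) K))
    (hI : IsMonomialIdeal I) (hnp : ¬ I.IsPrincipal) :
    n - numSupp I ≤ sdepthQuot I := by
  classical
  set C : Set (Fin n →₀ ℕ) := {f | monomial f (1 : K) ∉ I} with hC
  have h1I : (1 : MvPolynomial (Fin n) K) ∉ I := one_notin hnp
  have hmemG : ∀ f : Fin n →₀ ℕ, monomial f (1 : K) ∈ I ↔ ∃ d ∈ minGens I, d ≤ f := by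
    intro f
    constructor
    · exact fun h => exists_minGen h
    · rintro ⟨d, hd, hle⟩
      exact mem_of_le_mem hd.1 hle
  have hvle : ∀ d ∈ minGens I, ∀ i, gcdExp I i ≤ d i := fun d hd i => gcdExp_le hd i
  set Bset : Set (Fin n) := {i | ∃ d ∈ minGens (colonGcd I), d i ≠ 0} with hBset
  set Bfin : Finset (Fin n) := Finset.univ.filter (fun i => i ∈ Bset) with hBfin
  have hBiff : ∀ i, i ∈ Bfin ↔ i ∈ Bset := fun i => by simp [hBfin]
  have hstar : ∀ i, i ∉ Bfin → ∀ d ∈ minGens I, d i = gcdExp I i := by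
    intro i hi d hd
    exact key_star hI (fun hc => hi ((hBiff i).2 hc)) hd
  have hcardB : numSupp I = Bfin.card := by
    have h0 : Bset = ↑Bfin := by ext i; rw [← hBiff i]; simp
    show Bset.ncard = Bfin.card
    rw [h0, Set.ncard_coe_finset]
  have hBpos : 0 < Bfin.card := by
    obtain ⟨i, hi⟩ := B_nonempty hI hnp
    exact Finset.card_pos.2 ⟨i, (hBiff i).2 hi⟩
  obtain ⟨T, hTfin, hTmem, hTspan⟩ := exists_Texp hI
  have hGT : minGens I ⊆ T := minGens_subset_T hI hTmem hTspan
  set m : Fin n → ℕ := fun i => hTfin.toFinset.sup (fun b => b i) with hm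
  have hGm : ∀ d ∈ minGens I, ∀ i, d i ≤ m i := by
    intro d hd i
    exact Finset.le_sup (f := fun b => b i) (hTfin.mem_toFinset.2 (hGT hd))
  set M0 : Fin n →₀ ℕ :=
    Finsupp.ofSupportFinite (fun i => if i ∈ Bfin then m i else 0) (Set.toFinite _) with hM0def
  have hM0 : ∀ i, M0 i = if i ∈ Bfin then m i else 0 := fun i => by rw [hM0def]; rfl
  set vA : Fin n →₀ ℕ :=
    Finsupp.ofSupportFinite (fun i => if i ∈ Bfin then 0 else gcdExp I i) (Set.toFinite _)
    with hvAdef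
  have hvA : ∀ i, vA i = if i ∈ Bfin then 0 else gcdExp I i := fun i => by rw [hvAdef]; rfl
  set vmax : ℕ := (Finset.univ.sup fun i => gcdExp I i) + 1 with hvmax
  set Q1 : Finset (Fin n × ℕ) :=
    (Finset.univ ×ˢ Finset.range vmax).filter (fun q => q.1 ∉ Bfin ∧ q.2 < gcdExp I q.1)
    with hQ1def
  set Q2 : Finset (Fin n →₀ ℕ) :=
    (Finset.Iic M0).filter (fun e => monomial (e + vA) (1 : K) ∉ I) with hQ2def
  have hQ1 : ∀ q : {x // x ∈ Q1}, q.1.1 ∉ Bfin ∧ q.1.2 < gcdExp I q.1.1 := by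
    intro q
    exact (Finset.mem_filter.1 q.2).2
  have hQ2 : ∀ e : {x // x ∈ Q2}, (e.1 : Fin n →₀ ℕ) ≤ M0 ∧ monomial (e.1 + vA) (1 : K) ∉ I := by
    intro e
    have h1 := Finset.mem_filter.1 e.2
    exact ⟨Finset.mem_Iic.1 h1.1, h1.2⟩
  set dd : ({x // x ∈ Q1} ⊕ {x // x ∈ Q2}) → (Fin n →₀ ℕ) :=
    Sum.elim (fun q => w1 Bfin (gcdExp I) q.1.1 q.1.2) (fun e => e.1 + vA) with hdd
  set ZZ : ({x // x ∈ Q1} ⊕ {x // x ∈ Q2}) → Finset (Fin n) :=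
    Sum.elim (fun q => Finset.univ.erase q.1.1)
      (fun e => Finset.univ.filter (fun i => i ∉ Bfin ∨ e.1 i = M0 i)) with hZZ
  have hmem1 : ∀ (q : {x // x ∈ Q1}) (f : Fin n →₀ ℕ),
      f ∈ SS (dd (Sum.inl q)) (ZZ (Sum.inl q)) ↔
        (f q.1.1 = q.1.2 ∧ ∀ i' ∉ Bfin, i' < q.1.1 → gcdExp I i' ≤ f i') :=
    fun q f => mem_SS_w1
  have hmem2 : ∀ (e : {x // x ∈ Q2}) (f : Fin n →₀ ℕ),
      f ∈ SS (dd (Sum.inr e)) (ZZ (Sum.inr e)) ↔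
        ((∀ i ∉ Bfin, gcdExp I i ≤ f i) ∧ ∀ i ∈ Bfin, e.1 i = min (f i) (M0 i)) :=
    fun e f => mem_SS_type2 hvA (fun i hi => by rw [hM0 i, if_neg hi]) (hQ2 e).1
  -- cover
  have hcov : (⋃ a, SS (dd a) (ZZ a)) = C := by
    ext f
    simp only [Set.mem_iUnion, hC, Set.mem_setOf_eq]
    constructor
    · rintro ⟨a, ha⟩
      rcases a with q | e
      · rw [hmem1 q f] at ha
        intro hfI
        obtain ⟨d, hd, hle⟩ := (hmemG f).1 hfI
        have h1 := hvle d hd q.1.1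
        have h2 := hle q.1.1
        have h3 := (hQ1 q).2
        have h0 := ha.1
        omega
      · rw [hmem2 e f] at ha
        intro hfI
        obtain ⟨d, hd, hle⟩ := (hmemG f).1 hfI
        apply (hQ2 e).2
        apply (hmemG _).2
        refine ⟨d, hd, ?_⟩
        rw [Finsupp.le_def]
        intro i
        rw [Finsupp.add_apply, hvA i]
        by_cases hiB : i ∈ Bfin
        · have h1 := ha.2 i hiB
          have h2 := hle i
          have h3 := hGm d hd i
          have h4 : M0 i = m i := by rw [hM0 i, if_pos hiB]
          rw [if_pos hiB]
          omega
        · have h1 := hstar i hiB d hd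
          rw [if_neg hiB]
          omega
    · intro hfI
      by_cases hA : ∀ i, i ∉ Bfin → gcdExp I i ≤ f i
      · set e0 : Fin n →₀ ℕ :=
          Finsupp.ofSupportFinite (fun i => if i ∈ Bfin then min (f i) (M0 i) else 0)
            (Set.toFinite _) with he0def
        have he0 : ∀ i, e0 i = if i ∈ Bfin then min (f i) (M0 i) else 0 := fun i => by
          rw [he0def]; rfl
        have he0M : e0 ≤ M0 := by
          rw [Finsupp.le_def]
          intro i
          rw [he0 i, hM0 i]
          by_cases hiB : i ∈ Bfin
          · rw [if_pos hiB, if_pos hiB]; omega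
          · rw [if_neg hiB, if_neg hiB]
        have henotI : monomial (e0 + vA) (1 : K) ∉ I := by
          intro h
          obtain ⟨d, hd, hle⟩ := (hmemG _).1 h
          apply hfI
          apply (hmemG f).2
          refine ⟨d, hd, ?_⟩
          rw [Finsupp.le_def]
          intro i
          have h2 := hle i
          rw [Finsupp.add_apply, he0 i, hvA i] at h2
          by_cases hiB : i ∈ Bfin
          · rw [if_pos hiB, if_pos hiB] at h2; omega
          · have h3 := hstar i hiB d hd
            have h4 := hA i hiB
            omega
        have he0Q2 : e0 ∈ Q2 :=
          Finset.mem_filter.2 ⟨Finset.mem_Iic.2 he0M, henotI⟩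
        refine ⟨Sum.inr ⟨e0, he0Q2⟩, ?_⟩
        rw [hmem2]
        exact ⟨hA, fun i hiB => by rw [he0 i, if_pos hiB]⟩
      · push_neg at hA
        set s : Finset (Fin n) := Finset.univ.filter (fun i => i ∉ Bfin ∧ f i < gcdExp I i)
          with hsdef
        have hsne : s.Nonempty := by
          obtain ⟨i0, hi0B, hi0⟩ := hA
          exact ⟨i0, Finset.mem_filter.2 ⟨Finset.mem_univ _, hi0B, hi0⟩⟩
        have hi1 : s.min' hsne ∉ Bfin ∧ f (s.min' hsne) < gcdExp I (s.min' hsne) := by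
          exact (Finset.mem_filter.1 (s.min'_mem hsne)).2
        have hq : (s.min' hsne, f (s.min' hsne)) ∈ Q1 := by
          apply Finset.mem_filter.2
          refine ⟨Finset.mem_product.2 ⟨Finset.mem_univ _, Finset.mem_range.2 ?_⟩, hi1.1, hi1.2⟩
          have h1 : gcdExp I (s.min' hsne) ≤ Finset.univ.sup fun i => gcdExp I i :=
            Finset.le_sup (Finset.mem_univ _)
          have h2 := hi1.2
          omega
        refine ⟨Sum.inl ⟨(s.min' hsne, f (s.min' hsne)), hq⟩, ?_⟩
        rw [hmem1]
        refine ⟨rfl, fun i' hi'B hlt => ?_⟩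
        by_contra hc
        push_neg at hc
        have hmem : i' ∈ s := Finset.mem_filter.2 ⟨Finset.mem_univ _, hi'B, hc⟩
        exact absurd hlt (not_lt.2 (s.min'_le i' hmem))
  -- disjointness
  have hdisjpt : ∀ (a b : {x // x ∈ Q1} ⊕ {x // x ∈ Q2}) (f : Fin n →₀ ℕ),
      f ∈ SS (dd a) (ZZ a) → f ∈ SS (dd b) (ZZ b) → a = b := by
    intro a b f hfa hfb
    rcases a with q | e <;> rcases b with q' | e'
    · rw [hmem1] at hfa hfb
      have h1 := hQ1 q
      have h2 := hQ1 q'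
      have heq : q.1.1 = q'.1.1 := by
        by_contra hne
        rcases lt_or_gt_of_ne hne with hlt | hgt
        · have h3 := hfb.2 q.1.1 h1.1 hlt
          have h4 := hfa.1
          omega
        · have h3 := hfa.2 q'.1.1 h2.1 hgt
          have h4 := hfb.1
          omega
      have hsnd : q.1.2 = q'.1.2 := by rw [← hfa.1, ← hfb.1, heq]
      exact congrArg Sum.inl (Subtype.ext (Prod.ext_iff.2 ⟨heq, hsnd⟩))
    · exfalso
      rw [hmem1] at hfa
      rw [hmem2] at hfb
      have h1 := hQ1 q
      have h2 := hfb.1 q.1.1 h1.1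
      have h3 := hfa.1
      omega
    · exfalso
      rw [hmem2] at hfa
      rw [hmem1] at hfb
      have h1 := hQ1 q'
      have h2 := hfa.1 q'.1.1 h1.1
      have h3 := hfb.1
      omega
    · rw [hmem2] at hfa hfb
      have heq : e.1 = e'.1 := by
        ext i
        by_cases hiB : i ∈ Bfin
        · rw [hfa.2 i hiB, hfb.2 i hiB]
        · have ha := (hQ2 e).1 i
          have hb := (hQ2 e').1 i
          have h0 : M0 i = 0 := by rw [hM0 i, if_neg hiB]
          omega
      exact congrArg Sum.inr (Subtype.ext heq)
  have hdisj : ∀ a b, a ≠ b → Disjoint (SS (dd a) (ZZ a)) (SS (dd b) (ZZ b)) := by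
    intro a b hab
    rw [Set.disjoint_left]
    intro f hfa hfb
    exact hab (hdisjpt a b f hfa hfb)
  -- cardinality bound
  have hZcard : ∀ a, n - Bfin.card ≤ (ZZ a).card := by
    intro a
    rcases a with q | e
    · have hzz : ZZ (Sum.inl q) = Finset.univ.erase q.1.1 := rfl
      rw [hzz, Finset.card_erase_of_mem (Finset.mem_univ _), Finset.card_univ, Fintype.card_fin]
      omega
    · have hzz : ZZ (Sum.inr e) = Finset.univ.filter (fun i => i ∉ Bfin ∨ e.1 i = M0 i) := rfl
      rw [hzz]
      have hsub : Bfinᶜ ⊆ Finset.univ.filter (fun i => i ∉ Bfin ∨ e.1 i = M0 i) := by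
        intro i hi
        rw [Finset.mem_compl] at hi
        exact Finset.mem_filter.2 ⟨Finset.mem_univ _, Or.inl hi⟩
      have h1 := Finset.card_le_card hsub
      rw [Finset.card_compl, Fintype.card_fin] at h1
      exact h1
  -- assemble
  have hSD : IsStanleyDecomp (monomialCompl I)
      (Fintype.card ({x // x ∈ Q1} ⊕ {x // x ∈ Q2}))
      (fun j => dd ((Fintype.equivFin ({x // x ∈ Q1} ⊕ {x // x ∈ Q2})).symm j))
      (fun j => ZZ ((Fintype.equivFin ({x // x ∈ Q1} ⊕ {x // x ∈ Q2})).symm j)) := by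
    rw [monomialCompl_eq]
    apply isStanleyDecomp_of_partition
    · intro a b hab
      exact hdisj _ _
        (fun h => hab ((Fintype.equivFin ({x // x ∈ Q1} ⊕ {x // x ∈ Q2})).symm.injective h))
    · calc (⋃ j, SS (dd ((Fintype.equivFin ({x // x ∈ Q1} ⊕ {x // x ∈ Q2})).symm j))
              (ZZ ((Fintype.equivFin ({x // x ∈ Q1} ⊕ {x // x ∈ Q2})).symm j)))
          = ⋃ a, SS (dd a) (ZZ a) :=
            (Fintype.equivFin ({x // x ∈ Q1} ⊕ {x // x ∈ Q2})).symm.surjective.iUnion_comp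
              (fun a => SS (dd a) (ZZ a))
        _ = C := hcov
  have hmemset : (n - numSupp I) ∈
      {k | ∃ r d Z, IsStanleyDecomp (monomialCompl I) r d Z ∧ ∀ i, k ≤ (Z i).card} := by
    refine ⟨_, _, _, hSD, ?_⟩
    intro j
    rw [hcardB]
    exact hZcard _
  have hbdd : BddAbove
      {k | ∃ r d Z, IsStanleyDecomp (monomialCompl I) r d Z ∧ ∀ i, k ≤ (Z i).card} := by
    refine ⟨n, ?_⟩
    rintro k ⟨r, d, Z, hSD', hk⟩
    rcases Nat.eq_zero_or_pos r with hr | hr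
    · exfalso
      subst hr
      have hbot : monomialCompl I = ⊥ := by
        rw [← hSD'.2]
        exact iSup_of_empty _
      have h1 : monomial (0 : Fin n →₀ ℕ) (1 : K) ∈ monomialCompl I := by
        rw [monomialCompl_eq]
        apply Submodule.subset_span
        exact ⟨0, fun hmem => h1I (by rwa [monomial_zero', C_1] at hmem), rfl⟩
      rw [hbot, Submodule.mem_bot, monomial_zero', C_1] at h1
      exact one_ne_zero h1
    · calc k ≤ (Z ⟨0, hr⟩).card := hk _
        _ ≤ n := by
            simpa using Finset.card_le_univ (Z ⟨0, hr⟩)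
  exact le_csSup hbdd hmemset
end

section
/- Let I ⊆ S = K[x_1,…,x_n] be a monomial ideal which is not principal. Then sdepth(I) ≥ n − c(I) + 1, where c(I) is the number of variables that divide at least one minimal monomial generator of I' = (I : gcd(u : u ∈ G(I))). -/
open MvPolynomial

namespace Stmt5Aux

variable {n : ℕ}

def pieceSet {n : ℕ} (p : (Fin n →₀ ℕ) × Finset (Fin n)) : Set (Fin n →₀ ℕ) :=
  {m | ∃ e : Fin n →₀ ℕ, e.support ⊆ p.2 ∧ m = p.1 + e}

lemma self_mem_pieceSet (p : (Fin n →₀ ℕ) × Finset (Fin n)) : p.1 ∈ pieceSet p :=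
  ⟨0, by simp⟩

def GoodList (A : Finset (Fin n)) (M : Set (Fin n →₀ ℕ))
    (L : List ((Fin n →₀ ℕ) × Finset (Fin n))) : Prop :=
  (∀ p ∈ L, p.2.Nonempty ∧ p.2 ⊆ A ∧ p.1.support ⊆ A) ∧
  L.Pairwise (fun p q => Disjoint (pieceSet p) (pieceSet q)) ∧
  ∀ m, m ∈ M ↔ ∃ p ∈ L, m ∈ pieceSet p

lemma erase_add_single_eq (x : Fin n) (a : Fin n →₀ ℕ) (hx : a x = 0) (k : ℕ) :
    Finsupp.erase x (a + Finsupp.single x k) = a := by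
  ext i
  rcases eq_or_ne i x with rfl | h
  · simp [Finsupp.erase_apply, hx]
  · simp [Finsupp.erase_apply, h, Finsupp.single_apply, Ne.symm h]

lemma eq_single_of_support_subset (x : Fin n) (f : Fin n →₀ ℕ)
    (h : f.support ⊆ {x}) : f = Finsupp.single x (f x) := by
  ext i
  rcases eq_or_ne i x with rfl | hi
  · simp
  · have : i ∉ f.support := fun hs => hi (Finset.mem_singleton.mp (h hs))
    simp [Finsupp.notMem_support_iff.mp this, Finsupp.single_apply, Ne.symm hi]

lemma exists_min_below (M : Set (Fin n →₀ ℕ)) (m : Fin n →₀ ℕ) (hm : m ∈ M) :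
    ∃ g, g ≤ m ∧ g ∈ M ∧ ∀ e ∈ M, e ≤ g → e = g := by
  obtain ⟨g, hgT, hmin⟩ := (IsWellFounded.wf (r := ((· < ·) : (Fin n →₀ ℕ) → _ → Prop))).has_min
    {e | e ∈ M ∧ e ≤ m} ⟨m, hm, le_rfl⟩
  refine ⟨g, hgT.2, hgT.1, fun e he hle => ?_⟩
  by_contra hne
  exact hmin e ⟨he, hle.trans hgT.2⟩ (lt_of_le_of_ne hle hne)

lemma min_set_finite (M : Set (Fin n →₀ ℕ)) :
    {g | g ∈ M ∧ ∀ e ∈ M, e ≤ g → e = g}.Finite := by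
  have hanti : IsAntichain (· ≤ ·) {g | g ∈ M ∧ ∀ e ∈ M, e ≤ g → e = g} := by
    intro a ha b hb hne hle
    exact hne (hb.2 a ha.1 hle)
  exact hanti.finite_of_partiallyWellOrderedOn (Set.isPWO_of_wellQuasiOrderedLE _)

lemma partition_exists (N : ℕ) : ∀ (A : Finset (Fin n)), A.card ≤ N → A.Nonempty →
    ∀ M : Set (Fin n →₀ ℕ), (∀ m ∈ M, m.support ⊆ A) →
    (∀ m ∈ M, ∀ c : Fin n →₀ ℕ, c.support ⊆ A → c + m ∈ M) →
    ∃ L, GoodList A M L := by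
  induction N with
  | zero =>
    intro A hcard hA
    exact absurd (Finset.card_pos.mpr hA) (by omega)
  | succ N IH =>
    intro A hcard hA M hsupp hup
    by_cases hM : M = ∅
    · refine ⟨[], ?_, ?_, ?_⟩ <;> simp [hM]
    obtain ⟨x, hx⟩ := hA
    by_cases hA1 : A.erase x = ∅
    · -- A = {x}
      have hAx : A = {x} := by
        rcases (Finset.erase_eq_empty_iff A x).mp hA1 with h | h
        · exact absurd (h ▸ hx) (Finset.notMem_empty x)
        · exact h
      obtain ⟨m0, hm0⟩ := Set.nonempty_iff_ne_empty.mpr hM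
      have hsingle : ∀ m ∈ M, m = Finsupp.single x (m x) := fun m hm =>
        eq_single_of_support_subset x m (hAx ▸ hsupp m hm)
      have hKne : ∃ k, Finsupp.single x k ∈ M := ⟨m0 x, (hsingle m0 hm0) ▸ hm0⟩
      set k₀ := sInf {k | Finsupp.single x k ∈ M} with hk₀def
      have hk₀ : Finsupp.single x k₀ ∈ M := Nat.sInf_mem hKne
      refine ⟨[(Finsupp.single x k₀, {x})], ?_, List.pairwise_singleton _ _, ?_⟩
      · intro p hp
        rw [List.mem_singleton] at hp
        subst hp
        exact ⟨Finset.singleton_nonempty x, by rw [hAx], by rw [hAx]; exact Finsupp.support_single_subset⟩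
      · intro m
        simp only [List.mem_singleton, exists_eq_left]
        constructor
        · intro hm
          have hmem : Finsupp.single x (m x) ∈ M := by rw [← hsingle m hm]; exact hm
          have hle : k₀ ≤ m x := Nat.sInf_le hmem
          refine ⟨Finsupp.single x (m x - k₀), Finsupp.support_single_subset, ?_⟩
          rw [← Finsupp.single_add]
          have h5 : k₀ + (m x - k₀) = m x := by omega
          rw [h5]
          exact hsingle m hm
        · rintro ⟨e, he, rfl⟩
          have := hup _ hk₀ e (hAx ▸ he)
          rwa [add_comm] at this
    · -- main case: A' := A.erase x nonempty
      have hA' : (A.erase x).Nonempty := Finset.nonempty_iff_ne_empty.mpr hA1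
      have hA'card : (A.erase x).card ≤ N := by
        rw [Finset.card_erase_of_mem hx]
        have := Finset.card_pos.mpr ⟨x, hx⟩
        omega
      set A' := A.erase x with hA'def
      have hxA' : x ∉ A' := Finset.notMem_erase x A
      have hA'A : A' ⊆ A := Finset.erase_subset x A
      set Nset : ℕ → Set (Fin n →₀ ℕ) :=
        fun k => {m | m.support ⊆ A' ∧ m + Finsupp.single x k ∈ M} with hNdef
      have hmono : ∀ {k l : ℕ}, k ≤ l → Nset k ⊆ Nset l := by
        intro k l hkl m hm
        refine ⟨hm.1, ?_⟩
        have h3 : Finsupp.single x (l - k) + (m + Finsupp.single x k)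
            = m + Finsupp.single x l := by
          rw [← add_assoc, add_comm (Finsupp.single x (l - k)) m, add_assoc,
            ← Finsupp.single_add, Nat.sub_add_cancel hkl]
        have := hup _ hm.2 (Finsupp.single x (l - k))
          (Finsupp.support_single_subset.trans (by simp [hx]))
        rwa [h3] at this
      have hNup : ∀ k, ∀ m ∈ Nset k, ∀ c : Fin n →₀ ℕ, c.support ⊆ A' → c + m ∈ Nset k := by
        intro k m hm c hc
        refine ⟨(Finsupp.support_add).trans (Finset.union_subset hc hm.1), ?_⟩
        rw [add_assoc]
        exact hup _ hm.2 c (hc.trans hA'A)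
      set NU : Set (Fin n →₀ ℕ) := ⋃ k, Nset k with hNUdef
      have hNUsupp : ∀ m ∈ NU, m.support ⊆ A' := by
        intro m hm
        obtain ⟨k, hk⟩ := Set.mem_iUnion.mp hm
        exact hk.1
      have hkf : ∀ g ∈ NU, g ∈ Nset (sInf {k | g ∈ Nset k}) := by
        intro g hg
        exact Nat.sInf_mem (Set.mem_iUnion.mp hg)
      have hMinfin := min_set_finite NU
      set k0 := hMinfin.toFinset.sup (fun g => sInf {k | g ∈ Nset k}) with hk0def
      have hstab : ∀ k, k0 ≤ k → NU ⊆ Nset k := by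
        intro k hk m hm
        obtain ⟨g, hgle, hgNU, hgmin⟩ := exists_min_below NU m hm
        have h1 : sInf {k | g ∈ Nset k} ≤ k0 := by
          rw [hk0def]
          exact Finset.le_sup (f := fun g => sInf {k | g ∈ Nset k})
            (hMinfin.mem_toFinset.mpr ⟨hgNU, hgmin⟩)
        have h2 : g ∈ Nset k := hmono (h1.trans hk) (hkf g hgNU)
        have h3 : (m - g) + g = m := tsub_add_cancel_of_le hgle
        have h4 : (m - g).support ⊆ A' := by
          intro i hi
          apply hNUsupp m hm
          rw [Finsupp.mem_support_iff] at hi ⊢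
          rw [Finsupp.tsub_apply] at hi
          omega
        have := hNup k g h2 (m - g) h4
        rwa [h3] at this
      -- partitions of each Nset k by induction
      have hex : ∀ k, ∃ L, GoodList A' (Nset k) L :=
        fun k => IH A' hA'card hA' (Nset k) (fun m hm => hm.1) (fun m hm => hNup k m hm)
      choose Lk hLk using hex
      set blk : ℕ → List ((Fin n →₀ ℕ) × Finset (Fin n)) :=
        fun k => (Lk k).map (fun p => (p.1 + Finsupp.single x k, p.2)) with hblkdef
      set Ltail : List ((Fin n →₀ ℕ) × Finset (Fin n)) :=
        (Lk k0).map (fun p => (p.1 + Finsupp.single x k0, p.2 ∪ {x})) with hLtaildef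
      -- membership lemmas
      have hx0 : ∀ (p : (Fin n →₀ ℕ) × Finset (Fin n)), p ∈ Lk k0 ∨ (∃ k, p ∈ Lk k) → True :=
        fun _ _ => trivial
      have lem1 : ∀ k, ∀ p ∈ Lk k, ∀ m : Fin n →₀ ℕ,
          m ∈ pieceSet (p.1 + Finsupp.single x k, p.2) ↔
            (m x = k ∧ Finsupp.erase x m ∈ pieceSet p) := by
        intro k p hp m
        have hp2 := ((hLk k).1 p hp).2.1
        have hp1 := ((hLk k).1 p hp).2.2
        have hp1x : p.1 x = 0 := Finsupp.notMem_support_iff.mp (fun h => hxA' (hp1 h))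
        constructor
        · rintro ⟨e, he, rfl⟩
          have hex0 : e x = 0 := Finsupp.notMem_support_iff.mp
            (fun h => hxA' (hp2 (he h)))
          have hre : p.1 + Finsupp.single x k + e = (p.1 + e) + Finsupp.single x k := by
            exact add_right_comm _ _ _
          have hpe : (p.1 + e) x = 0 := by
            rw [Finsupp.add_apply, hp1x, hex0]
          constructor
          · rw [hre, Finsupp.add_apply, hpe, Finsupp.single_eq_same, zero_add]
          · rw [hre, erase_add_single_eq x _ hpe]
            exact ⟨e, he, rfl⟩
        · rintro ⟨hmx, e, he, hee⟩
          refine ⟨e, he, ?_⟩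
          have := Finsupp.erase_add_single x m
          rw [hee, hmx] at this
          rw [← this]
          exact add_right_comm p.1 e (Finsupp.single x k)
      have lem2 : ∀ p ∈ Lk k0, ∀ m : Fin n →₀ ℕ,
          m ∈ pieceSet (p.1 + Finsupp.single x k0, p.2 ∪ {x}) ↔
            (k0 ≤ m x ∧ Finsupp.erase x m ∈ pieceSet p) := by
        intro p hp m
        have hp2 := ((hLk k0).1 p hp).2.1
        have hp1 := ((hLk k0).1 p hp).2.2
        have hp1x : p.1 x = 0 := Finsupp.notMem_support_iff.mp (fun h => hxA' (hp1 h))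
        constructor
        · rintro ⟨e, he, rfl⟩
          have hese : (Finsupp.erase x e).support ⊆ p.2 := by
            intro i hi
            rw [Finsupp.support_erase, Finset.mem_erase] at hi
            rcases Finset.mem_union.mp (he hi.2) with h | h
            · exact h
            · exact absurd (Finset.mem_singleton.mp h) hi.1
          have heq : p.1 + Finsupp.single x k0 + e
              = (p.1 + Finsupp.erase x e) + Finsupp.single x (k0 + e x) := by
            ext i
            rcases eq_or_ne i x with rfl | h
            · simp only [Finsupp.add_apply, Finsupp.single_eq_same, Finsupp.erase_same]
              omega
            · simp only [Finsupp.add_apply, Finsupp.single_eq_of_ne' (Ne.symm h),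
                Finsupp.erase_apply, if_neg h, add_zero]
          have hpe : (p.1 + Finsupp.erase x e) x = 0 := by
            simp [Finsupp.add_apply, hp1x, Finsupp.erase_same]
          constructor
          · rw [heq, Finsupp.add_apply, hpe, Finsupp.single_eq_same, zero_add]; omega
          · rw [heq, erase_add_single_eq x _ hpe]
            exact ⟨Finsupp.erase x e, hese, rfl⟩
        · rintro ⟨hmx, e, he, hee⟩
          have hex0 : e x = 0 := Finsupp.notMem_support_iff.mp
            (fun h => hxA' (hp2 (he h)))
          refine ⟨e + Finsupp.single x (m x - k0), ?_, ?_⟩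
          · refine (Finsupp.support_add).trans (Finset.union_subset ?_ ?_)
            · exact he.trans Finset.subset_union_left
            · exact Finsupp.support_single_subset.trans Finset.subset_union_right
          · ext i
            have hi := DFunLike.congr_fun hee i
            rcases eq_or_ne i x with rfl | h
            · simp only [Finsupp.add_apply, Finsupp.single_eq_same, hp1x, hex0]
              omega
            · rw [Finsupp.erase_apply, if_neg h] at hi
              simp only [Finsupp.add_apply, Finsupp.single_eq_of_ne' (Ne.symm h),
                add_zero, zero_add]
              rw [hi, Finsupp.add_apply]
      refine ⟨((List.range k0).flatMap blk) ++ Ltail, ?_, ?_, ?_⟩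
      · -- conditions on the pieces
        intro q hq
        rcases List.mem_append.mp hq with hq | hq
        · obtain ⟨k, hk, hq⟩ := List.mem_flatMap.mp hq
          obtain ⟨p, hp, rfl⟩ := List.mem_map.mp hq
          obtain ⟨h1, h2, h3⟩ := (hLk k).1 p hp
          exact ⟨h1, h2.trans hA'A, (Finsupp.support_add).trans (Finset.union_subset
            (h3.trans hA'A) (Finsupp.support_single_subset.trans (by simp [hx])))⟩
        · obtain ⟨p, hp, rfl⟩ := List.mem_map.mp hq
          obtain ⟨h1, h2, h3⟩ := (hLk k0).1 p hp
          refine ⟨⟨x, Finset.mem_union_right _ (Finset.mem_singleton_self x)⟩,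
            Finset.union_subset (h2.trans hA'A) (by simp [hx]),
            (Finsupp.support_add).trans (Finset.union_subset
            (h3.trans hA'A) (Finsupp.support_single_subset.trans (by simp [hx])))⟩
      · -- pairwise disjointness
        rw [List.pairwise_append]
        refine ⟨?_, ?_, ?_⟩
        · rw [List.pairwise_flatMap]
          constructor
          · intro k hk
            rw [List.pairwise_map]
            refine List.Pairwise.imp_of_mem ?_ ((hLk k).2.1)
            intro p q hp hq hpq
            refine Set.disjoint_left.mpr ?_
            intro m hm1 hm2
            exact (Set.disjoint_left.mp hpq) ((lem1 k p hp m).mp hm1).2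
              ((lem1 k q hq m).mp hm2).2
          · refine List.Pairwise.imp ?_ (List.pairwise_lt_range (n := k0))
            intro k l hkl a ha b hb
            obtain ⟨p, hp, rfl⟩ := List.mem_map.mp ha
            obtain ⟨q, hq, rfl⟩ := List.mem_map.mp hb
            refine Set.disjoint_left.mpr ?_
            intro m hm1 hm2
            have e1 := ((lem1 k p hp m).mp hm1).1
            have e2 := ((lem1 l q hq m).mp hm2).1
            omega
        · rw [List.pairwise_map]
          refine List.Pairwise.imp_of_mem ?_ ((hLk k0).2.1)
          intro p q hp hq hpq
          refine Set.disjoint_left.mpr ?_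
          intro m hm1 hm2
          exact (Set.disjoint_left.mp hpq) ((lem2 p hp m).mp hm1).2
            ((lem2 q hq m).mp hm2).2
        · intro a ha b hb
          obtain ⟨k, hk, ha⟩ := List.mem_flatMap.mp ha
          obtain ⟨p, hp, rfl⟩ := List.mem_map.mp ha
          obtain ⟨q, hq, rfl⟩ := List.mem_map.mp hb
          refine Set.disjoint_left.mpr ?_
          intro m hm1 hm2
          have e1 := ((lem1 k p hp m).mp hm1).1
          have e2 := ((lem2 q hq m).mp hm2).1
          have := List.mem_range.mp hk
          omega
      · -- coverage
        intro m
        constructor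
        · intro hm
          have hmsupp := hsupp m hm
          have hm' : Finsupp.erase x m ∈ Nset (m x) := by
            constructor
            · rw [Finsupp.support_erase]
              exact Finset.erase_subset_erase x hmsupp
            · rw [Finsupp.erase_add_single]
              exact hm
          by_cases hcase : m x < k0
          · obtain ⟨p, hp, hpe⟩ := ((hLk (m x)).2.2 _).mp hm'
            refine ⟨(p.1 + Finsupp.single x (m x), p.2), ?_, ?_⟩
            · exact List.mem_append_left _ (List.mem_flatMap.mpr
                ⟨m x, List.mem_range.mpr hcase, List.mem_map.mpr ⟨p, hp, rfl⟩⟩)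
            · exact (lem1 (m x) p hp m).mpr ⟨rfl, hpe⟩
          · push_neg at hcase
            have hNk0 : Finsupp.erase x m ∈ Nset k0 :=
              hstab k0 le_rfl (Set.mem_iUnion.mpr ⟨m x, hm'⟩)
            obtain ⟨p, hp, hpe⟩ := ((hLk k0).2.2 _).mp hNk0
            refine ⟨(p.1 + Finsupp.single x k0, p.2 ∪ {x}), ?_, ?_⟩
            · exact List.mem_append_right _ (List.mem_map.mpr ⟨p, hp, rfl⟩)
            · exact (lem2 p hp m).mpr ⟨hcase, hpe⟩
        · rintro ⟨q, hq, hmq⟩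
          rcases List.mem_append.mp hq with hq | hq
          · obtain ⟨k, hk, hq⟩ := List.mem_flatMap.mp hq
            obtain ⟨p, hp, rfl⟩ := List.mem_map.mp hq
            obtain ⟨hmx, he⟩ := (lem1 k p hp m).mp hmq
            have h2 : Finsupp.erase x m ∈ Nset k := ((hLk k).2.2 _).mpr ⟨p, hp, he⟩
            have h3 := h2.2
            rw [← hmx, Finsupp.erase_add_single] at h3
            exact h3
          · obtain ⟨p, hp, rfl⟩ := List.mem_map.mp hq
            obtain ⟨hmx, he⟩ := (lem2 p hp m).mp hmq
            have h2 : Finsupp.erase x m ∈ Nset (m x) :=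
              hmono hmx (((hLk k0).2.2 _).mpr ⟨p, hp, he⟩)
            have h3 := h2.2
            rw [Finsupp.erase_add_single] at h3
            exact h3

end Stmt5Aux

namespace Stmt5Aux

variable {K : Type*} [Field K] {n : ℕ}

/-- The set of exponent vectors of monomials belonging to `I`. -/
def Mset (I : Ideal (MvPolynomial (Fin n) K)) : Set (Fin n →₀ ℕ) :=
  {m | monomial m (1 : K) ∈ I}

lemma support_subset_of_mem_span (S : Set (Fin n →₀ ℕ)) (p : MvPolynomial (Fin n) K)
    (hp : p ∈ Submodule.span K ((fun m => (monomial m (1 : K))) '' S)) :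
    ↑p.support ⊆ S := by
  classical
  induction hp using Submodule.span_induction with
  | mem x hx =>
    obtain ⟨m, hm, rfl⟩ := hx
    intro a ha
    rw [Finset.mem_coe, MvPolynomial.support_monomial] at ha
    simp only [one_ne_zero, if_false] at ha
    rwa [Finset.mem_singleton.mp ha]
  | zero => simp
  | add x y hx hy ihx ihy =>
    intro a ha
    rcases Finset.mem_union.mp (MvPolynomial.support_add (Finset.mem_coe.mp ha)) with h | h
    · exact ihx (Finset.mem_coe.mpr h)
    · exact ihy (Finset.mem_coe.mpr h)
  | smul c x hx ih =>
    intro a ha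
    exact ih (Finset.mem_coe.mpr (MvPolynomial.support_smul (Finset.mem_coe.mp ha)))

lemma disjoint_span_mono {S T : Set (Fin n →₀ ℕ)} (h : Disjoint S T) :
    Disjoint (Submodule.span K ((fun m => (monomial m (1 : K))) '' S))
      (Submodule.span K ((fun m => (monomial m (1 : K))) '' T)) := by
  rw [Submodule.disjoint_def]
  intro p h1 h2
  by_contra hp
  obtain ⟨m, hm⟩ := Finset.nonempty_iff_ne_empty.mpr
    (fun he => hp (MvPolynomial.support_eq_empty.mp he))
  exact Set.disjoint_left.mp h (support_subset_of_mem_span S p h1 hm)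
    (support_subset_of_mem_span T p h2 hm)

lemma restrictScalars_eq_span (I : Ideal (MvPolynomial (Fin n) K)) (hI : IsMonomialIdeal I) :
    Submodule.restrictScalars K I
      = Submodule.span K ((fun m => (monomial m (1 : K))) '' Mset I) := by
  set W := Submodule.span K ((fun m => (monomial m (1 : K))) '' Mset I) with hW
  have hmul : ∀ (d : Fin n →₀ ℕ) (q : MvPolynomial (Fin n) K), q ∈ W →
      monomial d (1 : K) * q ∈ W := by
    intro d q hq
    induction hq using Submodule.span_induction with
    | mem y hy =>
      obtain ⟨m, hm, rfl⟩ := hy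
      rw [monomial_mul, one_mul]
      exact Submodule.subset_span ⟨d + m, by
        have := I.mul_mem_left (monomial d (1 : K)) hm
        rwa [monomial_mul, one_mul] at this, rfl⟩
    | zero => rw [mul_zero]; exact zero_mem W
    | add y z hy hz ihy ihz => rw [mul_add]; exact add_mem ihy ihz
    | smul c y hy ih => rw [mul_smul_comm]; exact Submodule.smul_mem W c ih
  have hideal : ∀ (c q : MvPolynomial (Fin n) K), q ∈ W → c * q ∈ W := by
    intro c q hq
    rw [← support_sum_monomial_coeff c, Finset.sum_mul]
    apply Submodule.sum_mem
    intro v hv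
    have h1 : monomial v (coeff v c) = (coeff v c) • monomial v (1 : K) := by
      rw [MvPolynomial.smul_monomial, smul_eq_mul, mul_one]
    rw [h1, smul_mul_assoc]
    exact Submodule.smul_mem W _ (hmul v q hq)
  apply le_antisymm
  · intro p hp
    rw [Submodule.restrictScalars_mem, hI] at hp
    induction hp using Submodule.span_induction with
    | mem y hy =>
      obtain ⟨d, hd, rfl⟩ := hy
      exact Submodule.subset_span ⟨d, hd, rfl⟩
    | zero => exact zero_mem W
    | add y z hy hz ihy ihz => exact add_mem ihy ihz
    | smul c y hy ih =>
      rw [smul_eq_mul]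
      exact hideal c y ih
  · rw [hW, Submodule.span_le]
    rintro p ⟨m, hm, rfl⟩
    exact hm

lemma exists_minGen_le (I : Ideal (MvPolynomial (Fin n) K)) {m : Fin n →₀ ℕ}
    (hm : m ∈ Mset I) : ∃ g ∈ minGens I, g ≤ m := by
  obtain ⟨g, hle, hgM, hmin⟩ := exists_min_below (Mset I) m hm
  exact ⟨g, ⟨hgM, fun e hle' heI => hmin e heI hle'⟩, hle⟩

lemma gcdExp_le (I : Ideal (MvPolynomial (Fin n) K)) {g : Fin n →₀ ℕ}
    (hg : g ∈ minGens I) : gcdExp I ≤ g := by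
  rw [Finsupp.le_def]
  intro i
  have : (gcdExp I) i = sInf {k | ∃ d ∈ minGens I, d i = k} := by
    rw [gcdExp, Finsupp.ofSupportFinite_coe]
  rw [this]
  exact Nat.sInf_le ⟨g, hg, rfl⟩

lemma mem_Mset_colonGcd_iff (I : Ideal (MvPolynomial (Fin n) K)) (e : Fin n →₀ ℕ) :
    e ∈ Mset (colonGcd I) ↔ gcdExp I + e ∈ Mset I := by
  show monomial e (1 : K) ∈ colonGcd I ↔ monomial (gcdExp I + e) (1 : K) ∈ I
  rw [colonGcd]
  constructor
  · intro h
    have h2 := Submodule.mem_colon.mp h (monomial (gcdExp I) (1 : K))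
      (Ideal.subset_span (Set.mem_singleton _))
    rw [smul_eq_mul, monomial_mul, one_mul, add_comm] at h2
    exact h2
  · intro h
    apply Submodule.mem_colon.mpr
    intro p hp
    obtain ⟨a, ha⟩ := Ideal.mem_span_singleton'.mp hp
    rw [smul_eq_mul, ← ha, mul_left_comm, monomial_mul, one_mul, add_comm e]
    exact I.mul_mem_left a h

end Stmt5Aux

namespace Stmt5Aux

variable {K : Type*} [Field K] {n : ℕ}

lemma Mset_add_mem (I : Ideal (MvPolynomial (Fin n) K)) {m : Fin n →₀ ℕ}
    (hm : m ∈ Mset I) (c : Fin n →₀ ℕ) : c + m ∈ Mset I := by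
  have := I.mul_mem_left (monomial c (1 : K)) hm
  rwa [monomial_mul, one_mul] at this

lemma stanleySpace_eq (p : (Fin n →₀ ℕ) × Finset (Fin n)) :
    stanleySpace K p.1 p.2
      = Submodule.span K ((fun m => (monomial m (1 : K))) '' pieceSet p) := by
  rw [stanleySpace]
  congr 1
  ext q
  constructor
  · rintro ⟨e, he, rfl⟩
    exact ⟨p.1 + e, ⟨e, Finset.coe_subset.mp he, rfl⟩, rfl⟩
  · rintro ⟨m, ⟨e, he, rfl⟩, rfl⟩
    exact ⟨e, Finset.coe_subset.mpr he, rfl⟩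

end Stmt5Aux

open Stmt5Aux

/-- For a non-principal monomial ideal `I ⊆ K[x_1,…,x_n]`,
`sdepth(I) ≥ n - c(I) + 1`. -/
theorem stmt5 {K : Type*} [Field K] {n : ℕ} (I : Ideal (MvPolynomial (Fin n) K))
    (hI : IsMonomialIdeal I) (hnp : ¬ I.IsPrincipal) :
    n - numSupp I + 1 ≤ sdepthIdeal I := by
  classical
  set v := gcdExp I with hv
  set I' := colonGcd I with hI'
  set A : Finset (Fin n) := Finset.univ.filter (fun i => ∃ d ∈ minGens I', d i ≠ 0) with hA
  set B : Finset (Fin n) := Aᶜ with hB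
  have hM'iff : ∀ e, e ∈ Mset I' ↔ v + e ∈ Mset I := mem_Mset_colonGcd_iff I
  have hM'up : ∀ {m : Fin n →₀ ℕ}, m ∈ Mset I' → ∀ c, c + m ∈ Mset I' := by
    intro m hm c
    rw [hM'iff] at hm ⊢
    have h2 := Mset_add_mem I hm c
    rwa [add_left_comm] at h2
  have hIbot : I ≠ ⊥ := by
    intro h
    apply hnp
    rw [h]
    infer_instance
  have hMne : (Mset I).Nonempty := by
    by_contra h
    have hemp : Mset I = ∅ := Set.not_nonempty_iff_eq_empty.mp h
    apply hIbot
    have hempty : {p | ∃ d : Fin n →₀ ℕ, monomial d (1:K) ∈ I ∧ p = monomial d (1:K)} = ∅ := by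
      ext p
      simp only [Set.mem_empty_iff_false, iff_false, Set.mem_setOf_eq, not_exists]
      rintro d ⟨hd, rfl⟩
      have : d ∈ Mset I := hd
      rw [hemp] at this
      exact this
    rw [hI, hempty, Ideal.span_empty]
  have hvle : ∀ m ∈ Mset I, v ≤ m := by
    intro m hm
    obtain ⟨g, hg, hgle⟩ := exists_minGen_le I hm
    exact (gcdExp_le I hg).trans hgle
  have hMiff : ∀ m, m ∈ Mset I ↔ (v ≤ m ∧ m - v ∈ Mset I') := by
    intro m
    constructor
    · intro hm
      have h1 := hvle m hm
      refine ⟨h1, ?_⟩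
      rw [hM'iff]
      rwa [add_tsub_cancel_of_le h1]
    · rintro ⟨h1, h2⟩
      rw [hM'iff] at h2
      rwa [add_tsub_cancel_of_le h1] at h2
  have h0 : (0 : Fin n →₀ ℕ) ∉ Mset I' := by
    intro h0
    rw [hM'iff, add_zero] at h0
    apply hnp
    refine ⟨⟨monomial v (1:K), ?_⟩⟩
    rw [Ideal.submodule_span_eq]
    apply le_antisymm
    · conv_lhs => rw [hI]
      rw [Ideal.span_le]
      rintro p ⟨d, hd, rfl⟩
      rw [SetLike.mem_coe, Ideal.mem_span_singleton']
      refine ⟨monomial (d - v) (1:K), ?_⟩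
      rw [monomial_mul, one_mul, tsub_add_cancel_of_le (hvle d hd)]
    · rw [Ideal.span_le, Set.singleton_subset_iff]
      exact h0
  have hAne : A.Nonempty := by
    obtain ⟨m, hm⟩ := hMne
    have hm' : m - v ∈ Mset I' := ((hMiff m).mp hm).2
    obtain ⟨g, hg, _⟩ := exists_minGen_le I' hm'
    have hgne : g ≠ 0 := by rintro rfl; exact h0 hg.1
    obtain ⟨i, hi⟩ := Finsupp.ne_iff.mp hgne
    rw [Finsupp.coe_zero, Pi.zero_apply] at hi
    refine ⟨i, ?_⟩
    rw [hA, Finset.mem_filter]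
    exact ⟨Finset.mem_univ i, g, hg, hi⟩
  have hgsupp : ∀ g ∈ minGens I', g.support ⊆ A := by
    intro g hg i hi
    rw [hA, Finset.mem_filter]
    exact ⟨Finset.mem_univ i, g, hg, Finsupp.mem_support_iff.mp hi⟩
  have hrestrict : ∀ m ∈ Mset I', Finsupp.filter (fun i => i ∈ A) m ∈ Mset I' := by
    intro m hm
    obtain ⟨g, hg, hgle⟩ := exists_minGen_le I' hm
    have hgle' : g ≤ Finsupp.filter (fun i => i ∈ A) m := by
      rw [Finsupp.le_def]
      intro i
      rw [Finsupp.filter_apply]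
      by_cases hiA : i ∈ A
      · rw [if_pos hiA]
        exact Finsupp.le_def.mp hgle i
      · rw [if_neg hiA]
        have : i ∉ g.support := fun h => hiA (hgsupp g hg h)
        rw [Finsupp.notMem_support_iff.mp this]
    have h2 := hM'up (show g ∈ Mset I' from hg.1) (Finsupp.filter (fun i => i ∈ A) m - g)
    rwa [tsub_add_cancel_of_le hgle'] at h2
  -- partition of the A-supported part of Mset I'
  obtain ⟨L, hLcond, hLpw, hLcov⟩ := partition_exists A.card A le_rfl hAne
      (Mset I' ∩ {m | m.support ⊆ A}) (fun m hm => hm.2)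
      (fun m hm c hc => ⟨hM'up hm.1 c,
        (Finsupp.support_add).trans (Finset.union_subset hc hm.2)⟩)
  set L' : List ((Fin n →₀ ℕ) × Finset (Fin n)) := L.map (fun p => (v + p.1, p.2 ∪ B))
    with hL'
  have hfeq : ∀ u : Fin n →₀ ℕ, u.support ⊆ A → Finsupp.filter (fun i => i ∈ A) u = u := by
    intro u hu
    ext i
    rw [Finsupp.filter_apply]
    by_cases hiA : i ∈ A
    · rw [if_pos hiA]
    · rw [if_neg hiA]
      exact (Finsupp.notMem_support_iff.mp (fun h => hiA (hu h))).symm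
  -- coverage
  have hcov : ∀ m, m ∈ Mset I ↔ ∃ q ∈ L', m ∈ pieceSet q := by
    intro m
    constructor
    · intro hm
      obtain ⟨h1, h2⟩ := (hMiff m).mp hm
      set mA := Finsupp.filter (fun i => i ∈ A) (m - v) with hmA
      set mB := Finsupp.filter (fun i => ¬ i ∈ A) (m - v) with hmB
      have hmAmem : mA ∈ Mset I' ∩ {m | m.support ⊆ A} := by
        refine ⟨hrestrict _ h2, ?_⟩
        intro i hi
        rw [hmA, Finsupp.support_filter, Finset.mem_filter] at hi
        exact hi.2
      obtain ⟨p, hp, e, he, heq⟩ := (hLcov mA).mp hmAmem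
      refine ⟨(v + p.1, p.2 ∪ B), List.mem_map.mpr ⟨p, hp, rfl⟩, e + mB, ?_, ?_⟩
      · refine (Finsupp.support_add).trans (Finset.union_subset ?_ ?_)
        · exact he.trans Finset.subset_union_left
        · refine Finset.Subset.trans ?_ Finset.subset_union_right
          intro i hi
          rw [hmB, Finsupp.support_filter, Finset.mem_filter] at hi
          rw [hB, Finset.mem_compl]
          exact hi.2
      · have hsum : p.1 + e + mB = m - v := by
          rw [← heq, hmA, hmB]
          exact Finsupp.filter_pos_add_filter_neg _ _
        have : v + p.1 + (e + mB) = v + (m - v) := by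
          rw [add_assoc, ← add_assoc p.1, hsum]
        rw [this, add_tsub_cancel_of_le h1]
    · rintro ⟨q, hq, hmq⟩
      obtain ⟨p, hp, rfl⟩ := List.mem_map.mp hq
      obtain ⟨e, he, rfl⟩ := hmq
      have hp1 : p.1 ∈ Mset I' := ((hLcov p.1).mpr ⟨p, hp, self_mem_pieceSet p⟩).1
      have hpe : p.1 + e ∈ Mset I' := by
        have := hM'up hp1 e
        rwa [add_comm] at this
      have := (hM'iff (p.1 + e)).mp hpe
      rwa [← add_assoc] at this
  -- pairwise disjointness
  have hpw : L'.Pairwise (fun p q => Disjoint (pieceSet p) (pieceSet q)) := by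
    rw [hL', List.pairwise_map]
    refine List.Pairwise.imp_of_mem ?_ hLpw
    intro p q hp hq hpq
    refine Set.disjoint_left.mpr ?_
    rintro m ⟨e, he, rfl⟩ ⟨f, hf, hEq⟩
    have hp1A : p.1.support ⊆ A := (hLcond p hp).2.2
    have hq1A : q.1.support ⊆ A := (hLcond q hq).2.2
    have hfiltsub : ∀ (Z : Finset (Fin n)) (e : Fin n →₀ ℕ), Z ⊆ A → e.support ⊆ Z ∪ B →
        (Finsupp.filter (fun i => i ∈ A) e).support ⊆ Z := by
      intro Z e hZ hsub i hi
      rw [Finsupp.support_filter, Finset.mem_filter] at hi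
      rcases Finset.mem_union.mp (hsub hi.1) with h | h
      · exact h
      · rw [hB, Finset.mem_compl] at h
        exact absurd hi.2 h
    have hkey := congrArg (Finsupp.filter (fun i => i ∈ A)) hEq
    rw [Finsupp.filter_add, Finsupp.filter_add, Finsupp.filter_add, Finsupp.filter_add,
      hfeq p.1 hp1A, hfeq q.1 hq1A] at hkey
    rw [add_assoc, add_assoc] at hkey
    have hkey2 : p.1 + Finsupp.filter (fun i => i ∈ A) e
        = q.1 + Finsupp.filter (fun i => i ∈ A) f := add_left_cancel hkey
    have hmem1 : p.1 + Finsupp.filter (fun i => i ∈ A) e ∈ pieceSet p :=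
      ⟨_, hfiltsub p.2 e (hLcond p hp).2.1 he, rfl⟩
    have hmem2 : p.1 + Finsupp.filter (fun i => i ∈ A) e ∈ pieceSet q := by
      rw [hkey2]
      exact ⟨_, hfiltsub q.2 f (hLcond q hq).2.1 hf, rfl⟩
    exact Set.disjoint_left.mp hpq hmem1 hmem2
  -- cardinality bound
  have hnumSupp : numSupp I = A.card := by
    have hset : {i : Fin n | ∃ d ∈ minGens (colonGcd I), d i ≠ 0} = ↑A := by
      ext i
      rw [hA]
      simp [← hI']
    rw [numSupp, hset, Set.ncard_coe_finset]
  have hcardA : A.card ≤ n := by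
    have := Finset.card_le_card (Finset.subset_univ A)
    simpa using this
  have hcard : ∀ q ∈ L', n - numSupp I + 1 ≤ q.2.card := by
    intro q hq
    obtain ⟨p, hp, rfl⟩ := List.mem_map.mp hq
    have hdisjAB : Disjoint p.2 B := by
      rw [hB]
      exact (disjoint_compl_right).mono_left (hLcond p hp).2.1
    have h1 : (p.2 ∪ B).card = p.2.card + B.card := Finset.card_union_of_disjoint hdisjAB
    have h2 : B.card = n - A.card := by
      rw [hB, Finset.card_compl, Fintype.card_fin]
    have h3 : 1 ≤ p.2.card := Finset.card_pos.mpr (hLcond p hp).1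
    rw [hnumSupp]
    simp only [h1, h2]
    omega
  -- assemble the Stanley decomposition
  set r := L'.length with hr
  set dfun : Fin r → (Fin n →₀ ℕ) := fun i => (L'.get i).1 with hdfun
  set Zfun : Fin r → Finset (Fin n) := fun i => (L'.get i).2 with hZfun
  have hdisj : ∀ i j : Fin r, j ≠ i →
      Disjoint (pieceSet (L'.get i)) (pieceSet (L'.get j)) := by
    intro i j hij
    rcases lt_or_gt_of_ne hij with h | h
    · exact (List.pairwise_iff_get.mp hpw j i h).symm
    · exact List.pairwise_iff_get.mp hpw i j h
  have hstan : ∀ i : Fin r, stanleySpace K (dfun i) (Zfun i)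
      = Submodule.span K ((fun m => (monomial m (1 : K))) '' pieceSet (L'.get i)) := by
    intro i
    exact stanleySpace_eq (L'.get i)
  have hdecomp : IsStanleyDecomp (Submodule.restrictScalars K I) r dfun Zfun := by
    constructor
    · rw [iSupIndep_def]
      intro i
      have h2 : (⨆ j, ⨆ (_ : j ≠ i), stanleySpace K (dfun j) (Zfun j))
          ≤ Submodule.span K ((fun m => (monomial m (1 : K))) ''
            ⋃ (j : Fin r) (_ : j ≠ i), pieceSet (L'.get j)) := by
        refine iSup₂_le ?_
        intro j hj
        rw [hstan j]
        exact Submodule.span_mono (Set.image_mono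
          (Set.subset_iUnion₂ (s := fun (j : Fin r) (_ : j ≠ i) => pieceSet (L'.get j)) j hj))
      refine Disjoint.mono_right h2 ?_
      rw [hstan i]
      apply disjoint_span_mono
      refine Set.disjoint_left.mpr ?_
      intro m hm1 hm2
      obtain ⟨j, hj, hmj⟩ := Set.mem_iUnion₂.mp hm2
      exact Set.disjoint_left.mp (hdisj i j hj) hm1 hmj
    · have hU : (⋃ i : Fin r, pieceSet (L'.get i)) = Mset I := by
        ext m
        rw [Set.mem_iUnion]
        constructor
        · rintro ⟨i, hi⟩
          exact (hcov m).mpr ⟨L'.get i, List.get_mem L' i, hi⟩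
        · intro hm
          obtain ⟨q, hq, hmq⟩ := (hcov m).mp hm
          obtain ⟨i, rfl⟩ := List.mem_iff_get.mp hq
          exact ⟨i, hmq⟩
      calc (⨆ i, stanleySpace K (dfun i) (Zfun i))
          = ⨆ i : Fin r, Submodule.span K
              ((fun m => (monomial m (1 : K))) '' pieceSet (L'.get i)) := by
            exact iSup_congr hstan
        _ = Submodule.span K ((fun m => (monomial m (1 : K))) ''
              ⋃ i : Fin r, pieceSet (L'.get i)) := by
            rw [Set.image_iUnion, Submodule.span_iUnion]
        _ = Submodule.restrictScalars K I := by
            rw [hU, ← restrictScalars_eq_span I hI]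
  -- conclude
  rw [sdepthIdeal, sdepth]
  apply le_csSup
  · refine ⟨n, ?_⟩
    rintro k ⟨r', d', Z', hdec, hk⟩
    rcases Nat.eq_zero_or_pos r' with rfl | hrpos
    · exfalso
      have hsup := hdec.2
      rw [iSup_of_empty] at hsup
      apply hIbot
      have : Submodule.restrictScalars K I = ⊥ := hsup.symm
      rwa [Submodule.restrictScalars_eq_bot_iff] at this
    · have i0 : Fin r' := ⟨0, hrpos⟩
      refine (hk i0).trans ?_
      have := Finset.card_le_card (Finset.subset_univ (Z' i0))
      simpa using this
  · exact ⟨r, dfun, Zfun, hdecomp, fun i => hcard (L'.get i) (List.get_mem L' i)⟩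
end

section
/- Let I ⊆ S = K[x_1,…,x_n] be a monomial ideal which is not principal. Then sdepth(S/I) ≥ n − g(I), where g(I) is the number of minimal monomial generators of I. -/
open MvPolynomial

namespace Stmt6
variable {n : ℕ}

/-- The "box" of exponent vectors `c + e` with `supp e ⊆ Z`. -/
def box (c : Fin n →₀ ℕ) (Z : Finset (Fin n)) : Set (Fin n →₀ ℕ) :=
  {e | c ≤ e ∧ ∀ i ∉ Z, e i = c i}

lemma self_mem_box (c : Fin n →₀ ℕ) (Z : Finset (Fin n)) : c ∈ box c Z :=
  ⟨le_rfl, fun _ _ => rfl⟩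

/-- exponents not above any element of `G`. -/
def cmpl (G : Finset (Fin n →₀ ℕ)) : Set (Fin n →₀ ℕ) := {e | ∀ d ∈ G, ¬ d ≤ e}

/-- one piece of the refinement of the box `(c, Z)` after removing `{e | a ≤ e}`. -/
noncomputable def piece (c : Fin n →₀ ℕ) (Z : Finset (Fin n)) (a : Fin n →₀ ℕ) (i : Fin n) (t : ℕ) :
    (Fin n →₀ ℕ) × Finset (Fin n) :=
  (Finsupp.ofSupportFinite
    (fun j => if j = i then t else if j ∈ Z ∧ j < i then max (c j) (a j) else c j)
    (Set.toFinite _), Z.erase i)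

lemma piece_fst_apply (c : Fin n →₀ ℕ) (Z : Finset (Fin n)) (a : Fin n →₀ ℕ) (i : Fin n)
    (t : ℕ) (j : Fin n) :
    (piece c Z a i t).1 j =
      if j = i then t else if j ∈ Z ∧ j < i then max (c j) (a j) else c j := rfl

/-- the refinement of a box `(c,Z)` whose fixed coordinates all exceed `a`. -/
noncomputable def refineB (c : Fin n →₀ ℕ) (Z : Finset (Fin n)) (a : Fin n →₀ ℕ) :
    Finset ((Fin n →₀ ℕ) × Finset (Fin n)) :=
  Z.biUnion fun i => (Finset.Ico (c i) (a i)).image (piece c Z a i)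

lemma box_piece_subset {c : Fin n →₀ ℕ} {Z : Finset (Fin n)} {a : Fin n →₀ ℕ} {i : Fin n}
    {t : ℕ} (hi : i ∈ Z) (ht : t ∈ Finset.Ico (c i) (a i)) :
    box (piece c Z a i t).1 (piece c Z a i t).2 ⊆ box c Z \ {e | a ≤ e} := by
  rintro e ⟨hle, hfix⟩
  obtain ⟨ht1, ht2⟩ := Finset.mem_Ico.mp ht
  have hei : e i = t := by
    have := hfix i (Finset.notMem_erase i Z)
    simpa [piece_fst_apply] using this
  refine ⟨⟨?_, ?_⟩, ?_⟩
  · intro j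
    rcases eq_or_ne j i with rfl | hji
    · simpa [hei] using ht1
    · have := hle j
      rw [piece_fst_apply] at this
      simp only [hji, if_false] at this
      split_ifs at this with h
      · exact le_trans (le_max_left _ _) this
      · exact this
  · intro j hj
    have hji : j ≠ i := fun h => hj (h ▸ hi)
    have := hfix j (fun h => hj (Finset.mem_of_mem_erase h))
    rw [piece_fst_apply] at this
    simp only [hji, if_false] at this
    rwa [if_neg (fun h => hj h.1)] at this
  · intro hae
    exact absurd (hae i) (by rw [hei]; omega)

lemma cover_refineB {c : Fin n →₀ ℕ} {Z : Finset (Fin n)} {a : Fin n →₀ ℕ}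
    (H : ∀ i ∉ Z, a i ≤ c i) :
    box c Z \ {e | a ≤ e} ⊆ ⋃ q ∈ refineB c Z a, box q.1 q.2 := by
  rintro e ⟨⟨hle, hfix⟩, hna⟩
  have hne : ∃ i, e i < a i := by
    by_contra h
    push_neg at h
    exact hna fun i => h i
  classical
  set s : Finset (Fin n) := Finset.univ.filter (fun i => e i < a i) with hs
  have hsne : s.Nonempty := by
    obtain ⟨i, hi⟩ := hne
    exact ⟨i, by simp [hs, hi]⟩
  set i₀ := s.min' hsne with hi₀
  have hi₀s : i₀ ∈ s := s.min'_mem hsne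
  have hi₀lt : e i₀ < a i₀ := by simpa [hs] using hi₀s
  have hi₀Z : i₀ ∈ Z := by
    by_contra h
    have := H i₀ h
    rw [hfix i₀ h] at hi₀lt
    omega
  refine Set.mem_iUnion₂.mpr ⟨piece c Z a i₀ (e i₀), ?_, ?_, ?_⟩
  · refine Finset.mem_biUnion.mpr ⟨i₀, hi₀Z, Finset.mem_image.mpr ⟨e i₀, ?_, rfl⟩⟩
    exact Finset.mem_Ico.mpr ⟨hle i₀, hi₀lt⟩
  · intro j
    rw [piece_fst_apply]
    rcases eq_or_ne j i₀ with rfl | hji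
    · simp
    rw [if_neg hji]
    split_ifs with h
    · refine max_le (hle j) ?_
      by_contra hlt
      push_neg at hlt
      have hjs : j ∈ s := by simp [hs, hlt]
      exact absurd (s.min'_le j hjs) (not_le.mpr h.2)
    · exact hle j
  · intro j hj
    rw [piece_fst_apply]
    rcases eq_or_ne j i₀ with rfl | hji
    · simp
    rw [if_neg hji]
    have hjZ : j ∉ Z := fun h => hj (Finset.mem_erase.mpr ⟨hji, h⟩)
    rw [if_neg (fun h => hjZ h.1)]
    exact hfix j hjZ

lemma disjoint_pieces {c : Fin n →₀ ℕ} {Z : Finset (Fin n)} {a : Fin n →₀ ℕ}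
    {i i' : Fin n} {t t' : ℕ} (hi : i ∈ Z) (hi' : i' ∈ Z)
    (ht : t ∈ Finset.Ico (c i) (a i)) (ht' : t' ∈ Finset.Ico (c i') (a i'))
    (hne : (i, t) ≠ (i', t')) :
    Disjoint (box (piece c Z a i t).1 (piece c Z a i t).2)
      (box (piece c Z a i' t').1 (piece c Z a i' t').2) := by
  rw [Set.disjoint_left]
  rintro e ⟨hle, hfix⟩ ⟨hle', hfix'⟩
  have hei : e i = t := by
    simpa [piece_fst_apply] using hfix i (Finset.notMem_erase i Z)
  have hei' : e i' = t' := by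
    simpa [piece_fst_apply] using hfix' i' (Finset.notMem_erase i' Z)
  rcases lt_trichotomy i i' with h | h | h
  · -- from the second box, e i ≥ max (c i) (a i) ≥ a i, but e i = t < a i
    have := hle' i
    rw [piece_fst_apply, if_neg (ne_of_lt h), if_pos ⟨hi, h⟩] at this
    have := le_trans (le_max_right _ _) this
    rw [hei] at this
    have := (Finset.mem_Ico.mp ht).2
    omega
  · subst h
    have : t = t' := by rw [← hei, hei']
    exact hne (by rw [this])
  · have := hle i'
    rw [piece_fst_apply, if_neg (ne_of_lt h), if_pos ⟨hi', h⟩] at this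
    have := le_trans (le_max_right _ _) this
    rw [hei'] at this
    have := (Finset.mem_Ico.mp ht').2
    omega


open Classical in
/-- Refine one box after removing the upper set of `a`. -/
noncomputable def refineP (a : Fin n →₀ ℕ) (p : (Fin n →₀ ℕ) × Finset (Fin n)) :
    Finset ((Fin n →₀ ℕ) × Finset (Fin n)) :=
  if ∃ i ∉ p.2, p.1 i < a i then {p} else refineB p.1 p.2 a

lemma refineP_subset {a : Fin n →₀ ℕ} {p q : (Fin n →₀ ℕ) × Finset (Fin n)}
    (hq : q ∈ refineP a p) : box q.1 q.2 ⊆ box p.1 p.2 \ {e | a ≤ e} := by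
  rw [refineP] at hq
  split_ifs at hq with h
  · obtain ⟨i, hiZ, hia⟩ := h
    rw [Finset.mem_singleton] at hq
    subst hq
    rintro e ⟨h1, h2⟩
    refine ⟨⟨h1, h2⟩, fun hae => ?_⟩
    have := hae i
    rw [h2 i hiZ] at this
    omega
  · obtain ⟨i, hiZ, hq⟩ := Finset.mem_biUnion.mp hq
    obtain ⟨t, ht, rfl⟩ := Finset.mem_image.mp hq
    exact box_piece_subset hiZ ht

lemma refineP_cover {a : Fin n →₀ ℕ} {p : (Fin n →₀ ℕ) × Finset (Fin n)} :
    box p.1 p.2 \ {e | a ≤ e} ⊆ ⋃ q ∈ refineP a p, box q.1 q.2 := by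
  rw [refineP]
  split_ifs with h
  · intro e he
    exact Set.mem_iUnion₂.mpr ⟨p, Finset.mem_singleton_self p, he.1⟩
  · push_neg at h
    exact cover_refineB h

lemma refineP_disjoint {a : Fin n →₀ ℕ} {p q q' : (Fin n →₀ ℕ) × Finset (Fin n)}
    (hq : q ∈ refineP a p) (hq' : q' ∈ refineP a p) (hne : q ≠ q') :
    Disjoint (box q.1 q.2) (box q'.1 q'.2) := by
  rw [refineP] at hq hq'
  split_ifs at hq hq' with h
  · rw [Finset.mem_singleton] at hq hq'
    exact absurd (hq.trans hq'.symm) hne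
  · obtain ⟨i, hiZ, hq⟩ := Finset.mem_biUnion.mp hq
    obtain ⟨t, ht, rfl⟩ := Finset.mem_image.mp hq
    obtain ⟨i', hiZ', hq'⟩ := Finset.mem_biUnion.mp hq'
    obtain ⟨t', ht', rfl⟩ := Finset.mem_image.mp hq'
    refine disjoint_pieces hiZ hiZ' ht ht' fun hc => hne ?_
    rw [Prod.mk.injEq] at hc
    rw [hc.1, hc.2]

lemma refineP_card {a : Fin n →₀ ℕ} {p q : (Fin n →₀ ℕ) × Finset (Fin n)}
    (hq : q ∈ refineP a p) : p.2.card - 1 ≤ q.2.card := by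
  rw [refineP] at hq
  split_ifs at hq with h
  · rw [Finset.mem_singleton] at hq
    subst hq
    omega
  · obtain ⟨i, hiZ, hq⟩ := Finset.mem_biUnion.mp hq
    obtain ⟨t, ht, rfl⟩ := Finset.mem_image.mp hq
    rw [piece, Finset.card_erase_of_mem hiZ]

lemma cmpl_empty : cmpl (∅ : Finset (Fin n →₀ ℕ)) = Set.univ := by
  ext e; simp [cmpl]

lemma cmpl_insert (a : Fin n →₀ ℕ) (G : Finset (Fin n →₀ ℕ)) :
    cmpl (insert a G) = cmpl G \ {e | a ≤ e} := by
  ext e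
  simp only [cmpl, Set.mem_setOf_eq, Finset.mem_insert, Set.mem_diff]
  constructor
  · intro h
    exact ⟨fun d hd => h d (Or.inr hd), h a (Or.inl rfl)⟩
  · rintro ⟨h1, h2⟩ d (rfl | hd)
    · exact h2
    · exact h1 d hd

theorem exists_partition (G : Finset (Fin n →₀ ℕ)) :
    ∃ P : Finset ((Fin n →₀ ℕ) × Finset (Fin n)),
      ((P : Set ((Fin n →₀ ℕ) × Finset (Fin n))).Pairwise
        fun p q => Disjoint (box p.1 p.2) (box q.1 q.2)) ∧
      (⋃ p ∈ P, box p.1 p.2) = cmpl G ∧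
      ∀ p ∈ P, n - G.card ≤ p.2.card := by
  classical
  induction G using Finset.induction_on with
  | empty =>
    refine ⟨{(0, Finset.univ)}, ?_, ?_, ?_⟩
    · simp
    · rw [cmpl_empty]
      ext e
      simp only [Finset.mem_singleton, Set.mem_iUnion, Set.mem_univ, iff_true]
      exact ⟨(0, Finset.univ), rfl, zero_le, fun i hi => absurd (Finset.mem_univ i) hi⟩
    · intro p hp
      rw [Finset.mem_singleton] at hp
      subst hp
      simp
  | @insert a G ha IH =>
    obtain ⟨P, hdisj, hcov, hcard⟩ := IH
    refine ⟨P.biUnion (refineP a), ?_, ?_, ?_⟩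
    · intro q hq q' hq' hne
      rw [Finset.coe_biUnion, Set.mem_iUnion₂] at hq hq'
      obtain ⟨p, hp, hq⟩ := hq
      obtain ⟨p', hp', hq'⟩ := hq'
      rcases eq_or_ne p p' with rfl | hpp
      · exact refineP_disjoint hq hq' hne
      · exact Set.disjoint_of_subset
          ((refineP_subset hq).trans (Set.diff_subset))
          ((refineP_subset hq').trans (Set.diff_subset))
          (hdisj hp hp' hpp)
    · rw [cmpl_insert, ← hcov]
      ext e
      simp only [Finset.mem_biUnion, Set.mem_iUnion, Set.mem_diff, Set.mem_setOf_eq]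
      constructor
      · rintro ⟨q, ⟨p, hp, hq⟩, he⟩
        obtain ⟨he1, he2⟩ := refineP_subset hq he
        exact ⟨⟨p, hp, he1⟩, he2⟩
      · rintro ⟨⟨p, hp, he1⟩, he2⟩
        have := refineP_cover (a := a) (p := p) ⟨he1, he2⟩
        rw [Set.mem_iUnion₂] at this
        obtain ⟨q, hq, he⟩ := this
        exact ⟨q, ⟨p, hp, hq⟩, he⟩
    · intro q hq
      obtain ⟨p, hp, hq⟩ := Finset.mem_biUnion.mp hq
      have h1 := hcard p hp
      have h2 := refineP_card hq
      rw [Finset.card_insert_of_notMem ha]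
      omega



variable {K : Type*} [Field K]

lemma monomial_mem_of_le {I : Ideal (MvPolynomial (Fin n) K)} {d e : Fin n →₀ ℕ}
    (h : monomial d (1 : K) ∈ I) (hde : d ≤ e) : monomial e (1 : K) ∈ I := by
  have : monomial e (1 : K) = monomial (e - d) 1 * monomial d 1 := by
    rw [monomial_mul, one_mul, tsub_add_cancel_of_le hde]
  rw [this]
  exact Ideal.mul_mem_left _ _ h

lemma exists_minGen_le {I : Ideal (MvPolynomial (Fin n) K)} {e : Fin n →₀ ℕ}
    (h : monomial e (1 : K) ∈ I) : ∃ d ∈ minGens I, d ≤ e := by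
  suffices H : ∀ N, ∀ e : Fin n →₀ ℕ, (∑ i, e i) = N → monomial e (1 : K) ∈ I →
      ∃ d ∈ minGens I, d ≤ e from H _ e rfl h
  intro N
  induction N using Nat.strong_induction_on with
  | _ N IH =>
    intro e hNe hmem
    by_cases hmin : ∀ e', e' ≤ e → monomial e' (1 : K) ∈ I → e' = e
    · exact ⟨e, ⟨hmem, hmin⟩, le_rfl⟩
    · push_neg at hmin
      obtain ⟨e', hle, hmem', hne⟩ := hmin
      have hlt : (∑ i, e' i) < ∑ i, e i := by
        obtain ⟨i, hi⟩ : ∃ i, e' i ≠ e i := by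
          by_contra hc
          push_neg at hc
          exact hne (Finsupp.ext hc)
        exact Finset.sum_lt_sum (fun j _ => hle j)
          ⟨i, Finset.mem_univ i, lt_of_le_of_ne (hle i) hi⟩
      obtain ⟨d, hd, hde⟩ := IH _ (hNe ▸ hlt) e' rfl hmem'
      exact ⟨d, hd, hde.trans hle⟩

lemma minGens_finite (I : Ideal (MvPolynomial (Fin n) K)) : (minGens I).Finite := by
  have hA : IsAntichain (· ≤ ·) (minGens I) :=
    fun d hd d' hd' hne hle => hne (hd'.2 d hle hd.1)
  exact hA.finite_of_partiallyWellOrderedOn (Set.isPWO_of_wellQuasiOrderedLE _)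

lemma cmpl_eq (I : Ideal (MvPolynomial (Fin n) K)) :
    cmpl (minGens_finite I).toFinset = {e : Fin n →₀ ℕ | monomial e (1 : K) ∉ I} := by
  ext e
  simp only [cmpl, Set.mem_setOf_eq, Set.Finite.mem_toFinset]
  constructor
  · intro h hmem
    obtain ⟨d, hd, hde⟩ := exists_minGen_le hmem
    exact h d hd hde
  · intro h d hd hde
    exact h (monomial_mem_of_le hd.1 hde)

lemma stanleySpace_eq (d : Fin n →₀ ℕ) (Z : Finset (Fin n)) :
    stanleySpace K d Z = Submodule.span K (⇑(basisMonomials (Fin n) K) '' box d Z) := by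
  unfold stanleySpace
  congr 1
  ext p
  simp only [Set.mem_setOf_eq, Set.mem_image, coe_basisMonomials]
  constructor
  · rintro ⟨e, he, rfl⟩
    refine ⟨d + e, ⟨le_add_right le_rfl, fun i hi => ?_⟩, rfl⟩
    have : e i = 0 := Finsupp.notMem_support_iff.mp fun hc => hi (he hc)
    simp [this]
  · rintro ⟨f, ⟨hle, hfix⟩, rfl⟩
    refine ⟨f - d, fun i hi => ?_, by rw [add_tsub_cancel_of_le hle]⟩
    rw [Finset.mem_coe, Finsupp.mem_support_iff, Finsupp.tsub_apply] at hi
    rw [Finset.mem_coe]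
    by_contra hc
    rw [hfix i hc] at hi
    omega

lemma monomialCompl_eq (I : Ideal (MvPolynomial (Fin n) K)) :
    monomialCompl I = Submodule.span K
      (⇑(basisMonomials (Fin n) K) '' {e : Fin n →₀ ℕ | monomial e (1 : K) ∉ I}) := by
  unfold monomialCompl
  congr 1
  ext p
  simp only [Set.mem_setOf_eq, Set.mem_image, coe_basisMonomials]
  constructor
  · rintro ⟨e, he, rfl⟩
    exact ⟨e, he, rfl⟩
  · rintro ⟨e, he, rfl⟩
    exact ⟨e, he, rfl⟩

lemma disjoint_span_image {s t : Set (Fin n →₀ ℕ)} (h : Disjoint s t) :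
    Disjoint (Submodule.span K (⇑(basisMonomials (Fin n) K) '' s))
      (Submodule.span K (⇑(basisMonomials (Fin n) K) '' t)) := by
  rw [Submodule.disjoint_def]
  intro x hxs hxt
  rw [Module.Basis.mem_span_image] at hxs hxt
  have hsupp : (((basisMonomials (Fin n) K).repr x).support : Set (Fin n →₀ ℕ)) = ∅ := by
    rw [← Set.subset_empty_iff, ← Set.disjoint_iff_inter_eq_empty.mp h]
    exact Set.subset_inter hxs hxt
  have : ((basisMonomials (Fin n) K).repr x) = 0 := by
    rw [← Finsupp.support_eq_empty]
    exact_mod_cast hsupp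
  simpa using congrArg (basisMonomials (Fin n) K).repr.symm this


end Stmt6


/-- For a non-principal monomial ideal `I ⊆ K[x_1,…,x_n]`,
`sdepth(S/I) ≥ n - g(I)`. -/
theorem stmt6 {K : Type*} [Field K] {n : ℕ} (I : Ideal (MvPolynomial (Fin n) K))
    (hI : IsMonomialIdeal I) (hnp : ¬ I.IsPrincipal) :
    n - numGens I ≤ sdepthQuot I := by
  classical
  have h1 : (1 : MvPolynomial (Fin n) K) ∉ I := by
    intro h
    exact hnp ⟨⟨1, (Ideal.eq_top_iff_one I).mpr h |>.trans Ideal.span_singleton_one.symm⟩⟩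
  set b := basisMonomials (Fin n) K with hb
  set G := (Stmt6.minGens_finite I).toFinset with hGdef
  obtain ⟨P, hdisj, hcov, hcard⟩ := Stmt6.exists_partition (n := n) G
  set r := P.card with hr
  set eqv := P.equivFin with heqv
  set dd : Fin r → (Fin n →₀ ℕ) := fun i => (eqv.symm i).1.1 with hdd
  set ZZ : Fin r → Finset (Fin n) := fun i => (eqv.symm i).1.2 with hZZ
  set B : Fin r → Set (Fin n →₀ ℕ) := fun i => Stmt6.box (dd i) (ZZ i) with hB
  have hSS : ∀ i, stanleySpace K (dd i) (ZZ i) = Submodule.span K (⇑b '' B i) :=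
    fun i => Stmt6.stanleySpace_eq _ _
  have hBcov : (⋃ i, B i) = {e : Fin n →₀ ℕ | monomial e (1 : K) ∉ I} := by
    rw [← Stmt6.cmpl_eq I, ← hGdef, ← hcov]
    ext e
    simp only [Set.mem_iUnion]
    constructor
    · rintro ⟨i, he⟩
      exact ⟨(eqv.symm i).1, (eqv.symm i).2, he⟩
    · rintro ⟨p, hp, he⟩
      refine ⟨eqv ⟨p, hp⟩, ?_⟩
      simpa [hB, hdd, hZZ, Equiv.symm_apply_apply] using he
  have hBdisj : ∀ i j, i ≠ j → Disjoint (B i) (B j) := by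
    intro i j hij
    refine hdisj (eqv.symm i).2 (eqv.symm j).2 ?_
    intro h
    exact hij (eqv.symm.injective (Subtype.coe_injective h))
  have hdec : IsStanleyDecomp (monomialCompl I) r dd ZZ := by
    constructor
    · intro i
      show Disjoint (stanleySpace K (dd i) (ZZ i))
        (⨆ (j) (_ : j ≠ i), stanleySpace K (dd j) (ZZ j))
      rw [hSS i]
      have hle : (⨆ (j) (_ : j ≠ i), stanleySpace K (dd j) (ZZ j)) ≤
          Submodule.span K (⇑b '' ⋃ j ∈ {j | j ≠ i}, B j) := by
        refine iSup_le fun j => iSup_le fun hj => ?_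
        rw [hSS j]
        exact Submodule.span_mono (Set.image_mono (Set.subset_biUnion_of_mem hj))
      refine Disjoint.mono_right hle (Stmt6.disjoint_span_image ?_)
      rw [Set.disjoint_left]
      intro e he he'
      obtain ⟨j, hj, hej⟩ := Set.mem_iUnion₂.mp he'
      exact (Set.disjoint_left.mp (hBdisj i j (Ne.symm hj)) he) hej
    · rw [iSup_congr hSS, ← Submodule.span_iUnion, ← Set.image_iUnion, hBcov]
      exact (Stmt6.monomialCompl_eq I).symm
  have hng : numGens I = G.card := by
    rw [numGens, Set.ncard_eq_toFinset_card _ (Stmt6.minGens_finite I)]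
  have h1mem : monomial (0 : Fin n →₀ ℕ) (1 : K) ∈ monomialCompl I := by
    refine Submodule.subset_span ⟨0, ?_, rfl⟩
    rwa [monomial_zero', C_1]
  have hbdd : BddAbove {k | ∃ r d Z, IsStanleyDecomp (monomialCompl I) r d Z ∧
      ∀ i, k ≤ (Z i).card} := by
    refine ⟨n, ?_⟩
    rintro k ⟨r', d', Z', ⟨hind, hsum⟩, hk⟩
    rcases Nat.eq_zero_or_pos r' with rfl | hpos
    · exfalso
      rw [iSup_of_empty] at hsum
      have := hsum ▸ h1mem
      rw [Submodule.mem_bot] at this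
      have h10 : (monomial (0 : Fin n →₀ ℕ) (1 : K)) ≠ 0 := by
        rw [monomial_zero', C_1]
        exact one_ne_zero
      exact h10 this
    · calc k ≤ (Z' ⟨0, hpos⟩).card := hk _
        _ ≤ Fintype.card (Fin n) := Finset.card_le_univ _
        _ = n := Fintype.card_fin n
  have hmem : (n - numGens I) ∈ {k | ∃ r d Z, IsStanleyDecomp (monomialCompl I) r d Z ∧
      ∀ i, k ≤ (Z i).card} := by
    refine ⟨r, dd, ZZ, hdec, fun i => ?_⟩
    have := hcard (eqv.symm i).1 (eqv.symm i).2
    rw [hng]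
    exact this
  exact le_csSup hbdd hmem
end

section
/- Let I ⊆ S = K[x_1,…,x_n] be a monomial ideal which is not principal and such that c(I) = 2 or g(I) = 2. Then sdepth(I) = n − 1 and sdepth(S/I) = n − 2. -/
open MvPolynomial

noncomputable section

namespace SAux

variable {K : Type*} [Field K] {n : ℕ}

abbrev F (n : ℕ) := Fin n →₀ ℕ

def mspan (K : Type*) [Field K] {n : ℕ} (A : Set (F n)) : Submodule K (MvPolynomial (Fin n) K) :=
  Submodule.span K ((fun d => monomial d (1 : K)) '' A)

lemma mem_mspan {A : Set (F n)} {d : F n} : monomial d (1:K) ∈ mspan K A ↔ d ∈ A := by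
  have h := (basisMonomials (Fin n) K).mem_span_image (m := monomial d (1:K)) (s := A)
  have h2 : (basisMonomials (Fin n) K).repr (monomial d (1:K)) = Finsupp.single d 1 := by
    have : monomial d (1:K) = basisMonomials (Fin n) K d := by
      rw [coe_basisMonomials]
    rw [this, Module.Basis.repr_self]
  rw [h2, Finsupp.support_single_ne_zero _ (one_ne_zero)] at h
  rw [mspan]
  have hco : (fun d : F n => monomial d (1:K)) = ⇑(basisMonomials (Fin n) K) := by
    rw [coe_basisMonomials]
  rw [hco, h]
  simp

lemma mspan_le_mspan {A B : Set (F n)} (h : A ⊆ B) : mspan K A ≤ mspan K B :=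
  Submodule.span_mono (Set.image_mono h)

lemma mspan_inj {A B : Set (F n)} (h : mspan K A = mspan K B) : A = B := by
  ext d
  rw [← @mem_mspan K _ n A d, ← @mem_mspan K _ n B d, h]

lemma iSup_mspan {ι : Sort*} (A : ι → Set (F n)) :
    (⨆ i, mspan K (A i)) = mspan K (⋃ i, A i) := by
  rw [mspan, Set.image_iUnion, Submodule.span_iUnion]; rfl

lemma disjoint_mspan_iff {A B : Set (F n)} :
    Disjoint (mspan K A) (mspan K B) ↔ Disjoint A B := by
  constructor
  · intro h
    rw [Set.disjoint_left]
    intro x hA hB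
    have h1 : monomial x (1:K) ∈ mspan K A := mem_mspan.2 hA
    have h2 : monomial x (1:K) ∈ mspan K B := mem_mspan.2 hB
    have := Submodule.disjoint_def.1 h _ h1 h2
    simp [monomial_eq_zero] at this
  · intro h
    have hli : LinearIndependent K (fun d : F n => monomial d (1:K)) := by
      have := (basisMonomials (Fin n) K).linearIndependent
      rwa [coe_basisMonomials] at this
    exact hli.disjoint_span_image h

end SAux
namespace SAux
variable {K : Type*} [Field K] {n : ℕ}

/-- The block of exponent vectors `{d + e | supp e ⊆ Z}`. -/
def Block (d : F n) (Z : Finset (Fin n)) : Set (F n) :=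
  {c | d ≤ c ∧ ∀ i ∉ Z, c i = d i}

lemma mem_Block_iff {d c : F n} {Z : Finset (Fin n)} :
    c ∈ Block d Z ↔ d ≤ c ∧ ∀ i ∉ Z, c i = d i := Iff.rfl

lemma self_mem_Block {d : F n} {Z : Finset (Fin n)} : d ∈ Block d Z :=
  ⟨le_refl d, fun _ _ => rfl⟩

lemma Block_add_mem {d c : F n} {Z : Finset (Fin n)} (hc : c ∈ Block d Z) {i : Fin n}
    (hi : i ∈ Z) : c + Finsupp.single i 1 ∈ Block d Z := by
  refine ⟨le_trans hc.1 ?_, fun j hj => ?_⟩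
  · intro j; simp
  · have := hc.2 j hj
    rw [Finsupp.add_apply, Finsupp.single_apply]
    rw [if_neg (by rintro rfl; exact hj hi)]
    simpa using this

lemma stanleySpace_eq (d : F n) (Z : Finset (Fin n)) :
    stanleySpace K d Z = mspan K (Block d Z) := by
  rw [stanleySpace, mspan]
  congr 1
  ext p
  constructor
  · rintro ⟨e, he, rfl⟩
    refine ⟨d + e, ⟨?_, fun i hi => ?_⟩, rfl⟩
    · intro j; simp
    · have : e i = 0 := by
        by_contra h
        exact hi (he (Finsupp.mem_support_iff.2 h))
      simp [this]
  · rintro ⟨c, ⟨hle, hfix⟩, rfl⟩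
    refine ⟨c - d, fun i hi => ?_, by rw [add_tsub_cancel_of_le hle]⟩
    rw [Finset.mem_coe, Finsupp.mem_support_iff] at hi
    by_contra h
    apply hi
    rw [Finsupp.tsub_apply]
    have := hfix i (by simpa using h)
    omega

/-- Combinatorial Stanley decomposition of a set of exponent vectors. -/
def CDecomp (M : Set (F n)) (r : ℕ) (d : Fin r → F n) (Z : Fin r → Finset (Fin n)) : Prop :=
  (Pairwise fun i j => Disjoint (Block (d i) (Z i)) (Block (d j) (Z j))) ∧
    (⋃ i, Block (d i) (Z i)) = M

lemma isStanleyDecomp_iff (M : Set (F n)) (r : ℕ) (d : Fin r → F n)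
    (Z : Fin r → Finset (Fin n)) :
    IsStanleyDecomp (mspan K M) r d Z ↔ CDecomp M r d Z := by
  rw [IsStanleyDecomp, CDecomp]
  have hsp : ∀ i, stanleySpace K (d i) (Z i) = mspan K (Block (d i) (Z i)) :=
    fun i => stanleySpace_eq _ _
  constructor
  · rintro ⟨hind, hsup⟩
    simp only [hsp] at hind hsup
    constructor
    · intro i j hij
      have := hind i
      rw [iSup_subtype'] at this
      rw [iSup_mspan] at this
      rw [disjoint_mspan_iff] at this
      refine this.mono_right ?_
      exact Set.subset_iUnion (fun j' : {j' // j' ≠ i} => Block (d j') (Z j')) ⟨j, hij.symm⟩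
    · rw [iSup_mspan] at hsup
      exact mspan_inj hsup
  · rintro ⟨hdisj, hcov⟩
    constructor
    · intro i
      simp only [hsp]
      rw [iSup_subtype', iSup_mspan, disjoint_mspan_iff, Set.disjoint_iUnion_right]
      exact fun j => hdisj (Ne.symm j.2)
    · simp only [hsp]
      rw [iSup_mspan, hcov]

/-- Computation of sdepth from combinatorial data. -/
lemma sdepth_eq (M : Set (F n)) (m : ℕ)
    (hex : ∃ r d Z, CDecomp M r d Z ∧ ∀ i, m ≤ (Z i).card)
    (hub : ∀ r d Z, CDecomp M r d Z → ¬ (∀ i, m + 1 ≤ (Z i).card)) :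
    sdepth (mspan K M) = m := by
  rw [sdepth]
  apply IsGreatest.csSup_eq
  constructor
  · obtain ⟨r, d, Z, hdec, hcard⟩ := hex
    exact ⟨r, d, Z, (isStanleyDecomp_iff M r d Z).2 hdec, hcard⟩
  · rintro k ⟨r, d, Z, hdec, hcard⟩
    by_contra hk
    push_neg at hk
    exact hub r d Z ((isStanleyDecomp_iff M r d Z).1 hdec)
      (fun i => le_trans hk (hcard i))

end SAux
namespace SAux
variable {K : Type*} [Field K] {n : ℕ}

/-- The set of exponents of monomials in `I`. -/
def ES (I : Ideal (MvPolynomial (Fin n) K)) : Set (F n) :=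
  {d | monomial d (1:K) ∈ I}

lemma ES_up {I : Ideal (MvPolynomial (Fin n) K)} {d e : F n} (hd : d ∈ ES I) (hde : d ≤ e) :
    e ∈ ES I := by
  have h : monomial e (1:K) = monomial (e - d) (1:K) * monomial d (1:K) := by
    rw [monomial_mul, one_mul, tsub_add_cancel_of_le hde]
  show monomial e (1:K) ∈ I
  rw [h]
  exact Ideal.mul_mem_left _ _ hd

lemma monomial_mem_mspan {A : Set (F n)} {d : F n} (hd : d ∈ A) (a : K) :
    monomial d a ∈ mspan K A := by
  have : monomial d a = a • monomial d (1:K) := by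
    rw [smul_monomial, smul_eq_mul, mul_one]
  rw [this]
  exact Submodule.smul_mem _ _ (Submodule.subset_span ⟨d, hd, rfl⟩)

lemma mul_monomial_mem_mspan {I : Ideal (MvPolynomial (Fin n) K)}
    (f : MvPolynomial (Fin n) K) {d : F n} (hd : d ∈ ES I) :
    f * monomial d (1:K) ∈ mspan K (ES I) := by
  induction f using MvPolynomial.induction_on generalizing d with
  | C a =>
      rw [C_mul_monomial, mul_one]
      exact monomial_mem_mspan hd a
  | add p q hp hq =>
      rw [add_mul]; exact Submodule.add_mem _ (hp hd) (hq hd)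
  | mul_X p i hp =>
      have h1 : p * X i * monomial d (1:K) = p * monomial (Finsupp.single i 1 + d) (1:K) := by
        rw [mul_assoc, X, monomial_mul, one_mul]
      rw [h1]
      exact hp (ES_up hd (le_add_self))

lemma mul_mem_mspan {I : Ideal (MvPolynomial (Fin n) K)}
    (f : MvPolynomial (Fin n) K) {p : MvPolynomial (Fin n) K} (hp : p ∈ mspan K (ES I)) :
    f * p ∈ mspan K (ES I) := by
  induction hp using Submodule.span_induction with
  | mem x hx =>
      obtain ⟨d, hd, rfl⟩ := hx
      exact mul_monomial_mem_mspan f hd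
  | zero => rw [mul_zero]; exact Submodule.zero_mem _
  | add x y _ _ hx hy => rw [mul_add]; exact Submodule.add_mem _ hx hy
  | smul a x _ hx => rw [mul_smul_comm]; exact Submodule.smul_mem _ _ hx

lemma restrictScalars_eq {I : Ideal (MvPolynomial (Fin n) K)} (hI : IsMonomialIdeal I) :
    Submodule.restrictScalars K I = mspan K (ES I) := by
  apply le_antisymm
  · intro p hp
    rw [Submodule.restrictScalars_mem] at hp
    rw [IsMonomialIdeal] at hI
    rw [hI] at hp
    induction hp using Submodule.span_induction with
    | mem x hx =>
        obtain ⟨d, hd, rfl⟩ := hx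
        exact Submodule.subset_span ⟨d, hd, rfl⟩
    | zero => exact Submodule.zero_mem _
    | add x y _ _ hx hy => exact Submodule.add_mem _ hx hy
    | smul a x _ hx =>
        rw [smul_eq_mul]
        exact mul_mem_mspan a hx
  · rw [mspan, Submodule.span_le]
    rintro p ⟨d, hd, rfl⟩
    exact hd

lemma monomialCompl_eq (I : Ideal (MvPolynomial (Fin n) K)) :
    monomialCompl I = mspan K (ES I)ᶜ := by
  rw [monomialCompl, mspan]
  congr 1
  ext p
  constructor
  · rintro ⟨d, hd, rfl⟩; exact ⟨d, hd, rfl⟩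
  · rintro ⟨d, hd, rfl⟩; exact ⟨d, hd, rfl⟩

/-- Membership characterization: `p ∈ I` iff all exponents of `p` are in `ES I`. -/
lemma mem_iff_support {I : Ideal (MvPolynomial (Fin n) K)} (hI : IsMonomialIdeal I)
    (p : MvPolynomial (Fin n) K) : p ∈ I ↔ (↑p.support : Set (F n)) ⊆ ES I := by
  have h1 : p ∈ I ↔ p ∈ mspan K (ES I) := by
    rw [← restrictScalars_eq hI]; rfl
  rw [h1, mspan]
  have hco : (fun d : F n => monomial d (1:K)) = ⇑(basisMonomials (Fin n) K) := by
    rw [coe_basisMonomials]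
  rw [hco, Module.Basis.mem_span_image]
  rfl

end SAux
namespace SAux
variable {K : Type*} [Field K] {n : ℕ}

def deg (d : F n) : ℕ := ∑ i : Fin n, d i

lemma deg_lt {d e : F n} (hle : e ≤ d) (hne : e ≠ d) : deg e < deg d := by
  obtain ⟨i, hi⟩ : ∃ i, e i ≠ d i := by
    by_contra h
    push_neg at h
    exact hne (Finsupp.ext h)
  apply Finset.sum_lt_sum (fun j _ => hle j)
  exact ⟨i, Finset.mem_univ i, lt_of_le_of_ne (hle i) hi⟩

lemma exists_minGen {I : Ideal (MvPolynomial (Fin n) K)} {d : F n} (hd : d ∈ ES I) :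
    ∃ m ∈ minGens I, m ≤ d := by
  obtain ⟨N, hN⟩ : ∃ N, deg d ≤ N := ⟨deg d, le_refl _⟩
  induction N generalizing d with
  | zero =>
      refine ⟨d, ⟨hd, fun e hle he => ?_⟩, le_refl d⟩
      by_contra hne
      have := deg_lt hle hne
      omega
  | succ N ih =>
      by_cases hmin : ∀ e : F n, e ≤ d → monomial e (1:K) ∈ I → e = d
      · exact ⟨d, ⟨hd, hmin⟩, le_refl d⟩
      · push_neg at hmin
        obtain ⟨e, hle, he, hne⟩ := hmin
        have hdeg : deg e ≤ N := by
          have := deg_lt hle hne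
          omega
        obtain ⟨m, hm, hme⟩ := ih he hdeg
        exact ⟨m, hm, le_trans hme hle⟩

lemma mem_ES_iff {I : Ideal (MvPolynomial (Fin n) K)} {d : F n} :
    d ∈ ES I ↔ ∃ m ∈ minGens I, m ≤ d := by
  constructor
  · exact exists_minGen
  · rintro ⟨m, hm, hmd⟩
    exact ES_up hm.1 hmd

lemma not_bot {I : Ideal (MvPolynomial (Fin n) K)} (hnp : ¬ I.IsPrincipal) : I ≠ ⊥ := by
  rintro rfl
  apply hnp
  exact ⟨0, by rw [show (Submodule.span (MvPolynomial (Fin n) K) {(0:MvPolynomial (Fin n) K)}) = ⊥ from Submodule.span_zero_singleton _]⟩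

lemma ES_nonempty {I : Ideal (MvPolynomial (Fin n) K)} (hI : IsMonomialIdeal I)
    (hne : I ≠ ⊥) : (ES I).Nonempty := by
  by_contra h
  rw [Set.not_nonempty_iff_eq_empty] at h
  apply hne
  rw [IsMonomialIdeal] at hI
  rw [hI]
  convert Ideal.span_empty
  rw [Set.eq_empty_iff_forall_notMem]
  rintro p ⟨d, hd, rfl⟩
  exact Set.eq_empty_iff_forall_notMem.1 h d hd

lemma minGens_nonempty {I : Ideal (MvPolynomial (Fin n) K)} (hI : IsMonomialIdeal I)
    (hne : I ≠ ⊥) : (minGens I).Nonempty := by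
  obtain ⟨d, hd⟩ := ES_nonempty hI hne
  obtain ⟨m, hm, _⟩ := exists_minGen hd
  exact ⟨m, hm⟩

lemma principal_of_ES_Block {I : Ideal (MvPolynomial (Fin n) K)} (hI : IsMonomialIdeal I)
    {w : F n} (hw : ES I = Block w Finset.univ) : I.IsPrincipal := by
  refine ⟨monomial w (1:K), ?_⟩
  apply le_antisymm
  · intro p hp
    rw [mem_iff_support hI] at hp
    rw [p.as_sum]
    apply Submodule.sum_mem
    intro c hc
    have hcE : c ∈ ES I := hp hc
    rw [hw] at hcE
    have hwc : w ≤ c := hcE.1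
    have : monomial c (coeff c p) = monomial (c - w) (coeff c p) * monomial w (1:K) := by
      rw [monomial_mul, mul_one, tsub_add_cancel_of_le hwc]
    rw [this]
    exact Submodule.smul_mem _ _ (Submodule.subset_span rfl)
  · rw [show (Submodule.span (MvPolynomial (Fin n) K) {monomial w (1:K)}) =
        Ideal.span {monomial w (1:K)} from rfl, Ideal.span_le,
      Set.singleton_subset_iff]
    show w ∈ ES I
    rw [hw]
    exact self_mem_Block

end SAux
namespace SAux
variable {K : Type*} [Field K] {n : ℕ}

lemma cdecomp_of_index {ι : Type} [Fintype ι] {M : Set (F n)} (d : ι → F n)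
    (Z : ι → Finset (Fin n)) (m : ℕ)
    (hdisj : Pairwise fun i j => Disjoint (Block (d i) (Z i)) (Block (d j) (Z j)))
    (hcov : (⋃ i, Block (d i) (Z i)) = M) (hcard : ∀ i, m ≤ (Z i).card) :
    ∃ r d' Z', CDecomp M r d' Z' ∧ ∀ t, m ≤ (Z' t).card := by
  classical
  let e := (Fintype.equivFin ι).symm
  refine ⟨Fintype.card ι, d ∘ e, Z ∘ e, ⟨?_, ?_⟩, fun t => hcard (e t)⟩
  · exact fun i j hij => hdisj (e.injective.ne hij)
  · rw [← hcov]
    exact e.iSup_comp (g := fun i => Block (d i) (Z i))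

/-- Upper bound: a set which is nonempty, upward closed and not a principal up-set has no
decomposition with all blocks full-dimensional. -/
lemma ideal_ub {M : Set (F n)} (hne : M.Nonempty)
    (hpr : ∀ w : F n, M ≠ Block w Finset.univ)
    (r : ℕ) (d : Fin r → F n) (Z : Fin r → Finset (Fin n))
    (hdec : CDecomp M r d Z) (hcard : ∀ t, n ≤ (Z t).card) : False := by
  have hZ : ∀ t, Z t = Finset.univ := by
    intro t
    apply Finset.eq_univ_of_card
    have h1 := Finset.card_le_univ (Z t)
    have := hcard t
    simp only [Finset.card_univ, Fintype.card_fin] at h1 ⊢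
    omega
  obtain ⟨hdisj, hcov⟩ := hdec
  match r with
  | 0 =>
      rw [Set.iUnion_of_empty] at hcov
      obtain ⟨x, hx⟩ := hne
      rw [← hcov] at hx
      exact hx
  | 1 =>
      apply hpr (d 0)
      rw [← hcov, ← hZ 0]
      apply le_antisymm
      · exact Set.iUnion_subset fun t => by
          have : t = 0 := Subsingleton.elim t 0
          rw [this]
      · exact Set.subset_iUnion (fun t : Fin 1 => Block (d t) (Z t)) 0
  | (r + 2) =>
      have h01 : (0 : Fin (r+2)) ≠ 1 := by simp [Fin.ext_iff]
      have hd : Disjoint (Block (d 0) Finset.univ) (Block (d 1) Finset.univ) := by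
        have := hdisj h01
        simp only [hZ] at this
        exact this
      exact Set.disjoint_left.1 hd
        ⟨le_sup_left, fun i hi => absurd (Finset.mem_univ i) hi⟩
        ⟨le_sup_right, fun i hi => absurd (Finset.mem_univ i) hi⟩

/-- Upper bound for the quotient side. -/
lemma quotient_ub {M : Set (F n)} (a b : Fin n) (hab : a ≠ b) (c : F n)
    (hc : c ∈ M) (ha : c + Finsupp.single a 1 ∉ M) (hb : c + Finsupp.single b 1 ∉ M)
    (r : ℕ) (d : Fin r → F n) (Z : Fin r → Finset (Fin n))
    (hdec : CDecomp M r d Z) (hcard : ∀ t, n - 1 ≤ (Z t).card) : False := by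
  obtain ⟨hdisj, hcov⟩ := hdec
  rw [← hcov] at hc
  obtain ⟨t, hct⟩ : ∃ t, c ∈ Block (d t) (Z t) := by
    simpa using hc
  have hin : a ∈ Z t ∨ b ∈ Z t := by
    by_contra h
    push_neg at h
    have hsub : ({a, b} : Finset (Fin n)) ⊆ (Z t)ᶜ := by
      intro i hi
      rw [Finset.mem_insert, Finset.mem_singleton] at hi
      rw [Finset.mem_compl]
      rcases hi with rfl | rfl
      · exact h.1
      · exact h.2
    have h2 : ({a, b} : Finset (Fin n)).card = 2 := Finset.card_pair hab
    have h3 := Finset.card_le_card hsub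
    rw [h2, Finset.card_compl, Fintype.card_fin] at h3
    have := hcard t
    have h4 := Finset.card_le_univ (Z t)
    simp only [Finset.card_univ, Fintype.card_fin] at h4
    omega
  rcases hin with hA | hB
  · apply ha
    rw [← hcov]
    exact Set.mem_iUnion.2 ⟨t, Block_add_mem hct hA⟩
  · apply hb
    rw [← hcov]
    exact Set.mem_iUnion.2 ⟨t, Block_add_mem hct hB⟩

end SAux
namespace SAux
variable {n : ℕ}

def mkF (f : Fin n → ℕ) : F n := Finsupp.equivFunOnFinite.symm f

@[simp] lemma mkF_apply (f : Fin n → ℕ) (i : Fin n) : mkF f i = f i := rfl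

/-- Partition of `Block d Z \ up(β)` into blocks of codimension at most 1 inside `Z`. -/
lemma blockMinus (d : F n) (Z : Finset (Fin n)) (β : F n) :
    ∃ (ι : Type) (_ : Fintype ι) (D : ι → F n) (W : ι → Finset (Fin n)),
      (∀ p, W p ⊆ Z) ∧ (∀ p, Z.card - 1 ≤ (W p).card) ∧
      (Pairwise fun p q => Disjoint (Block (D p) (W p)) (Block (D q) (W q))) ∧
      (⋃ p, Block (D p) (W p)) = {c | c ∈ Block d Z ∧ ¬ β ≤ c} := by
  classical
  by_cases hout : ∃ k, k ∉ Z ∧ d k < β k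
  · obtain ⟨k, hkZ, hk⟩ := hout
    refine ⟨PUnit, inferInstance, fun _ => d, fun _ => Z, fun _ => le_refl Z,
      fun _ => Nat.sub_le _ _, by
        intro p q hpq
        exact absurd (Subsingleton.elim p q) hpq, ?_⟩
    rw [Set.iUnion_const]
    ext c
    simp only [Set.mem_setOf_eq]
    refine ⟨fun hc => ⟨hc, fun hβ => ?_⟩, fun h => h.1⟩
    have h1 := hc.2 k hkZ
    have h2 := hβ k
    omega
  · push_neg at hout
    set N := Finset.univ.sup β with hN
    set S : Finset (Fin n × ℕ) :=
      (Finset.univ ×ˢ Finset.range N).filter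
        (fun p => p.1 ∈ Z ∧ d p.1 ≤ p.2 ∧ p.2 < β p.1) with hS
    have hmemS : ∀ p : Fin n × ℕ, p ∈ S ↔ p.1 ∈ Z ∧ d p.1 ≤ p.2 ∧ p.2 < β p.1 := by
      intro p
      rw [hS, Finset.mem_filter, Finset.mem_product, Finset.mem_range]
      constructor
      · tauto
      · intro h
        refine ⟨⟨Finset.mem_univ _, lt_of_lt_of_le h.2.2 ?_⟩, h⟩
        exact Finset.le_sup (f := ⇑β) (Finset.mem_univ p.1)
    set D : {p // p ∈ S} → F n := fun p =>
      mkF (fun i => if i = p.1.1 then p.1.2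
        else if i ∈ Z ∧ i < p.1.1 then max (d i) (β i) else d i) with hD
    set W : {p // p ∈ S} → Finset (Fin n) := fun p => Z.erase p.1.1 with hW
    -- membership characterization
    have hchar : ∀ (p : {x // x ∈ S}) (c : F n),
        c ∈ Block (D p) (W p) ↔
          c ∈ Block d Z ∧ c p.1.1 = p.1.2 ∧ ∀ k' ∈ Z, k' < p.1.1 → β k' ≤ c k' := by
      rintro ⟨⟨k, m⟩, hp⟩ c
      obtain ⟨hkZ, hdm, hmβ⟩ := (hmemS _).1 hp
      dsimp only at hkZ hdm hmβ
      simp only [hD, hW, mem_Block_iff]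
      constructor
      · rintro ⟨hle, hfix⟩
        have hck : c k = m := by
          have := hfix k (Finset.notMem_erase k Z)
          simpa using this
        refine ⟨⟨?_, ?_⟩, hck, ?_⟩
        · intro i
          by_cases hik : i = k
          · subst hik; omega
          by_cases hiZ : i ∉ Z
          · have := hfix i (by simp [Finset.mem_erase, hiZ])
            simp only [mkF_apply, if_neg hik] at this
            rw [if_neg (by tauto)] at this
            omega
          · push_neg at hiZ
            have := hle i
            simp only [mkF_apply, if_neg hik] at this
            by_cases hlt : i < k
            · rw [if_pos (show i ∈ Z ∧ i < k from ⟨hiZ, hlt⟩)] at this; omega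
            · rw [if_neg (by tauto)] at this; omega
        · intro i hiZ
          have hik : i ≠ k := by rintro rfl; exact hiZ hkZ
          have := hfix i (by simp [Finset.mem_erase, hiZ])
          simp only [mkF_apply, if_neg hik] at this
          rw [if_neg (by tauto)] at this
          exact this
        · intro k' hk'Z hk'lt
          have hk'k : k' ≠ k := ne_of_lt hk'lt
          have := hle k'
          simp only [mkF_apply, if_neg hk'k,
            if_pos (show k' ∈ Z ∧ k' < k from ⟨hk'Z, hk'lt⟩)] at this
          have h2 : β k' ≤ d k' ⊔ β k' := le_sup_right
          omega
      · rintro ⟨⟨hle, hfix⟩, hck, hprev⟩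
        constructor
        · intro i
          simp only [mkF_apply]
          by_cases hik : i = k
          · subst hik; simp [hck]
          rw [if_neg hik]
          by_cases hcase : i ∈ Z ∧ i < k
          · rw [if_pos hcase]
            exact sup_le (hle i) (hprev i hcase.1 hcase.2)
          · rw [if_neg hcase]; exact hle i
        · intro i hi
          rw [Finset.mem_erase] at hi
          push_neg at hi
          simp only [mkF_apply]
          by_cases hik : i = k
          · subst hik; simp [hck]
          rw [if_neg hik]
          have hiZ : i ∉ Z := hi hik
          rw [if_neg (by tauto)]
          exact hfix i hiZ
    refine ⟨{p // p ∈ S}, inferInstance, D, W, fun p => Finset.erase_subset _ _,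
      fun p => ?_, ?_, ?_⟩
    · rw [hW]
      rw [Finset.card_erase_of_mem ((hmemS _).1 p.2).1]
    · -- pairwise disjoint
      rintro ⟨⟨k, m⟩, hp⟩ ⟨⟨k', m'⟩, hq⟩ hpq
      have hp' := (hmemS _).1 hp
      have hq' := (hmemS _).1 hq
      dsimp only at hp' hq'
      rw [Set.disjoint_left]
      intro c hc hc'
      rw [hchar] at hc hc'
      obtain ⟨hcb, hck, hcprev⟩ := hc
      obtain ⟨_, hck', hcprev'⟩ := hc'
      dsimp only at hck hck' hcprev hcprev'
      rcases lt_trichotomy k k' with hlt | heq | hgt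
      · have := hcprev' k hp'.1 hlt
        have := hp'.2.2
        omega
      · apply hpq
        subst heq
        have : m = m' := by omega
        subst this
        rfl
      · have := hcprev k' hq'.1 hgt
        have := hq'.2.2
        omega
    · -- union
      ext c
      simp only [Set.mem_iUnion, Set.mem_setOf_eq]
      constructor
      · rintro ⟨p, hcp⟩
        rw [hchar] at hcp
        refine ⟨hcp.1, fun hβc => ?_⟩
        have h1 := hcp.2.1
        have h2 := ((hmemS _).1 p.2).2.2
        have := hβc p.1.1
        omega
      · rintro ⟨hcb, hβc⟩
        have hTne : (Z.filter (fun k => c k < β k)).Nonempty := by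
          rw [Finsupp.le_iff] at hβc
          push_neg at hβc
          obtain ⟨k, _, hk⟩ := hβc
          have hkZ : k ∈ Z := by
            by_contra hkZ
            have := hcb.2 k hkZ
            have := hout k hkZ
            omega
          exact ⟨k, Finset.mem_filter.2 ⟨hkZ, hk⟩⟩
        set k := (Z.filter (fun k => c k < β k)).min' hTne with hk
        have hkmem := (Z.filter (fun k => c k < β k)).min'_mem hTne
        rw [Finset.mem_filter] at hkmem
        have hpS : (k, c k) ∈ S := by
          rw [hmemS]
          exact ⟨hkmem.1, hcb.1 k, hkmem.2⟩
        refine ⟨⟨(k, c k), hpS⟩, ?_⟩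
        rw [hchar]
        refine ⟨hcb, rfl, ?_⟩
        intro k' hk'Z hk'lt
        have hk'lt2 : k' < k := hk'lt
        by_contra hcon
        push_neg at hcon
        have : k' ∈ Z.filter (fun j => c j < β j) := Finset.mem_filter.2 ⟨hk'Z, hcon⟩
        have := Finset.min'_le _ _ this
        omega

end SAux
namespace SAux
variable {n : ℕ}

lemma Block_univ (d : F n) : Block d Finset.univ = {c | d ≤ c} := by
  ext c
  simp [mem_Block_iff]

lemma Block_zero_univ : Block (0 : F n) Finset.univ = Set.univ := by
  rw [Block_univ]
  ext c
  simp [zero_le]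

/-- Partition of the complement of `up α ∪ up β` into blocks of dimension ≥ n-2. -/
lemma twoGenQuotientDecomp (α β : F n) :
    ∃ (ι : Type) (_ : Fintype ι) (D : ι → F n) (W : ι → Finset (Fin n)),
      (∀ p, n - 2 ≤ (W p).card) ∧
      (Pairwise fun p q => Disjoint (Block (D p) (W p)) (Block (D q) (W q))) ∧
      (⋃ p, Block (D p) (W p)) = {c | ¬ α ≤ c ∧ ¬ β ≤ c} := by
  classical
  obtain ⟨ι₁, inst₁, D₁, W₁, hsub₁, hcard₁, hdisj₁, hcov₁⟩ :=
    blockMinus (0 : F n) Finset.univ α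
  choose ι₂ inst₂ D₂ W₂ hsub₂ hcard₂ hdisj₂ hcov₂ using
    fun p : ι₁ => blockMinus (D₁ p) (W₁ p) β
  haveI : Fintype ι₁ := inst₁
  haveI : ∀ p, Fintype (ι₂ p) := inst₂
  have hBsub : ∀ (p : ι₁) (q : ι₂ p),
      Block (D₂ p q) (W₂ p q) ⊆ {c | c ∈ Block (D₁ p) (W₁ p) ∧ ¬ β ≤ c} := by
    intro p q
    rw [← hcov₂ p]
    exact Set.subset_iUnion (fun q => Block (D₂ p q) (W₂ p q)) q
  refine ⟨Σ p : ι₁, ι₂ p, inferInstance, fun x => D₂ x.1 x.2, fun x => W₂ x.1 x.2, ?_, ?_, ?_⟩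
  · rintro ⟨p, q⟩
    show n - 2 ≤ (W₂ p q).card
    have h1 := hcard₁ p
    have h2 := hcard₂ p q
    simp only [Finset.card_univ, Fintype.card_fin] at h1
    omega
  · rintro ⟨p, q⟩ ⟨p', q'⟩ hne
    by_cases hpp : p = p'
    · subst hpp
      have hqq : q ≠ q' := by
        rintro rfl; exact hne rfl
      exact hdisj₂ p hqq
    · exact Set.disjoint_of_subset
        ((hBsub p q).trans (fun c hc => hc.1))
        ((hBsub p' q').trans (fun c hc => hc.1))
        (hdisj₁ hpp)
  · ext c
    simp only [Set.mem_iUnion, Sigma.exists, Set.mem_setOf_eq]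
    constructor
    · rintro ⟨p, q, hc⟩
      have h2 := hBsub p q hc
      have h3 : c ∈ ⋃ p, Block (D₁ p) (W₁ p) :=
        Set.mem_iUnion.2 ⟨p, h2.1⟩
      rw [hcov₁] at h3
      exact ⟨h3.2, h2.2⟩
    · rintro ⟨hα, hβ⟩
      have h3 : c ∈ ⋃ p, Block (D₁ p) (W₁ p) := by
        rw [hcov₁]
        exact ⟨by rw [Block_zero_univ]; trivial, hα⟩
      obtain ⟨p, hp⟩ := Set.mem_iUnion.1 h3
      have h4 : c ∈ ⋃ q, Block (D₂ p q) (W₂ p q) := by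
        rw [hcov₂ p]
        exact ⟨hp, hβ⟩
      obtain ⟨q, hq⟩ := Set.mem_iUnion.1 h4
      exact ⟨p, q, hq⟩

/-- Partition of `up α ∪ up β` into blocks of dimension ≥ n-1. -/
lemma twoGenIdealDecomp (α β : F n) :
    ∃ (ι : Type) (_ : Fintype ι) (D : ι → F n) (W : ι → Finset (Fin n)),
      (∀ p, n - 1 ≤ (W p).card) ∧
      (Pairwise fun p q => Disjoint (Block (D p) (W p)) (Block (D q) (W q))) ∧
      (⋃ p, Block (D p) (W p)) = {c | α ≤ c ∨ β ≤ c} := by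
  classical
  obtain ⟨ι₁, inst₁, D₁, W₁, hsub₁, hcard₁, hdisj₁, hcov₁⟩ :=
    blockMinus β Finset.univ α
  haveI : Fintype ι₁ := inst₁
  refine ⟨Option ι₁, inferInstance, fun x => x.elim α D₁, fun x => x.elim Finset.univ W₁,
    ?_, ?_, ?_⟩
  · rintro (_ | p)
    · simp
    · have := hcard₁ p
      simp only [Finset.card_univ, Fintype.card_fin] at this
      exact this
  · have hsubp : ∀ p : ι₁, Block (D₁ p) (W₁ p) ⊆ {c | c ∈ Block β Finset.univ ∧ ¬ α ≤ c} := by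
      intro p
      rw [← hcov₁]
      exact Set.subset_iUnion (fun p => Block (D₁ p) (W₁ p)) p
    rintro (_ | p) (_ | q) hne
    · exact absurd rfl hne
    · rw [Set.disjoint_right]
      intro c hc
      have := (hsubp q hc).2
      simp only [Option.elim_none, Option.elim_some, Block_univ]
      exact this
    · rw [Set.disjoint_left]
      intro c hc
      have := (hsubp p hc).2
      simp only [Option.elim_none, Option.elim_some, Block_univ]
      exact this
    · apply hdisj₁
      rintro rfl; exact hne rfl
  · ext c
    simp only [Set.mem_iUnion, Set.mem_setOf_eq]
    constructor
    · rintro ⟨(_ | p), hc⟩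
      · left
        simp only [Option.elim_none, Block_univ] at hc
        exact hc
      · right
        have h2 : c ∈ ⋃ p, Block (D₁ p) (W₁ p) := Set.mem_iUnion.2 ⟨p, hc⟩
        rw [hcov₁] at h2
        rw [Block_univ] at h2
        exact h2.1
    · rintro (hα | hβ)
      · exact ⟨none, by simp only [Option.elim_none, Block_univ]; exact hα⟩
      · by_cases hα : α ≤ c
        · exact ⟨none, by simp only [Option.elim_none, Block_univ]; exact hα⟩
        · have h2 : c ∈ ⋃ p, Block (D₁ p) (W₁ p) := by
            rw [hcov₁]
            exact ⟨by rw [Block_univ]; exact hβ, hα⟩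
          obtain ⟨p, hp⟩ := Set.mem_iUnion.1 h2
          exact ⟨some p, hp⟩

end SAux
namespace SAux
variable {K : Type*} [Field K] {n : ℕ}

lemma master {I : Ideal (MvPolynomial (Fin n) K)} (hI : IsMonomialIdeal I)
    (hnp : ¬ I.IsPrincipal) (a b : Fin n) (hab : a ≠ b) (cstar : F n)
    (hc : cstar ∉ ES I) (hca : cstar + Finsupp.single a 1 ∈ ES I)
    (hcb : cstar + Finsupp.single b 1 ∈ ES I)
    (hexI : ∃ (ι : Type) (_ : Fintype ι) (D : ι → F n) (W : ι → Finset (Fin n)),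
      (∀ p, n - 1 ≤ (W p).card) ∧
      (Pairwise fun p q => Disjoint (Block (D p) (W p)) (Block (D q) (W q))) ∧
      (⋃ p, Block (D p) (W p)) = ES I)
    (hexQ : ∃ (ι : Type) (_ : Fintype ι) (D : ι → F n) (W : ι → Finset (Fin n)),
      (∀ p, n - 2 ≤ (W p).card) ∧
      (Pairwise fun p q => Disjoint (Block (D p) (W p)) (Block (D q) (W q))) ∧
      (⋃ p, Block (D p) (W p)) = (ES I)ᶜ) :
    sdepthIdeal I = n - 1 ∧ sdepthQuot I = n - 2 := by
  have hn : 1 < n := by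
    rw [← Fintype.card_fin n]
    exact Fintype.one_lt_card_iff.2 ⟨a, b, hab⟩
  constructor
  · rw [sdepthIdeal, restrictScalars_eq hI]
    apply sdepth_eq
    · obtain ⟨ι, inst, D, W, hcard, hdisj, hcov⟩ := hexI
      exact letI := inst; cdecomp_of_index D W (n-1) hdisj hcov hcard
    · intro r d Z hdec hcard
      have hcard' : ∀ t, n ≤ (Z t).card := by
        intro t
        have := hcard t
        omega
      exact ideal_ub (ES_nonempty hI (not_bot hnp))
        (fun w hw => hnp (principal_of_ES_Block hI hw)) r d Z hdec hcard'
  · rw [sdepthQuot, monomialCompl_eq]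
    apply sdepth_eq
    · obtain ⟨ι, inst, D, W, hcard, hdisj, hcov⟩ := hexQ
      exact letI := inst; cdecomp_of_index D W (n-2) hdisj hcov hcard
    · intro r d Z hdec hcard
      have hcard' : ∀ t, n - 1 ≤ (Z t).card := by
        intro t
        have := hcard t
        omega
      exact quotient_ub a b hab cstar hc (by simpa using hca) (by simpa using hcb)
        r d Z hdec hcard'

/-- The `g(I) = 2` case. -/
lemma g2_case {I : Ideal (MvPolynomial (Fin n) K)} (hI : IsMonomialIdeal I)
    (hnp : ¬ I.IsPrincipal) (hg : numGens I = 2) :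
    sdepthIdeal I = n - 1 ∧ sdepthQuot I = n - 2 := by
  classical
  obtain ⟨α, β, hαβ, hmg⟩ := Set.ncard_eq_two.1 hg
  have hαm : α ∈ minGens I := by rw [hmg]; exact Set.mem_insert _ _
  have hβm : β ∈ minGens I := by rw [hmg]; exact Set.mem_insert_iff.2 (Or.inr rfl)
  have hES : ES I = {c | α ≤ c ∨ β ≤ c} := by
    ext c
    rw [mem_ES_iff, hmg]
    simp only [Set.mem_insert_iff, Set.mem_singleton_iff, Set.mem_setOf_eq]
    constructor
    · rintro ⟨m, (rfl | rfl), hm⟩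
      · exact Or.inl hm
      · exact Or.inr hm
    · rintro (h | h)
      · exact ⟨α, Or.inl rfl, h⟩
      · exact ⟨β, Or.inr rfl, h⟩
  have hnab : ¬ α ≤ β := fun h => hαβ (hβm.2 α h hαm.1)
  have hnba : ¬ β ≤ α := fun h => hαβ (hαm.2 β h hβm.1).symm
  obtain ⟨i, hi⟩ : ∃ i, β i < α i := by
    by_contra h
    push_neg at h
    exact hnab (Finsupp.le_def.2 h)
  obtain ⟨j, hj⟩ : ∃ j, α j < β j := by
    by_contra h
    push_neg at h
    exact hnba (Finsupp.le_def.2 h)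
  have hij : i ≠ j := by
    rintro rfl
    omega
  set cstar : F n := mkF (fun k => if k = i then α i - 1 else if k = j then β j - 1
    else max (α k) (β k)) with hcstar
  have hci : cstar i = α i - 1 := by simp [hcstar]
  have hcj : cstar j = β j - 1 := by simp [hcstar, hij.symm]
  have hck : ∀ k, k ≠ i → k ≠ j → cstar k = max (α k) (β k) := by
    intro k h1 h2
    simp [hcstar, h1, h2]
  apply master hI hnp i j hij cstar
  · rw [hES]
    rintro (h | h)
    · have := h i
      rw [hci] at this
      omega
    · have := h j
      rw [hcj] at this
      omega
  · rw [hES]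
    left
    intro k
    rw [Finsupp.add_apply]
    by_cases hk : k = i
    · subst hk
      rw [hci, Finsupp.single_eq_same]
      omega
    by_cases hkj : k = j
    · subst hkj
      rw [hcj, Finsupp.single_eq_of_ne' (fun h => hk h.symm)]
      omega
    · rw [hck k hk hkj, Finsupp.single_eq_of_ne' (fun h => hk h.symm)]
      have h1 : α k ≤ max (α k) (β k) := le_max_left _ _
      omega
  · rw [hES]
    right
    intro k
    rw [Finsupp.add_apply]
    by_cases hk : k = j
    · subst hk
      rw [hcj, Finsupp.single_eq_same]
      omega
    by_cases hki : k = i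
    · subst hki
      rw [hci, Finsupp.single_eq_of_ne' (fun h => hk h.symm)]
      omega
    · rw [hck k hki hk, Finsupp.single_eq_of_ne' (fun h => hk h.symm)]
      have h1 : β k ≤ max (α k) (β k) := le_max_right _ _
      omega
  · rw [hES]
    exact twoGenIdealDecomp α β
  · have hcompl : (ES I)ᶜ = {c | ¬ α ≤ c ∧ ¬ β ≤ c} := by
      rw [hES]
      ext c
      simp only [Set.mem_compl_iff, Set.mem_setOf_eq]
      tauto
    rw [hcompl]
    exact twoGenQuotientDecomp α β

end SAux
namespace SAux
variable {K : Type*} [Field K] {n : ℕ}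

lemma mem_colonGcd {I : Ideal (MvPolynomial (Fin n) K)} {p : MvPolynomial (Fin n) K} :
    p ∈ colonGcd I ↔ p * monomial (gcdExp I) (1:K) ∈ I := by
  rw [colonGcd, Submodule.mem_colon]
  constructor
  · intro h
    have := h (monomial (gcdExp I) (1:K)) (Ideal.subset_span rfl)
    rwa [smul_eq_mul] at this
  · intro h q hq
    rw [SetLike.mem_coe, Ideal.mem_span_singleton'] at hq
    obtain ⟨f, rfl⟩ := hq
    rw [smul_eq_mul, ← mul_assoc, mul_comm p f, mul_assoc]
    exact Ideal.mul_mem_left _ f h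

lemma ES_colonGcd {I : Ideal (MvPolynomial (Fin n) K)} {d : F n} :
    d ∈ ES (colonGcd I) ↔ d + gcdExp I ∈ ES I := by
  show monomial d (1:K) ∈ colonGcd I ↔ monomial (d + gcdExp I) (1:K) ∈ I
  rw [mem_colonGcd, monomial_mul, mul_one]

lemma isMonomialIdeal_colonGcd {I : Ideal (MvPolynomial (Fin n) K)}
    (hI : IsMonomialIdeal I) : IsMonomialIdeal (colonGcd I) := by
  rw [IsMonomialIdeal]
  apply le_antisymm
  · intro p hp
    have hmul : p * monomial (gcdExp I) (1:K) ∈ I := mem_colonGcd.1 hp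
    rw [mem_iff_support hI] at hmul
    have hsupp : ∀ d ∈ p.support, d ∈ ES (colonGcd I) := by
      intro d hd
      rw [ES_colonGcd]
      apply hmul
      rw [Finset.mem_coe, mem_support_iff]
      rw [mem_support_iff] at hd
      rwa [coeff_mul_monomial', if_pos (le_add_self), add_tsub_cancel_right, mul_one]
    rw [p.as_sum]
    apply Submodule.sum_mem
    intro d hd
    have : monomial d (coeff d p) = (C (coeff d p)) * monomial d (1:K) := by
      rw [C_mul_monomial, mul_one]
    rw [this]
    exact Ideal.mul_mem_left _ _ (Ideal.subset_span ⟨d, hsupp d hd, rfl⟩)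
  · rw [Ideal.span_le]
    rintro q ⟨d, hd, rfl⟩
    exact hd

lemma gcdExp_le {I : Ideal (MvPolynomial (Fin n) K)} {m : F n} (hm : m ∈ minGens I) :
    gcdExp I ≤ m := by
  intro i
  have : (gcdExp I) i = sInf {k | ∃ d ∈ minGens I, d i = k} := rfl
  rw [this]
  exact Nat.sInf_le ⟨m, hm, rfl⟩

lemma minGens_colonGcd {I : Ideal (MvPolynomial (Fin n) K)} {d : F n} :
    d ∈ minGens (colonGcd I) ↔ d + gcdExp I ∈ minGens I := by
  constructor
  · rintro ⟨hd, hmin⟩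
    refine ⟨ES_colonGcd.1 hd, fun e hle he => ?_⟩
    have hve : gcdExp I ≤ e := by
      obtain ⟨m, hm, hme⟩ := exists_minGen (I := I) he
      exact le_trans (gcdExp_le hm) hme
    have h1 : e - gcdExp I ≤ d := by
      intro i
      have := hle i
      have := hve i
      rw [Finsupp.tsub_apply]
      have h2 := (Finsupp.add_apply d (gcdExp I) i)
      omega
    have h2 : e - gcdExp I ∈ ES (colonGcd I) := by
      rw [ES_colonGcd, tsub_add_cancel_of_le hve]
      exact he
    have h3 := hmin (e - gcdExp I) h1 h2
    rw [← h3, tsub_add_cancel_of_le hve]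
  · rintro ⟨hd, hmin⟩
    refine ⟨ES_colonGcd.2 hd, fun e hle he => ?_⟩
    have h1 : e + gcdExp I ≤ d + gcdExp I := by
      intro i
      have := hle i
      simp only [Finsupp.add_apply]
      omega
    have h2 := hmin (e + gcdExp I) h1 (ES_colonGcd.1 he)
    have : ∀ i, e i = d i := by
      intro i
      have := congrArg (fun f => f i) h2
      simp only [Finsupp.add_apply] at this
      omega
    exact Finsupp.ext this

end SAux
namespace SAux
variable {K : Type*} [Field K] {n : ℕ}

lemma c2_case {I : Ideal (MvPolynomial (Fin n) K)} (hI : IsMonomialIdeal I)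
    (hnp : ¬ I.IsPrincipal) (hc : numSupp I = 2) :
    sdepthIdeal I = n - 1 ∧ sdepthQuot I = n - 2 := by
  classical
  obtain ⟨a, b, hab, hsupp⟩ := Set.ncard_eq_two.1 hc
  set v := gcdExp I with hv
  -- minimal generators agree with v off {a, b}
  have hoff : ∀ m ∈ minGens I, ∀ i, i ≠ a → i ≠ b → m i = v i := by
    intro m hm i hia hib
    have hvm : v ≤ m := gcdExp_le hm
    have h2 : m - v ∈ minGens (colonGcd I) := by
      rw [minGens_colonGcd, tsub_add_cancel_of_le hvm]
      exact hm
    have h3 : i ∉ ({a, b} : Set (Fin n)) := by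
      simp only [Set.mem_insert_iff, Set.mem_singleton_iff]
      tauto
    rw [← hsupp] at h3
    have h4 : (m - v) i = 0 := by
      by_contra h4
      exact h3 ⟨m - v, h2, h4⟩
    rw [Finsupp.tsub_apply] at h4
    have := hvm i
    omega
  set P : Set (ℕ × ℕ) := {st | ∃ m ∈ minGens I, m a ≤ st.1 ∧ m b ≤ st.2} with hP
  have hPup : ∀ s t s' t', (s, t) ∈ P → s ≤ s' → t ≤ t' → (s', t') ∈ P := by
    rintro s t s' t' ⟨m, hm, h1, h2⟩ hs ht
    exact ⟨m, hm, le_trans h1 hs, le_trans h2 ht⟩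
  have hESchar : ∀ c : F n, c ∈ ES I ↔
      ((∀ i, i ≠ a → i ≠ b → v i ≤ c i) ∧ (c a, c b) ∈ P) := by
    intro c
    rw [mem_ES_iff]
    constructor
    · rintro ⟨m, hm, hmc⟩
      refine ⟨fun i hia hib => ?_, m, hm, hmc a, hmc b⟩
      rw [← hoff m hm i hia hib]
      exact hmc i
    · rintro ⟨hoffc, m, hm, ha', hb'⟩
      refine ⟨m, hm, fun i => ?_⟩
      by_cases hia : i = a
      · subst hia; exact ha'
      by_cases hib : i = b
      · subst hib; exact hb'
      · rw [hoff m hm i hia hib]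
        exact hoffc i hia hib
  have hPne : P.Nonempty := by
    obtain ⟨m, hm⟩ := minGens_nonempty hI (not_bot hnp)
    exact ⟨(m a, m b), m, hm, le_refl _, le_refl _⟩
  -- the staircase
  set s₀ : ℕ := sInf {s | ∃ t, (s, t) ∈ P} with hs₀
  set f : ℕ → ℕ := fun s => sInf {t | (s, t) ∈ P} with hf
  obtain ⟨⟨sP, tP⟩, hsPtP⟩ := hPne
  have hs₀mem : ∃ t, (s₀, t) ∈ P := Nat.sInf_mem (⟨sP, tP, hsPtP⟩ : {s | ∃ t, (s, t) ∈ P}.Nonempty)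
  obtain ⟨t₀, ht₀⟩ := hs₀mem
  have hcol : ∀ s, s₀ ≤ s → (s, f s) ∈ P := by
    intro s hs
    have hne : {t | (s, t) ∈ P}.Nonempty := ⟨t₀, hPup _ _ _ _ ht₀ hs (le_refl _)⟩
    exact Nat.sInf_mem hne
  have hfs : ∀ s t, (s, t) ∈ P → s₀ ≤ s ∧ f s ≤ t := by
    intro s t h
    exact ⟨Nat.sInf_le ⟨t, h⟩, Nat.sInf_le h⟩
  have hmem : ∀ s t, s₀ ≤ s → f s ≤ t → (s, t) ∈ P := by
    intro s t hs ht
    exact hPup _ _ _ _ (hcol s hs) (le_refl _) ht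
  have hanti : ∀ s s', s₀ ≤ s → s ≤ s' → f s' ≤ f s := by
    intro s s' hs hss'
    exact (hfs s' (f s) (hPup _ _ _ _ (hcol s hs) hss' (le_refl _))).2
  set tinf : ℕ := sInf {t | ∃ s, (s, t) ∈ P} with htinf
  have htinfmem : ∃ s, (s, tinf) ∈ P :=
    Nat.sInf_mem (⟨tP, sP, hsPtP⟩ : {t | ∃ s, (s, t) ∈ P}.Nonempty)
  obtain ⟨s₁', hs₁'⟩ := htinfmem
  set s₁ : ℕ := max s₁' s₀ with hs₁
  have hs₀s₁ : s₀ ≤ s₁ := le_max_right _ _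
  have hs₁P : (s₁, tinf) ∈ P := hPup _ _ _ _ hs₁' (le_max_left _ _) (le_refl _)
  have htinfle : ∀ s t, (s, t) ∈ P → tinf ≤ t := fun s t h => Nat.sInf_le ⟨s, h⟩
  have hfstab : ∀ s, s₁ ≤ s → f s = tinf := by
    intro s hs
    apply le_antisymm
    · exact (hfs s tinf (hPup _ _ _ _ hs₁P hs (le_refl _))).2
    · exact htinfle s (f s) (hcol s (le_trans hs₀s₁ hs))
  -- the auxiliary vectors
  set vec : ℕ → ℕ → F n := fun s t =>
    mkF (fun k => if k = a then s else if k = b then t else v k) with hvec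
  have hva : ∀ s t, vec s t a = s := by intro s t; simp [hvec]
  have hvb : ∀ s t, vec s t b = t := by
    intro s t; simp [hvec, hab.symm]
  have hvo : ∀ s t i, i ≠ a → i ≠ b → vec s t i = v i := by
    intro s t i hia hib; simp [hvec, hia, hib]
  -- block membership characterizations
  have hBa : ∀ s t (c : F n), c ∈ Block (vec s t) (Finset.univ.erase a) ↔
      (c a = s ∧ t ≤ c b ∧ ∀ i, i ≠ a → i ≠ b → v i ≤ c i) := by
    intro s t c
    rw [mem_Block_iff]
    constructor
    · rintro ⟨hle, hfix⟩
      have h1 := hfix a (by simp)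
      rw [hva] at h1
      have h2 := hle b
      rw [hvb] at h2
      refine ⟨h1, h2, fun i hia hib => ?_⟩
      have := hle i
      rwa [hvo s t i hia hib] at this
    · rintro ⟨h1, h2, h3⟩
      constructor
      · intro i
        by_cases hia : i = a
        · subst hia; rw [hva]; omega
        by_cases hib : i = b
        · subst hib; rw [hvb]; exact h2
        · rw [hvo s t i hia hib]; exact h3 i hia hib
      · intro i hi
        simp only [Finset.mem_erase, Finset.mem_univ, and_true, not_not] at hi
        subst hi
        rw [hva]; exact h1
  have hBb : ∀ s t (c : F n), c ∈ Block (vec s t) (Finset.univ.erase b) ↔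
      (c b = t ∧ s ≤ c a ∧ ∀ i, i ≠ a → i ≠ b → v i ≤ c i) := by
    intro s t c
    rw [mem_Block_iff]
    constructor
    · rintro ⟨hle, hfix⟩
      have h1 := hfix b (by simp)
      rw [hvb] at h1
      have h2 := hle a
      rw [hva] at h2
      refine ⟨h1, h2, fun i hia hib => ?_⟩
      have := hle i
      rwa [hvo s t i hia hib] at this
    · rintro ⟨h1, h2, h3⟩
      constructor
      · intro i
        by_cases hia : i = a
        · subst hia; rw [hva]; exact h2
        by_cases hib : i = b
        · subst hib; rw [hvb]; omega
        · rw [hvo s t i hia hib]; exact h3 i hia hib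
      · intro i hi
        simp only [Finset.mem_erase, Finset.mem_univ, and_true, not_not] at hi
        subst hi
        rw [hvb]; exact h1
  have hBu : ∀ s t (c : F n), c ∈ Block (vec s t) Finset.univ ↔
      (s ≤ c a ∧ t ≤ c b ∧ ∀ i, i ≠ a → i ≠ b → v i ≤ c i) := by
    intro s t c
    rw [Block_univ]
    constructor
    · intro hle
      have h1 := hle a
      rw [hva] at h1
      have h2 := hle b
      rw [hvb] at h2
      refine ⟨h1, h2, fun i hia hib => ?_⟩
      have := hle i
      rwa [hvo s t i hia hib] at this
    · rintro ⟨h1, h2, h3⟩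
      intro i
      by_cases hia : i = a
      · subst hia; rw [hva]; exact h1
      by_cases hib : i = b
      · subst hib; rw [hvb]; exact h2
      · rw [hvo s t i hia hib]; exact h3 i hia hib
  have hBab : ∀ s t (c : F n), c ∈ Block (vec s t) ((Finset.univ.erase a).erase b) ↔
      (c a = s ∧ c b = t ∧ ∀ i, i ≠ a → i ≠ b → v i ≤ c i) := by
    intro s t c
    rw [mem_Block_iff]
    constructor
    · rintro ⟨hle, hfix⟩
      have h1 := hfix a (by simp [hab])
      rw [hva] at h1
      have h2 := hfix b (by simp)
      rw [hvb] at h2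
      refine ⟨h1, h2, fun i hia hib => ?_⟩
      have := hle i
      rwa [hvo s t i hia hib] at this
    · rintro ⟨h1, h2, h3⟩
      constructor
      · intro i
        by_cases hia : i = a
        · subst hia; rw [hva]; omega
        by_cases hib : i = b
        · subst hib; rw [hvb]; omega
        · rw [hvo s t i hia hib]; exact h3 i hia hib
      · intro i hi
        simp only [Finset.mem_erase, Finset.mem_univ, and_true] at hi
        by_cases hia : i = a
        · subst hia; rw [hva]; omega
        by_cases hib : i = b
        · subst hib; rw [hvb]; omega
        · exact absurd ⟨hib, hia⟩ hi
  -- there is a "corner" in the staircase, else I would be principal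
  have hstep : ∃ s, s₀ ≤ s ∧ f (s + 1) < f s := by
    by_contra hcon
    push_neg at hcon
    have hconst : ∀ s, s₀ ≤ s → f s = f s₀ := by
      intro s hs
      induction s, hs using Nat.le_induction with
      | base => rfl
      | succ s hs ih =>
          have h1 := hcon s hs
          have h2 := hanti s (s+1) hs (by omega)
          omega
    apply hnp
    apply principal_of_ES_Block hI (w := vec s₀ (f s₀))
    ext c
    rw [hESchar c, hBu]
    constructor
    · rintro ⟨hoffc, hPc⟩
      have h1 := hfs _ _ hPc
      refine ⟨h1.1, ?_, hoffc⟩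
      rw [← hconst (c a) h1.1]
      exact h1.2
    · rintro ⟨h1, h2, hoffc⟩
      refine ⟨hoffc, hmem _ _ h1 ?_⟩
      rw [hconst (c a) h1]
      exact h2
  obtain ⟨ss, hss, hstep⟩ := hstep
  set cstar : F n := vec ss (f ss - 1) with hcstar
  have hcsa : ∀ j : Fin n, ((cstar + Finsupp.single a 1 : F n)) j = cstar j + (if a = j then 1 else 0) := by
    intro j; rw [Finsupp.add_apply, Finsupp.single_apply]
  have hcsb : ∀ j : Fin n, ((cstar + Finsupp.single b 1 : F n)) j = cstar j + (if b = j then 1 else 0) := by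
    intro j; rw [Finsupp.add_apply, Finsupp.single_apply]
  apply master hI hnp a b hab cstar
  · rw [hESchar]
    rintro ⟨hoffc, hPc⟩
    rw [hcstar, hva, hvb] at hPc
    have := (hfs _ _ hPc).2
    omega
  · rw [hESchar]
    constructor
    · intro i hia hib
      rw [hcsa i, if_neg (fun h => hia h.symm), hcstar, hvo _ _ i hia hib]
      omega
    · have h1 : ((cstar + Finsupp.single a 1 : F n)) a = ss + 1 := by
        rw [hcsa a, if_pos rfl, hcstar, hva]
      have h2 : ((cstar + Finsupp.single a 1 : F n)) b = f ss - 1 := by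
        rw [hcsa b, if_neg hab, hcstar, hvb]
        omega
      rw [h1, h2]
      exact hmem _ _ (by omega) (by omega)
  · rw [hESchar]
    constructor
    · intro i hia hib
      rw [hcsb i, if_neg (fun h => hib h.symm), hcstar, hvo _ _ i hia hib]
      omega
    · have h1 : ((cstar + Finsupp.single b 1 : F n)) a = ss := by
        rw [hcsb a, if_neg (Ne.symm hab), hcstar, hva]
        omega
      have h2 : ((cstar + Finsupp.single b 1 : F n)) b = f ss := by
        rw [hcsb b, if_pos rfl, hcstar, hvb]
        omega
      rw [h1, h2]
      exact hmem _ _ hss (le_refl _)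
  · -- decomposition of ES I
    refine ⟨Option {s // s ∈ Finset.Ico s₀ s₁}, inferInstance,
      (fun x => x.elim (vec s₁ tinf) (fun q => vec q.1 (f q.1))),
      (fun x => x.elim Finset.univ (fun _ => Finset.univ.erase a)), ?_, ?_, ?_⟩
    · rintro (_ | q)
      · simp only [Option.elim_none]
        simp
      · simp only [Option.elim_some]
        rw [Finset.card_erase_of_mem (Finset.mem_univ a)]
        simp
    · rintro (_ | q) (_ | q') hne
      · exact absurd rfl hne
      · simp only [Option.elim_none, Option.elim_some]
        rw [Set.disjoint_right]
        intro c hc hc'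
        rw [hBa] at hc
        rw [hBu] at hc'
        have hq := Finset.mem_Ico.1 q'.2
        omega
      · simp only [Option.elim_none, Option.elim_some]
        rw [Set.disjoint_left]
        intro c hc hc'
        rw [hBa] at hc
        rw [hBu] at hc'
        have hq := Finset.mem_Ico.1 q.2
        omega
      · simp only [Option.elim_some]
        rw [Set.disjoint_left]
        intro c hc hc'
        rw [hBa] at hc hc'
        apply hne
        congr 1
        apply Subtype.ext
        omega
    · ext c
      simp only [Set.mem_iUnion]
      rw [hESchar c]
      constructor
      · rintro ⟨(_ | q), hc⟩
        · simp only [Option.elim_none] at hc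
          rw [hBu] at hc
          exact ⟨hc.2.2, hmem _ _ (by omega) (by rw [hfstab (c a) hc.1]; exact hc.2.1)⟩
        · simp only [Option.elim_some] at hc
          rw [hBa] at hc
          have hq := Finset.mem_Ico.1 q.2
          refine ⟨hc.2.2, hmem _ _ (by omega) (by rw [hc.1]; exact hc.2.1)⟩
      · rintro ⟨hoffc, hPc⟩
        have h1 := hfs _ _ hPc
        by_cases hca : c a < s₁
        · refine ⟨some ⟨c a, Finset.mem_Ico.2 ⟨h1.1, hca⟩⟩, ?_⟩
          simp only [Option.elim_some]
          rw [hBa]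
          exact ⟨rfl, h1.2, hoffc⟩
        · refine ⟨none, ?_⟩
          simp only [Option.elim_none]
          rw [hBu]
          refine ⟨by omega, ?_, hoffc⟩
          rw [← hfstab (c a) (by omega)]
          exact h1.2
  · -- decomposition of the complement of ES I
    set vOff : F n := mkF (fun k => if k = a then 0 else if k = b then 0 else v k) with hvOff
    have hvOffle : ∀ c : F n, vOff ≤ c ↔ ∀ i, i ≠ a → i ≠ b → v i ≤ c i := by
      intro c
      constructor
      · intro h i hia hib
        have := h i
        simpa [hvOff, hia, hib] using this
      · intro h i
        by_cases hia : i = a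
        · subst hia; simp [hvOff]
        by_cases hib : i = b
        · subst hib; simp [hvOff, hab.symm]
        · simp only [hvOff, mkF_apply, if_neg hia, if_neg hib]
          exact h i hia hib
    obtain ⟨ι₁, inst₁, D₁, W₁, hsub₁, hcard₁, hdisj₁, hcov₁⟩ :=
      blockMinus (0 : F n) Finset.univ vOff
    haveI : Fintype ι₁ := inst₁
    rw [Block_zero_univ] at hcov₁
    have hR1 : ∀ (q : ι₁) (c : F n), c ∈ Block (D₁ q) (W₁ q) → ¬ vOff ≤ c := by
      intro q c hc
      have h2 : c ∈ ⋃ p, Block (D₁ p) (W₁ p) := Set.mem_iUnion.2 ⟨q, hc⟩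
      rw [hcov₁] at h2
      exact h2.2
    set SB : Finset (ℕ × ℕ) :=
      (Finset.Ico s₀ s₁ ×ˢ Finset.range (f s₀)).filter (fun p => p.2 < f p.1) with hSB
    have hSBmem : ∀ p : ℕ × ℕ, p ∈ SB ↔ s₀ ≤ p.1 ∧ p.1 < s₁ ∧ p.2 < f p.1 := by
      intro p
      rw [hSB, Finset.mem_filter, Finset.mem_product, Finset.mem_Ico, Finset.mem_range]
      constructor
      · tauto
      · intro h
        refine ⟨⟨⟨h.1, h.2.1⟩, ?_⟩, h.2.2⟩
        have := hanti s₀ p.1 (le_refl _) h.1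
        omega
    refine ⟨ι₁ ⊕ (Fin s₀ ⊕ ({p // p ∈ SB} ⊕ Fin tinf)), inferInstance,
      Sum.elim D₁ (Sum.elim (fun s => vec s.1 0)
        (Sum.elim (fun p => vec p.1.1 p.1.2) (fun t => vec s₁ t.1))),
      Sum.elim W₁ (Sum.elim (fun _ => Finset.univ.erase a)
        (Sum.elim (fun _ => (Finset.univ.erase a).erase b) (fun _ => Finset.univ.erase b))),
      ?_, ?_, ?_⟩
    · rintro (q | (s | (p | t)))
      · simp only [Sum.elim_inl]
        have := hcard₁ q
        simp only [Finset.card_univ, Fintype.card_fin] at this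
        omega
      · simp only [Sum.elim_inr, Sum.elim_inl]
        rw [Finset.card_erase_of_mem (Finset.mem_univ a)]
        simp only [Finset.card_univ, Fintype.card_fin]
        omega
      · simp only [Sum.elim_inr, Sum.elim_inl]
        rw [Finset.card_erase_of_mem
          (Finset.mem_erase.2 ⟨Ne.symm hab, Finset.mem_univ b⟩),
          Finset.card_erase_of_mem (Finset.mem_univ a)]
        simp only [Finset.card_univ, Fintype.card_fin]
        omega
      · simp only [Sum.elim_inr]
        rw [Finset.card_erase_of_mem (Finset.mem_univ b)]
        simp only [Finset.card_univ, Fintype.card_fin]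
        omega
    · -- pairwise disjointness
      have hreg2a : ∀ (s : Fin s₀) (c : F n), c ∈ Block (vec s.1 0) (Finset.univ.erase a) →
          (vOff ≤ c ∧ c a < s₀) := by
        intro s c hc
        rw [hBa] at hc
        exact ⟨(hvOffle c).2 hc.2.2, by have := s.2; omega⟩
      have hreg2b : ∀ (p : {p // p ∈ SB}) (c : F n),
          c ∈ Block (vec p.1.1 p.1.2) ((Finset.univ.erase a).erase b) →
          (vOff ≤ c ∧ c a = p.1.1 ∧ c b = p.1.2 ∧ s₀ ≤ c a ∧ c a < s₁ ∧ c b < f (c a)) := by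
        intro p c hc
        rw [hBab] at hc
        have hp := (hSBmem p.1).1 p.2
        refine ⟨(hvOffle c).2 hc.2.2, hc.1, hc.2.1, by omega, by omega, by
          rw [hc.1]; omega⟩
      have hreg2c : ∀ (t : Fin tinf) (c : F n),
          c ∈ Block (vec s₁ t.1) (Finset.univ.erase b) →
          (vOff ≤ c ∧ c b = t.1 ∧ s₁ ≤ c a ∧ c b < tinf) := by
        intro t c hc
        rw [hBb] at hc
        exact ⟨(hvOffle c).2 hc.2.2, hc.1, hc.2.1, by have := t.2; omega⟩
      rintro (q | (s | (p | t))) (q' | (s' | (p' | t'))) hne <;>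
        simp only [Sum.elim_inl, Sum.elim_inr] <;>
        rw [Set.disjoint_left] <;> intro c hc hc'
      · exact Set.disjoint_left.1 (hdisj₁ (fun h => hne (by rw [h]))) hc hc'
      · exact (hR1 q c hc) (hreg2a s' c hc').1
      · exact (hR1 q c hc) (hreg2b p' c hc').1
      · exact (hR1 q c hc) (hreg2c t' c hc').1
      · exact (hR1 q' c hc') (hreg2a s c hc).1
      · have h1 := hreg2a s c hc
        have h2 := hreg2a s' c hc'
        rw [hBa] at hc hc'
        apply hne
        have : s = s' := Fin.ext (by omega)
        rw [this]
      · have h1 := hreg2a s c hc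
        have h2 := hreg2b p' c hc'
        omega
      · have h1 := hreg2a s c hc
        have h2 := hreg2c t' c hc'
        omega
      · exact (hR1 q' c hc') (hreg2b p c hc).1
      · have h1 := hreg2b p c hc
        have h2 := hreg2a s' c hc'
        omega
      · have h1 := hreg2b p c hc
        have h2 := hreg2b p' c hc'
        apply hne
        have : p = p' := Subtype.ext (Prod.ext (by omega) (by omega))
        rw [this]
      · have h1 := hreg2b p c hc
        have h2 := hreg2c t' c hc'
        omega
      · exact (hR1 q' c hc') (hreg2c t c hc).1
      · have h1 := hreg2c t c hc
        have h2 := hreg2a s' c hc'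
        omega
      · have h1 := hreg2c t c hc
        have h2 := hreg2b p' c hc'
        omega
      · have h1 := hreg2c t c hc
        have h2 := hreg2c t' c hc'
        apply hne
        have : t = t' := Fin.ext (by omega)
        rw [this]
    · -- the union is the complement of ES I
      ext c
      simp only [Set.mem_iUnion, Set.mem_compl_iff]
      rw [hESchar c]
      constructor
      · rintro ⟨(q | (s | (p | t))), hc⟩ <;> simp only [Sum.elim_inl, Sum.elim_inr] at hc
        · intro hcon
          exact (hR1 q c hc) ((hvOffle c).2 hcon.1)
        · rw [hBa] at hc
          rintro ⟨hoffc, hPc⟩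
          have := (hfs _ _ hPc).1
          have := s.2
          omega
        · rw [hBab] at hc
          rintro ⟨hoffc, hPc⟩
          have h1 := (hfs _ _ hPc).2
          have hp := (hSBmem p.1).1 p.2
          rw [hc.1] at h1
          omega
        · rw [hBb] at hc
          rintro ⟨hoffc, hPc⟩
          have h1 := htinfle _ _ hPc
          have := t.2
          omega
      · intro hcon
        by_cases hoffc : ∀ i, i ≠ a → i ≠ b → v i ≤ c i
        · have hPc : (c a, c b) ∉ P := fun h => hcon ⟨hoffc, h⟩
          by_cases hca : c a < s₀
          · refine ⟨Sum.inr (Sum.inl ⟨c a, hca⟩), ?_⟩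
            simp only [Sum.elim_inr, Sum.elim_inl]
            rw [hBa]
            exact ⟨rfl, Nat.zero_le _, hoffc⟩
          · push_neg at hca
            have hcb : c b < f (c a) := by
              by_contra hcb
              push_neg at hcb
              exact hPc (hmem _ _ hca hcb)
            by_cases hca1 : c a < s₁
            · refine ⟨Sum.inr (Sum.inr (Sum.inl ⟨(c a, c b),
                (hSBmem _).2 ⟨hca, hca1, hcb⟩⟩)), ?_⟩
              simp only [Sum.elim_inr, Sum.elim_inl]
              rw [hBab]
              exact ⟨rfl, rfl, hoffc⟩
            · push_neg at hca1
              have hcbt : c b < tinf := by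
                rw [← hfstab (c a) hca1]
                exact hcb
              refine ⟨Sum.inr (Sum.inr (Sum.inr ⟨c b, hcbt⟩)), ?_⟩
              simp only [Sum.elim_inr]
              rw [hBb]
              exact ⟨rfl, hca1, hoffc⟩
        · push_neg at hoffc
          have hnv : ¬ vOff ≤ c := by
            rw [hvOffle]
            push_neg
            exact hoffc
          have h2 : c ∈ ⋃ p, Block (D₁ p) (W₁ p) := by
            rw [hcov₁]
            exact ⟨trivial, hnv⟩
          obtain ⟨q, hq⟩ := Set.mem_iUnion.1 h2
          exact ⟨Sum.inl q, hq⟩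

end SAux
/-- For a non-principal monomial ideal `I ⊆ K[x_1,…,x_n]` with `c(I) = 2` or
`g(I) = 2`, one has `sdepth(I) = n - 1` and `sdepth(S/I) = n - 2`. -/
theorem stmt7 {K : Type*} [Field K] {n : ℕ} (I : Ideal (MvPolynomial (Fin n) K))
    (hI : IsMonomialIdeal I) (hnp : ¬ I.IsPrincipal)
    (h : numSupp I = 2 ∨ numGens I = 2) :
    sdepthIdeal I = n - 1 ∧ sdepthQuot I = n - 2 := by
  rcases h with hc2 | hg2
  · exact SAux.c2_case hI hnp hc2
  · exact SAux.g2_case hI hnp hg2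
end
end
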